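/- arXiv:0711.4343 — 10 statements merged into one kernel-verified Lean document; each statement's English description precedes it below -/
import Mathlib

section
/- The family of perfect dominating sets in the integer lattice graph of Z^2 whose induced components are parallel horizontal edges (1-cubes) is uncountable; in particular it has cardinality at least that of the set of functions from Z to {0,1}. -/
/-- Adjacency in the integer lattice graph of ℤ²: Euclidean (equivalently L¹) distance 1. -/
def latAdj (u v : ℤ × ℤ) : Prop :=
  (u.1 - v.1).natAbs + (u.2 - v.2).natAbs = 1

/-- `S` is a perfect dominating set: every vertex outside `S` is adjacent to exactly one
vertex of `S`. -/
def IsPDS (S : Set (ℤ × ℤ)) : Prop :=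
  ∀ v : ℤ × ℤ, v ∉ S → ∃! u : ℤ × ℤ, u ∈ S ∧ latAdj u v

/-- The induced components of `S` are (parallel) horizontal edges: every vertex of `S` is
adjacent within `S` to exactly one other vertex, and any neighbor in `S` is horizontal
(same second coordinate). -/
def HorizEdgeComponents (S : Set (ℤ × ℤ)) : Prop :=
  ∀ v ∈ S, (∃! u : ℤ × ℤ, u ∈ S ∧ latAdj u v) ∧
    ∀ u ∈ S, latAdj u v → u.2 = v.2

/-- Our family of sets: for each sequence `a : ℤ → Bool`, dominoes (horizontal edges)
with left end on the diagonal `x - y = 4k` placed on rows of parity chosen by `a k`. -/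
def diagPDS (a : ℤ → Bool) : Set (ℤ × ℤ) :=
  {p | ((p.1 - p.2) % 4 = 0 ∨ (p.1 - p.2) % 4 = 1) ∧
    (a ((p.1 - p.2) / 4) = true ↔ p.2 % 2 = 0)}

lemma mem_diagPDS {a : ℤ → Bool} {x y : ℤ} :
    (x, y) ∈ diagPDS a ↔ (((x - y) % 4 = 0 ∨ (x - y) % 4 = 1) ∧
      (a ((x - y) / 4) = true ↔ y % 2 = 0)) := Iff.rfl

lemma adj_iff (u : ℤ × ℤ) (x y : ℤ) :
    latAdj u (x, y) ↔ u = (x+1, y) ∨ u = (x-1, y) ∨ u = (x, y+1) ∨ u = (x, y-1) := by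
  obtain ⟨a, b⟩ := u
  simp only [latAdj, Prod.mk.injEq]
  omega

lemma latAdj_of (u v : ℤ × ℤ) (h : (u.1 - v.1).natAbs + (u.2 - v.2).natAbs = 1) :
    latAdj u v := h

/-- The family of PDSs in the integer lattice graph whose induced components are parallel
horizontal edges has cardinality at least that of the doubly infinite binary sequences
(hence is uncountable). -/
theorem uncountably_many_horizontal_PDS :
    ∃ f : (ℤ → Bool) → Set (ℤ × ℤ), Function.Injective f ∧
      ∀ a : ℤ → Bool, IsPDS (f a) ∧ HorizEdgeComponents (f a) := by
  refine ⟨diagPDS, ?_, ?_⟩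
  · -- injectivity
    intro a a' h
    funext k
    have h0 : ((4*k, (0:ℤ)) ∈ diagPDS a) ↔ ((4*k, (0:ℤ)) ∈ diagPDS a') := by rw [h]
    rw [mem_diagPDS, mem_diagPDS] at h0
    have e1 : (4*k - 0) % 4 = 0 := by omega
    have e2 : (4*k - 0) / 4 = k := by omega
    rw [e1, e2] at h0
    have e3 : (0:ℤ) % 2 = 0 := by omega
    simp only [e3] at h0
    cases hak : a k <;> cases hak' : a' k <;> simp_all
  intro a
  constructor
  · -- IsPDS
    rintro ⟨x, y⟩ hv
    have hr : (x - y) % 4 = 0 ∨ (x - y) % 4 = 1 ∨ (x - y) % 4 = 2 ∨ (x - y) % 4 = 3 := by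
      omega
    rcases hr with h0 | h1 | h2 | h3
    · -- r = 0 : unique neighbor is (x, y-1)
      have hak : ¬(a ((x - y) / 4) = true ↔ y % 2 = 0) := fun hiff => hv ⟨Or.inl h0, hiff⟩
      refine ⟨(x, y-1), ⟨⟨by omega, ?_⟩, by simp only [latAdj]; omega⟩, ?_⟩
      · have e : (x - (y-1)) / 4 = (x - y) / 4 := by omega
        rw [e]
        cases hb : a ((x - y) / 4) <;> simp_all <;> omega
      · rintro u ⟨hu, hadj⟩
        rw [adj_iff] at hadj
        rcases hadj with rfl | rfl | rfl | rfl
        · exfalso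
          rw [mem_diagPDS] at hu
          have e : (x + 1 - y) / 4 = (x - y) / 4 := by omega
          rw [e] at hu
          exact hak hu.2
        · exfalso; rw [mem_diagPDS] at hu; omega
        · exfalso; rw [mem_diagPDS] at hu; omega
        · rfl
    · -- r = 1 : unique neighbor is (x, y+1)
      have hak : ¬(a ((x - y) / 4) = true ↔ y % 2 = 0) := fun hiff => hv ⟨Or.inr h1, hiff⟩
      refine ⟨(x, y+1), ⟨⟨by omega, ?_⟩, by simp only [latAdj]; omega⟩, ?_⟩
      · have e : (x - (y+1)) / 4 = (x - y) / 4 := by omega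
        rw [e]
        cases hb : a ((x - y) / 4) <;> simp_all <;> omega
      · rintro u ⟨hu, hadj⟩
        rw [adj_iff] at hadj
        rcases hadj with rfl | rfl | rfl | rfl
        · exfalso; rw [mem_diagPDS] at hu; omega
        · exfalso
          rw [mem_diagPDS] at hu
          have e : (x - 1 - y) / 4 = (x - y) / 4 := by omega
          rw [e] at hu
          exact hak hu.2
        · rfl
        · exfalso; rw [mem_diagPDS] at hu; omega
    · -- r = 2 : unique neighbor is (x-1, y) or (x, y+1) depending on a k
      by_cases hiff : a ((x - y) / 4) = true ↔ y % 2 = 0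
      · refine ⟨(x-1, y), ⟨⟨by omega, ?_⟩, by simp only [latAdj]; omega⟩, ?_⟩
        · have e : (x - 1 - y) / 4 = (x - y) / 4 := by omega
          rw [e]; exact hiff
        · rintro u ⟨hu, hadj⟩
          rw [adj_iff] at hadj
          rcases hadj with rfl | rfl | rfl | rfl
          · exfalso; rw [mem_diagPDS] at hu; omega
          · rfl
          · exfalso
            rw [mem_diagPDS] at hu
            have e : (x - (y+1)) / 4 = (x - y) / 4 := by omega
            rw [e] at hu
            cases hb : a ((x - y) / 4) <;> simp_all <;> omega
          · exfalso; rw [mem_diagPDS] at hu; omega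
      · refine ⟨(x, y+1), ⟨⟨by omega, ?_⟩, by simp only [latAdj]; omega⟩, ?_⟩
        · have e : (x - (y+1)) / 4 = (x - y) / 4 := by omega
          rw [e]
          cases hb : a ((x - y) / 4) <;> simp_all <;> omega
        · rintro u ⟨hu, hadj⟩
          rw [adj_iff] at hadj
          rcases hadj with rfl | rfl | rfl | rfl
          · exfalso; rw [mem_diagPDS] at hu; omega
          · exfalso
            rw [mem_diagPDS] at hu
            have e : (x - 1 - y) / 4 = (x - y) / 4 := by omega
            rw [e] at hu
            exact hiff hu.2
          · rfl
          · exfalso; rw [mem_diagPDS] at hu; omega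
    · -- r = 3 : unique neighbor is (x+1, y) or (x, y-1) depending on a (k+1)
      by_cases hiff : a ((x - y) / 4 + 1) = true ↔ y % 2 = 0
      · refine ⟨(x+1, y), ⟨⟨by omega, ?_⟩, by simp only [latAdj]; omega⟩, ?_⟩
        · have e : (x + 1 - y) / 4 = (x - y) / 4 + 1 := by omega
          rw [e]; exact hiff
        · rintro u ⟨hu, hadj⟩
          rw [adj_iff] at hadj
          rcases hadj with rfl | rfl | rfl | rfl
          · rfl
          · exfalso; rw [mem_diagPDS] at hu; omega
          · exfalso; rw [mem_diagPDS] at hu; omega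
          · exfalso
            rw [mem_diagPDS] at hu
            have e : (x - (y-1)) / 4 = (x - y) / 4 + 1 := by omega
            rw [e] at hu
            cases hb : a ((x - y) / 4 + 1) <;> simp_all <;> omega
      · refine ⟨(x, y-1), ⟨⟨by omega, ?_⟩, by simp only [latAdj]; omega⟩, ?_⟩
        · have e : (x - (y-1)) / 4 = (x - y) / 4 + 1 := by omega
          rw [e]
          cases hb : a ((x - y) / 4 + 1) <;> simp_all <;> omega
        · rintro u ⟨hu, hadj⟩
          rw [adj_iff] at hadj
          rcases hadj with rfl | rfl | rfl | rfl
          · exfalso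
            rw [mem_diagPDS] at hu
            have e : (x + 1 - y) / 4 = (x - y) / 4 + 1 := by omega
            rw [e] at hu
            exact hiff hu.2
          · exfalso; rw [mem_diagPDS] at hu; omega
          · exfalso; rw [mem_diagPDS] at hu; omega
          · rfl
  · -- HorizEdgeComponents
    rintro ⟨x, y⟩ hv
    rw [mem_diagPDS] at hv
    obtain ⟨hr, hiff⟩ := hv
    rcases hr with h0 | h1
    · -- r = 0 : partner is (x+1, y)
      constructor
      · refine ⟨(x+1, y), ⟨⟨by omega, ?_⟩, by simp only [latAdj]; omega⟩, ?_⟩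
        · have e : (x + 1 - y) / 4 = (x - y) / 4 := by omega
          rw [e]; exact hiff
        · rintro u ⟨hu, hadj⟩
          rw [adj_iff] at hadj
          rcases hadj with rfl | rfl | rfl | rfl
          · rfl
          · exfalso; rw [mem_diagPDS] at hu; omega
          · exfalso; rw [mem_diagPDS] at hu; omega
          · exfalso
            rw [mem_diagPDS] at hu
            have e : (x - (y-1)) / 4 = (x - y) / 4 := by omega
            rw [e] at hu
            cases hb : a ((x - y) / 4) <;> simp_all <;> omega
      · rintro u hu hadj
        rw [adj_iff] at hadj
        rcases hadj with rfl | rfl | rfl | rfl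
        · rfl
        · rfl
        · exfalso; rw [mem_diagPDS] at hu; omega
        · exfalso
          rw [mem_diagPDS] at hu
          have e : (x - (y-1)) / 4 = (x - y) / 4 := by omega
          rw [e] at hu
          cases hb : a ((x - y) / 4) <;> simp_all <;> omega
    · -- r = 1 : partner is (x-1, y)
      constructor
      · refine ⟨(x-1, y), ⟨⟨by omega, ?_⟩, by simp only [latAdj]; omega⟩, ?_⟩
        · have e : (x - 1 - y) / 4 = (x - y) / 4 := by omega
          rw [e]; exact hiff
        · rintro u ⟨hu, hadj⟩
          rw [adj_iff] at hadj
          rcases hadj with rfl | rfl | rfl | rfl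
          · exfalso; rw [mem_diagPDS] at hu; omega
          · rfl
          · exfalso
            rw [mem_diagPDS] at hu
            have e : (x - (y+1)) / 4 = (x - y) / 4 := by omega
            rw [e] at hu
            cases hb : a ((x - y) / 4) <;> simp_all <;> omega
          · exfalso; rw [mem_diagPDS] at hu; omega
      · rintro u hu hadj
        rw [adj_iff] at hadj
        rcases hadj with rfl | rfl | rfl | rfl
        · rfl
        · rfl
        · exfalso
          rw [mem_diagPDS] at hu
          have e : (x - (y+1)) / 4 = (x - y) / 4 := by omega
          rw [e] at hu
          cases hb : a ((x - y) / 4) <;> simp_all <;> omega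
        · exfalso; rw [mem_diagPDS] at hu; omega
end

section
/- For every doubly infinite binary sequence a : Z → {0,1}, the set S(a) = ⋃_{j∈Z} ⋃_{n∈Z} { A_n + (2j,2j), B_n + (2j,2j) }, where A_0 = (0,0), A_n = Σ_{i=1}^n (4 + a_i, a_i) for n > 0, A_{-n} = -Σ_{i=1}^{n} (4 + a_{-i}, a_{-i}) for n > 0, and B_n = A_n + (1,0), is a perfect dominating set in the integer lattice graph of Z^2 whose induced components are horizontal edges. -/
/-- The point `A n` determined by the binary sequence `a`:
`A 0 = (0,0)`, `A n = ∑_{i=1}^n (4 + a i, a i)` for `n > 0`, and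
`A (-n) = -∑_{i=1}^n (4 + a (-i), a (-i))` for `n > 0`. -/
noncomputable def A (a : ℤ → ℤ) (n : ℤ) : ℤ × ℤ :=
  if 0 ≤ n then
    (∑ i ∈ Finset.Icc (1 : ℤ) n, (4 + a i), ∑ i ∈ Finset.Icc (1 : ℤ) n, a i)
  else
    (-(∑ i ∈ Finset.Icc (1 : ℤ) (-n), (4 + a (-i))),
      -(∑ i ∈ Finset.Icc (1 : ℤ) (-n), a (-i)))

/-- The set `Ψ a = ⋃_{j,n} { A n + (2j,2j), B n + (2j,2j) }` where `B n = A n + (1,0)`. -/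
def Psi (a : ℤ → ℤ) : Set (ℤ × ℤ) :=
  {p | ∃ j n : ℤ, p = A a n + (2 * j, 2 * j) ∨ p = A a n + (1, 0) + (2 * j, 2 * j)}

lemma A_fst (a : ℤ → ℤ) (n : ℤ) : (A a n).1 = 4 * n + (A a n).2 := by
  unfold A
  split
  case isTrue h =>
    simp only [Finset.sum_add_distrib, Finset.sum_const, Int.card_Icc, nsmul_eq_mul]
    have : ((n + 1 - 1).toNat : ℤ) = n := by omega
    rw [this]; ring
  case isFalse h =>
    simp only [Finset.sum_add_distrib, Finset.sum_const, Int.card_Icc, nsmul_eq_mul]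
    have : ((-n + 1 - 1).toNat : ℤ) = -n := by omega
    rw [this]; ring

lemma mem_psi (a : ℤ → ℤ) (x y : ℤ) :
    (x, y) ∈ Psi a ↔ ∃ n, (x - y = 4 * n ∨ x - y = 4 * n + 1) ∧ 2 ∣ y - (A a n).2 := by
  constructor
  · rintro ⟨j, n, h | h⟩ <;>
      rw [Prod.ext_iff] at h <;>
      simp only [Prod.fst_add, Prod.snd_add] at h <;>
      exact ⟨n, by have := A_fst a n; omega, by have := A_fst a n; omega⟩
  · rintro ⟨n, hd, hpar⟩
    obtain ⟨j, hj⟩ := hpar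
    have hA := A_fst a n
    refine ⟨j, n, ?_⟩
    rcases hd with hd | hd
    · left; rw [Prod.ext_iff]; simp only [Prod.fst_add, Prod.snd_add]; omega
    · right; rw [Prod.ext_iff]; simp only [Prod.fst_add, Prod.snd_add]; omega

set_option maxHeartbeats 1000000 in
lemma unique_nbr (a : ℤ → ℤ) (x y : ℤ) :
    ∃! u : ℤ × ℤ, u ∈ Psi a ∧ latAdj u (x, y) := by
  obtain ⟨n, r, hr0, hr3, hd⟩ : ∃ n r : ℤ, 0 ≤ r ∧ r < 4 ∧ x - y = 4 * n + r :=
    ⟨(x - y) / 4, (x - y) % 4, by omega, by omega, by omega⟩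
  have step : ∀ px py n' : ℤ,
      ((x - y = 4 * n ∧ ((px = x + 1 ∧ py = y) ∨ (px = x ∧ py = y - 1))) ∨
       (x - y = 4 * n + 1 ∧ ((px = x - 1 ∧ py = y) ∨ (px = x ∧ py = y + 1))) ∨
       (x - y = 4 * n + 2 ∧ ((px = x - 1 ∧ py = y) ∨ (px = x ∧ py = y + 1))) ∨
       (x - y = 4 * n + 3 ∧ ((px = x + 1 ∧ py = y) ∨ (px = x ∧ py = y - 1)))) →
      (px - py = 4 * n' ∨ px - py = 4 * n' + 1) →
      (2 ∣ py - (A a n').2) →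
      (∀ u1 u2 m : ℤ, (u1 - u2 = 4 * m ∨ u1 - u2 = 4 * m + 1) →
        (2 ∣ u2 - (A a m).2) →
        (u1 - x).natAbs + (u2 - y).natAbs = 1 → (u1, u2) = (px, py)) →
      ∃! u : ℤ × ℤ, u ∈ Psi a ∧ latAdj u (x, y) := by
    intro px py n' hcase h1 h2 huniq
    refine ⟨(px, py), ⟨(mem_psi a px py).2 ⟨n', h1, h2⟩, ?_⟩, ?_⟩
    · show (px - x).natAbs + (py - y).natAbs = 1
      rcases hcase with ⟨_, h⟩ | ⟨_, h⟩ | ⟨_, h⟩ | ⟨_, h⟩ <;> omega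
    · rintro ⟨u1, u2⟩ ⟨hu, hadj⟩
      rw [mem_psi] at hu
      obtain ⟨m, hm, hpar⟩ := hu
      exact huniq u1 u2 m hm hpar hadj
  rcases (show r = 0 ∨ r = 1 ∨ r = 2 ∨ r = 3 by omega) with rfl | rfl | rfl | rfl
  · rcases Int.even_or_odd (y - (A a (n)).2) with ⟨k, hk⟩ | ⟨k, hk⟩
    · refine step (x + 1) (y) (n) (by omega) (by omega) (by omega) ?_
      clear step
      intro u1 u2 m hm hpar hadj
      rcases (show (u1 = x + 1 ∧ u2 = y) ∨ (u1 = x - 1 ∧ u2 = y) ∨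
          (u1 = x ∧ u2 = y + 1) ∨ (u1 = x ∧ u2 = y - 1) by omega) with
        ⟨rfl, rfl⟩ | ⟨rfl, rfl⟩ | ⟨rfl, rfl⟩ | ⟨rfl, rfl⟩
      · rfl
      · exfalso; omega
      · exfalso; omega
      · exfalso; obtain rfl : m = n := by omega
        omega
    · refine step (x) (y - 1) (n) (by omega) (by omega) (by omega) ?_
      clear step
      intro u1 u2 m hm hpar hadj
      rcases (show (u1 = x + 1 ∧ u2 = y) ∨ (u1 = x - 1 ∧ u2 = y) ∨
          (u1 = x ∧ u2 = y + 1) ∨ (u1 = x ∧ u2 = y - 1) by omega) with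
        ⟨rfl, rfl⟩ | ⟨rfl, rfl⟩ | ⟨rfl, rfl⟩ | ⟨rfl, rfl⟩
      · exfalso; obtain rfl : m = n := by omega
        omega
      · exfalso; omega
      · exfalso; omega
      · rfl
  · rcases Int.even_or_odd (y - (A a (n)).2) with ⟨k, hk⟩ | ⟨k, hk⟩
    · refine step (x - 1) (y) (n) (by omega) (by omega) (by omega) ?_
      clear step
      intro u1 u2 m hm hpar hadj
      rcases (show (u1 = x + 1 ∧ u2 = y) ∨ (u1 = x - 1 ∧ u2 = y) ∨
          (u1 = x ∧ u2 = y + 1) ∨ (u1 = x ∧ u2 = y - 1) by omega) with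
        ⟨rfl, rfl⟩ | ⟨rfl, rfl⟩ | ⟨rfl, rfl⟩ | ⟨rfl, rfl⟩
      · exfalso; omega
      · rfl
      · exfalso; obtain rfl : m = n := by omega
        omega
      · exfalso; omega
    · refine step (x) (y + 1) (n) (by omega) (by omega) (by omega) ?_
      clear step
      intro u1 u2 m hm hpar hadj
      rcases (show (u1 = x + 1 ∧ u2 = y) ∨ (u1 = x - 1 ∧ u2 = y) ∨
          (u1 = x ∧ u2 = y + 1) ∨ (u1 = x ∧ u2 = y - 1) by omega) with
        ⟨rfl, rfl⟩ | ⟨rfl, rfl⟩ | ⟨rfl, rfl⟩ | ⟨rfl, rfl⟩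
      · exfalso; omega
      · exfalso; obtain rfl : m = n := by omega
        omega
      · rfl
      · exfalso; omega
  · rcases Int.even_or_odd (y - (A a (n)).2) with ⟨k, hk⟩ | ⟨k, hk⟩
    · refine step (x - 1) (y) (n) (by omega) (by omega) (by omega) ?_
      clear step
      intro u1 u2 m hm hpar hadj
      rcases (show (u1 = x + 1 ∧ u2 = y) ∨ (u1 = x - 1 ∧ u2 = y) ∨
          (u1 = x ∧ u2 = y + 1) ∨ (u1 = x ∧ u2 = y - 1) by omega) with
        ⟨rfl, rfl⟩ | ⟨rfl, rfl⟩ | ⟨rfl, rfl⟩ | ⟨rfl, rfl⟩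
      · exfalso; omega
      · rfl
      · exfalso; obtain rfl : m = n := by omega
        omega
      · exfalso; omega
    · refine step (x) (y + 1) (n) (by omega) (by omega) (by omega) ?_
      clear step
      intro u1 u2 m hm hpar hadj
      rcases (show (u1 = x + 1 ∧ u2 = y) ∨ (u1 = x - 1 ∧ u2 = y) ∨
          (u1 = x ∧ u2 = y + 1) ∨ (u1 = x ∧ u2 = y - 1) by omega) with
        ⟨rfl, rfl⟩ | ⟨rfl, rfl⟩ | ⟨rfl, rfl⟩ | ⟨rfl, rfl⟩
      · exfalso; omega
      · exfalso; obtain rfl : m = n := by omega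
        omega
      · rfl
      · exfalso; omega
  · rcases Int.even_or_odd (y - (A a (n + 1)).2) with ⟨k, hk⟩ | ⟨k, hk⟩
    · refine step (x + 1) (y) (n + 1) (by omega) (by omega) (by omega) ?_
      clear step
      intro u1 u2 m hm hpar hadj
      rcases (show (u1 = x + 1 ∧ u2 = y) ∨ (u1 = x - 1 ∧ u2 = y) ∨
          (u1 = x ∧ u2 = y + 1) ∨ (u1 = x ∧ u2 = y - 1) by omega) with
        ⟨rfl, rfl⟩ | ⟨rfl, rfl⟩ | ⟨rfl, rfl⟩ | ⟨rfl, rfl⟩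
      · rfl
      · exfalso; omega
      · exfalso; omega
      · exfalso; obtain rfl : m = n + 1 := by omega
        omega
    · refine step (x) (y - 1) (n + 1) (by omega) (by omega) (by omega) ?_
      clear step
      intro u1 u2 m hm hpar hadj
      rcases (show (u1 = x + 1 ∧ u2 = y) ∨ (u1 = x - 1 ∧ u2 = y) ∨
          (u1 = x ∧ u2 = y + 1) ∨ (u1 = x ∧ u2 = y - 1) by omega) with
        ⟨rfl, rfl⟩ | ⟨rfl, rfl⟩ | ⟨rfl, rfl⟩ | ⟨rfl, rfl⟩
      · exfalso; obtain rfl : m = n + 1 := by omega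
        omega
      · exfalso; omega
      · exfalso; omega
      · rfl

lemma horiz (a : ℤ → ℤ) (x y u1 u2 : ℤ) (hv : (x, y) ∈ Psi a) (hu : (u1, u2) ∈ Psi a)
    (hadj : latAdj (u1, u2) (x, y)) : u2 = y := by
  rw [mem_psi] at hv hu
  obtain ⟨n, hn, hpn⟩ := hv
  obtain ⟨m, hm, hpm⟩ := hu
  have hadj' : (u1 - x).natAbs + (u2 - y).natAbs = 1 := hadj
  by_contra hne
  obtain rfl : m = n := by omega
  omega

/-- For every doubly infinite binary sequence `a`, the set `Ψ a` is a perfect dominating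
set in the integer lattice graph whose induced components are horizontal edges. -/
theorem Psi_isPDS_horizontal (a : ℤ → ℤ) (ha : ∀ i, a i = 0 ∨ a i = 1) :
    IsPDS (Psi a) ∧ HorizEdgeComponents (Psi a) := by
  constructor
  · intro v _
    obtain ⟨x, y⟩ := v
    exact unique_nbr a x y
  · intro v hv
    obtain ⟨x, y⟩ := v
    refine ⟨unique_nbr a x y, ?_⟩
    rintro ⟨u1, u2⟩ hu hadj
    exact horiz a x y u1 u2 hv hu hadj
end

section
/- Z^2 can be partitioned into exactly 5 translates of the sublattice generated by (1,2) and (2,-1), each of which is a 1-perfect code in the integer lattice graph. -/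
/-- The sublattice of ℤ² generated by the vectors (1,2) and (2,-1). -/
def S0 : Set (ℤ × ℤ) :=
  {p | ∃ m n : ℤ, p = (m * 1 + n * 2, m * 2 + n * (-1))}

/-- A 1-perfect code in the integer lattice graph of ℤ²: closed radius-1 L¹ balls
centered at its points partition ℤ². -/
def IsOnePerfectCode (S : Set (ℤ × ℤ)) : Prop :=
  ∀ v : ℤ × ℤ, ∃! u : ℤ × ℤ,
    u ∈ S ∧ (v.1 - u.1).natAbs + (v.2 - u.2).natAbs ≤ 1

lemma memS0 (p : ℤ × ℤ) : p ∈ S0 ↔ (5:ℤ) ∣ p.1 + 2 * p.2 := by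
  constructor
  · rintro ⟨m, n, rfl⟩
    exact ⟨m, by ring⟩
  · rintro ⟨k, hk⟩
    exact ⟨k, 2 * k - p.2, by ext <;> simp <;> omega⟩

lemma mem_trans (a p : ℤ × ℤ) :
    p ∈ (fun q => a + q) '' S0 ↔ (5:ℤ) ∣ (p.1 - a.1) + 2 * (p.2 - a.2) := by
  constructor
  · rintro ⟨q, hq, rfl⟩
    rw [memS0] at hq
    simp only [Prod.fst_add, Prod.snd_add]
    omega
  · intro h
    refine ⟨p - a, (memS0 _).2 ?_, by simp⟩
    simp only [Prod.fst_sub, Prod.snd_sub]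
    omega

set_option maxHeartbeats 1000000 in
lemma code_unique (c : ℤ) (v : ℤ × ℤ) :
    ∃! u : ℤ × ℤ, ((5:ℤ) ∣ (u.1 - c) + 2 * u.2) ∧
      (v.1 - u.1).natAbs + (v.2 - u.2).natAbs ≤ 1 := by
  have h : (5:ℤ) ∣ (v.1 - c) + 2 * v.2 ∨ (5:ℤ) ∣ (v.1 - c) + 2 * v.2 - 1 ∨
      (5:ℤ) ∣ (v.1 - c) + 2 * v.2 - 2 ∨ (5:ℤ) ∣ (v.1 - c) + 2 * v.2 - 3 ∨
      (5:ℤ) ∣ (v.1 - c) + 2 * v.2 - 4 := by omega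
  rcases h with h | h | h | h | h
  · refine ⟨v, ⟨h, by omega⟩, ?_⟩
    rintro ⟨a, b⟩ ⟨h1, h2⟩
    dsimp only at h1 h2
    have hc : (v.1 - a = 0 ∧ v.2 - b = 0) ∨ (v.1 - a = 1 ∧ v.2 - b = 0) ∨
        (v.1 - a = -1 ∧ v.2 - b = 0) ∨ (v.1 - a = 0 ∧ v.2 - b = 1) ∨
        (v.1 - a = 0 ∧ v.2 - b = -1) := by omega
    rw [Prod.ext_iff]; dsimp only
    rcases hc with ⟨e1,e2⟩|⟨e1,e2⟩|⟨e1,e2⟩|⟨e1,e2⟩|⟨e1,e2⟩ <;> omega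
  · refine ⟨(v.1 - 1, v.2), ⟨by dsimp only; omega, by dsimp only; omega⟩, ?_⟩
    rintro ⟨a, b⟩ ⟨h1, h2⟩
    dsimp only at h1 h2
    have hc : (v.1 - a = 0 ∧ v.2 - b = 0) ∨ (v.1 - a = 1 ∧ v.2 - b = 0) ∨
        (v.1 - a = -1 ∧ v.2 - b = 0) ∨ (v.1 - a = 0 ∧ v.2 - b = 1) ∨
        (v.1 - a = 0 ∧ v.2 - b = -1) := by omega
    rw [Prod.ext_iff]; dsimp only
    rcases hc with ⟨e1,e2⟩|⟨e1,e2⟩|⟨e1,e2⟩|⟨e1,e2⟩|⟨e1,e2⟩ <;> omega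
  · refine ⟨(v.1, v.2 - 1), ⟨by dsimp only; omega, by dsimp only; omega⟩, ?_⟩
    rintro ⟨a, b⟩ ⟨h1, h2⟩
    dsimp only at h1 h2
    have hc : (v.1 - a = 0 ∧ v.2 - b = 0) ∨ (v.1 - a = 1 ∧ v.2 - b = 0) ∨
        (v.1 - a = -1 ∧ v.2 - b = 0) ∨ (v.1 - a = 0 ∧ v.2 - b = 1) ∨
        (v.1 - a = 0 ∧ v.2 - b = -1) := by omega
    rw [Prod.ext_iff]; dsimp only
    rcases hc with ⟨e1,e2⟩|⟨e1,e2⟩|⟨e1,e2⟩|⟨e1,e2⟩|⟨e1,e2⟩ <;> omega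
  · refine ⟨(v.1, v.2 + 1), ⟨by dsimp only; omega, by dsimp only; omega⟩, ?_⟩
    rintro ⟨a, b⟩ ⟨h1, h2⟩
    dsimp only at h1 h2
    have hc : (v.1 - a = 0 ∧ v.2 - b = 0) ∨ (v.1 - a = 1 ∧ v.2 - b = 0) ∨
        (v.1 - a = -1 ∧ v.2 - b = 0) ∨ (v.1 - a = 0 ∧ v.2 - b = 1) ∨
        (v.1 - a = 0 ∧ v.2 - b = -1) := by omega
    rw [Prod.ext_iff]; dsimp only
    rcases hc with ⟨e1,e2⟩|⟨e1,e2⟩|⟨e1,e2⟩|⟨e1,e2⟩|⟨e1,e2⟩ <;> omega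
  · refine ⟨(v.1 + 1, v.2), ⟨by dsimp only; omega, by dsimp only; omega⟩, ?_⟩
    rintro ⟨a, b⟩ ⟨h1, h2⟩
    dsimp only at h1 h2
    have hc : (v.1 - a = 0 ∧ v.2 - b = 0) ∨ (v.1 - a = 1 ∧ v.2 - b = 0) ∨
        (v.1 - a = -1 ∧ v.2 - b = 0) ∨ (v.1 - a = 0 ∧ v.2 - b = 1) ∨
        (v.1 - a = 0 ∧ v.2 - b = -1) := by omega
    rw [Prod.ext_iff]; dsimp only
    rcases hc with ⟨e1,e2⟩|⟨e1,e2⟩|⟨e1,e2⟩|⟨e1,e2⟩|⟨e1,e2⟩ <;> omega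

/-- ℤ² can be partitioned into exactly 5 translates of the sublattice `S0`, each of which
is a 1-perfect code in the integer lattice graph. -/
theorem partition_into_five_codes :
    ∃ t : Fin 5 → ℤ × ℤ,
      (∀ p : ℤ × ℤ, ∃! i : Fin 5, p ∈ (fun q => t i + q) '' S0) ∧
      ∀ i : Fin 5, IsOnePerfectCode ((fun q => t i + q) '' S0) := by
  refine ⟨fun i => ((i : ℤ), 0), ?_, ?_⟩
  · intro p
    refine ⟨⟨((p.1 + 2 * p.2) % 5).toNat, by omega⟩, ?_, ?_⟩
    · simp only [mem_trans]
      omega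
    · intro j hj
      rw [mem_trans] at hj
      apply Fin.ext
      have hlt := j.isLt
      simp only [Fin.val] at *
      omega
  · intro i v
    have h := code_unique (i : ℤ) v
    obtain ⟨u, ⟨hu1, hu2⟩, huniq⟩ := h
    refine ⟨u, ⟨?_, hu2⟩, ?_⟩
    · rw [mem_trans]; simpa using hu1
    · rintro w ⟨hw1, hw2⟩
      apply huniq
      rw [mem_trans] at hw1
      exact ⟨by simpa using hw1, hw2⟩
end

section
/- For every d ≥ 1, the sublattice S of Z^2 generated by (d, d+1) and (d+1, -d) is a d-perfect code in the integer lattice graph of Z^2: every vertex of Z^2 is within L^1 distance d of exactly one element of S. -/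
/-- The sublattice of ℤ² generated by the vectors (d, d+1) and (d+1, -d). -/
def Sd (d : ℕ) : Set (ℤ × ℤ) :=
  {p | ∃ m n : ℤ, p = (m * d + n * (d + 1), m * (d + 1) - n * d)}

/-- Balanced residue: every integer is within M of a multiple of 2M+1. -/
lemma balanced (M x : ℤ) (hM : 0 ≤ M) :
    ∃ t q : ℤ, -M ≤ t ∧ t ≤ M ∧ x - t = (2*M+1)*q := by
  have h0 := Int.emod_nonneg (x+M) (by omega : (2*M+1) ≠ 0)
  have h1 := Int.emod_lt_of_pos (x+M) (by omega : 0 < 2*M+1)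
  have h2 := Int.emod_add_mul_ediv (x+M) (2*M+1)
  exact ⟨(x+M) % (2*M+1) - M, (x+M)/(2*M+1), by linarith, by linarith, by linarith⟩

lemma exists_code (D : ℤ) (hD : 1 ≤ D) (v : ℤ × ℤ) :
    ∃ u : ℤ × ℤ, (∃ m n : ℤ, u = (m*D + n*(D+1), m*(D+1) - n*D)) ∧
      |v.1 - u.1| + |v.2 - u.2| ≤ D := by
  obtain ⟨t, q, ht1, ht2, htq⟩ := balanced (D^2+D) (D*v.1+(D+1)*v.2) (by nlinarith)
  obtain ⟨c, k, hc1, hc2, hck⟩ := balanced D (-2*t) (by linarith)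
  have hN : 2*(D^2+D)+1 = 2*D^2+2*D+1 := by ring
  -- bounds on k
  have hk2 : k ≤ D := by
    by_contra h
    push_neg at h
    have h3 : (2*D+1)*(D+1) ≤ (2*D+1)*k := by
      apply mul_le_mul_of_nonneg_left (by omega) (by omega)
    nlinarith
  have hk1 : -D ≤ k := by
    by_contra h
    push_neg at h
    have h3 : (2*D+1)*k ≤ (2*D+1)*(-(D+1)) := by
      apply mul_le_mul_of_nonneg_left (by omega) (by omega)
    nlinarith
  set a : ℤ := c + t + D*k with ha
  set b : ℤ := t + D*k with hb
  refine ⟨(v.1 - a, v.2 - b), ?_, ?_⟩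
  · -- membership
    have e1 : D*(v.1-a) + (D+1)*(v.2-b) = (2*D^2+2*D+1)*q := by
      linear_combination htq + D*hck
    have e2 : D*((D+1)*(v.1-a) - D*(v.2-b)) = (2*D^2+2*D+1) * ((D+1)*q - (v.2 - b)) := by
      linear_combination (D+1) * e1
    have hco : IsCoprime (2*D^2+2*D+1) D := ⟨1, -(2*D+2), by ring⟩
    obtain ⟨n', hn'⟩ := hco.dvd_of_dvd_mul_left ⟨(D+1)*q - (v.2-b), e2⟩
    refine ⟨q, n', ?_⟩
    have hNne : (2*D^2+2*D+1) ≠ 0 := by nlinarith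
    have g1 : v.1 - a = q*D + n'*(D+1) := by
      have : (2*D^2+2*D+1)*(v.1-a) = (2*D^2+2*D+1)*(q*D + n'*(D+1)) := by
        linear_combination D*e1 + (D+1)*hn'
      exact mul_left_cancel₀ hNne this
    have g2 : v.2 - b = q*(D+1) - n'*D := by
      have : (2*D^2+2*D+1)*(v.2-b) = (2*D^2+2*D+1)*(q*(D+1) - n'*D) := by
        linear_combination (D+1)*e1 - D*hn'
      exact mul_left_cancel₀ hNne this
    exact Prod.ext g1 g2
  · -- distance
    simp only [sub_sub_cancel]
    have hs : a + b = -k := by linear_combination -hck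
    have hdd : a - b = c := by ring
    rcases abs_cases a with ⟨ea, _⟩ | ⟨ea, _⟩ <;> rcases abs_cases b with ⟨eb, _⟩ | ⟨eb, _⟩ <;>
      rw [ea, eb] <;> linarith

lemma uniq_code (D : ℤ) (hD : 1 ≤ D) (v u u' : ℤ × ℤ)
    (h1 : (∃ m n : ℤ, u = (m*D + n*(D+1), m*(D+1) - n*D)) ∧ |v.1-u.1|+|v.2-u.2| ≤ D)
    (h2 : (∃ m n : ℤ, u' = (m*D + n*(D+1), m*(D+1) - n*D)) ∧ |v.1-u'.1|+|v.2-u'.2| ≤ D) :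
    u = u' := by
  obtain ⟨⟨m, n, rfl⟩, hdu⟩ := h1
  obtain ⟨⟨m', n', rfl⟩, hdu'⟩ := h2
  dsimp only at hdu hdu'
  set A : ℤ := m*D + n*(D+1) with hA
  set B : ℤ := m*(D+1) - n*D with hB
  set A' : ℤ := m'*D + n'*(D+1) with hA'
  set B' : ℤ := m'*(D+1) - n'*D with hB'
  have t1 : |A' - A| ≤ |v.1 - A| + |v.1 - A'| := by
    calc |A' - A| ≤ |A' - v.1| + |v.1 - A| := abs_sub_le _ _ _
      _ = |v.1 - A'| + |v.1 - A| := by rw [abs_sub_comm]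
      _ = |v.1 - A| + |v.1 - A'| := by ring
  have t2 : |B' - B| ≤ |v.2 - B| + |v.2 - B'| := by
    calc |B' - B| ≤ |B' - v.2| + |v.2 - B| := abs_sub_le _ _ _
      _ = |v.2 - B'| + |v.2 - B| := by rw [abs_sub_comm]
      _ = |v.2 - B| + |v.2 - B'| := by ring
  have hsum : |A' - A| + |B' - B| ≤ 2*D := by linarith
  have hP : |(A' - A) + (B' - B)| ≤ 2*D := le_trans (abs_add_le _ _) hsum
  have hQ : |(A' - A) - (B' - B)| ≤ 2*D := by
    calc |(A' - A) - (B' - B)| ≤ |A' - A| + |B' - B| := abs_sub _ _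
      _ ≤ 2*D := hsum
  rw [abs_le] at hP hQ
  have eP : (A' - A) + (B' - B) = (m'-m)*(2*D+1) + (n'-n) := by rw [hA, hB, hA', hB']; ring
  have eQ : (A' - A) - (B' - B) = (n'-n)*(2*D+1) - (m'-m) := by rw [hA, hB, hA', hB']; ring
  rw [eP] at hP
  rw [eQ] at hQ
  have key : (m'-m)*(4*D^2+4*D+2)
      = ((m'-m)*(2*D+1)+(n'-n))*(2*D+1) - ((n'-n)*(2*D+1)-(m'-m)) := by ring
  have hb1 : ((m'-m)*(2*D+1)+(n'-n))*(2*D+1) ≤ 2*D*(2*D+1) :=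
    mul_le_mul_of_nonneg_right hP.2 (by omega)
  have hb2 : -(2*D)*(2*D+1) ≤ ((m'-m)*(2*D+1)+(n'-n))*(2*D+1) :=
    mul_le_mul_of_nonneg_right hP.1 (by omega)
  have hDsq : (0:ℤ) ≤ 4*D^2+4*D+2 := by positivity
  have hM0 : m' - m = 0 := by
    rcases lt_trichotomy (m'-m) 0 with h|h|h
    · exfalso
      have hx : (m'-m)*(4*D^2+4*D+2) ≤ (-1)*(4*D^2+4*D+2) :=
        mul_le_mul_of_nonneg_right (by omega) hDsq
      linarith [key, hb2, hQ.2, sq_nonneg D]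
    · exact h
    · exfalso
      have hx : (1:ℤ)*(4*D^2+4*D+2) ≤ (m'-m)*(4*D^2+4*D+2) :=
        mul_le_mul_of_nonneg_right (by omega) hDsq
      linarith [key, hb1, hQ.1, sq_nonneg D]
  have hL0 : n' - n = 0 := by
    rcases lt_trichotomy (n'-n) 0 with h|h|h
    · exfalso
      have hx : (n'-n)*(2*D+1) ≤ (-1)*(2*D+1) :=
        mul_le_mul_of_nonneg_right (by omega) (by omega)
      linarith [hQ.1, hM0]
    · exact h
    · exfalso
      have hx : (1:ℤ)*(2*D+1) ≤ (n'-n)*(2*D+1) :=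
        mul_le_mul_of_nonneg_right (by omega) (by omega)
      linarith [hQ.2, hM0]
  have e1 : m' = m := by omega
  have e2 : n' = n := by omega
  rw [hA, hB, hA', hB', e1, e2]

/-- For every d ≥ 1, the sublattice generated by (d,d+1) and (d+1,-d) is a d-perfect
code in the integer lattice graph of ℤ²: every vertex is within L¹ distance d of
exactly one element of the sublattice. -/
theorem Sd_is_d_perfect_code (d : ℕ) (hd : 1 ≤ d) :
    ∀ v : ℤ × ℤ, ∃! u : ℤ × ℤ,
      u ∈ Sd d ∧ (v.1 - u.1).natAbs + (v.2 - u.2).natAbs ≤ d := by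
  intro v
  have hD : (1:ℤ) ≤ (d:ℤ) := by exact_mod_cast hd
  obtain ⟨u, hmem, hdist⟩ := exists_code (d:ℤ) hD v
  refine ⟨u, ⟨hmem, ?_⟩, ?_⟩
  · rw [Int.abs_eq_natAbs, Int.abs_eq_natAbs] at hdist
    exact_mod_cast hdist
  · intro y hy
    apply uniq_code (d:ℤ) hD v y u ⟨hy.1, ?_⟩ ⟨hmem, ?_⟩
    · rw [Int.abs_eq_natAbs, Int.abs_eq_natAbs]
      exact_mod_cast hy.2
    · exact hdist
end

section
/- For d ≥ 1 and q = 2d^2 + 2d + 1, the quotient graph of the integer lattice graph of Z^2 by the sublattice ⟨(d,d+1),(d+1,-d)⟩ is isomorphic to the undirected Cayley graph of Z/qZ with generating set {1, 2d^2} (equivalently {±1, ±2d^2}). -/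
/-- The subgroup of ℤ² generated by the vectors (d, d+1) and (d+1, -d). -/
def Ld (d : ℕ) : AddSubgroup (ℤ × ℤ) :=
  AddSubgroup.closure {((d : ℤ), (d : ℤ) + 1), ((d : ℤ) + 1, -(d : ℤ))}

/-- The quotient graph of the integer lattice graph by the sublattice `Ld d`: two cosets
are adjacent iff they are distinct and have adjacent representatives. -/
def quotGraph (d : ℕ) : SimpleGraph ((ℤ × ℤ) ⧸ Ld d) where
  Adj x y := x ≠ y ∧ ∃ a b : ℤ × ℤ,
    (QuotientAddGroup.mk a : (ℤ × ℤ) ⧸ Ld d) = x ∧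
    (QuotientAddGroup.mk b : (ℤ × ℤ) ⧸ Ld d) = y ∧ latAdj a b
  symm := by
    constructor
    rintro x y ⟨hne, a, b, ha, hb, hab⟩
    exact ⟨hne.symm, b, a, hb, ha, by unfold latAdj at *; omega⟩
  loopless := by
    constructor
    intro x h
    exact h.1 rfl

/-- The undirected Cayley graph of ℤ/qℤ (q = 2d²+2d+1) with connection set
{±1, ±2d²}. -/
def cayleyGraph (d : ℕ) : SimpleGraph (ZMod (2 * d ^ 2 + 2 * d + 1)) where
  Adj x y := x ≠ y ∧
    (x - y = 1 ∨ x - y = -1 ∨ x - y = ((2 * d ^ 2 : ℕ) : ZMod (2 * d ^ 2 + 2 * d + 1)) ∨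
      x - y = -((2 * d ^ 2 : ℕ) : ZMod (2 * d ^ 2 + 2 * d + 1)))
  symm := by
    constructor
    rintro x y ⟨hne, h⟩
    refine ⟨hne.symm, ?_⟩
    have hxy : y - x = -(x - y) := by ring
    rcases h with h | h | h | h
    · exact Or.inr (Or.inl (by rw [hxy, h]))
    · exact Or.inl (by rw [hxy, h, neg_neg])
    · exact Or.inr (Or.inr (Or.inr (by rw [hxy, h])))
    · exact Or.inr (Or.inr (Or.inl (by rw [hxy, h, neg_neg])))
  loopless := by
    constructor
    intro x h
    exact h.1 rfl

/-- The homomorphism ℤ² → ℤ/q, (x,y) ↦ x + 2d²y. -/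
def phiHom (d : ℕ) : ℤ × ℤ →+ ZMod (2 * d ^ 2 + 2 * d + 1) :=
  AddMonoidHom.mk' (fun p => ((p.1 + 2 * (d : ℤ) ^ 2 * p.2 : ℤ) : ZMod (2 * d ^ 2 + 2 * d + 1)))
    (by intro a b; simp only [Prod.fst_add, Prod.snd_add]; push_cast; ring)

lemma phiHom_apply (d : ℕ) (p : ℤ × ℤ) :
    phiHom d p = ((p.1 + 2 * (d : ℤ) ^ 2 * p.2 : ℤ) : ZMod (2 * d ^ 2 + 2 * d + 1)) := rfl

lemma phiHom_eq_zero_iff (d : ℕ) (p : ℤ × ℤ) :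
    phiHom d p = 0 ↔ (2 * (d : ℤ) ^ 2 + 2 * d + 1) ∣ p.1 + 2 * (d : ℤ) ^ 2 * p.2 := by
  rw [phiHom_apply, ZMod.intCast_zmod_eq_zero_iff_dvd]
  push_cast
  rfl

lemma ker_phiHom (d : ℕ) : (phiHom d).ker = Ld d := by
  apply le_antisymm
  · intro p hp
    rw [AddMonoidHom.mem_ker, phiHom_eq_zero_iff] at hp
    obtain ⟨k, hk⟩ := hp
    rw [Ld, AddSubgroup.mem_closure_pair]
    refine ⟨d * k + (1 - d) * p.2, (d + 1) * k - d * p.2, ?_⟩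
    have h1 : p = (p.1, p.2) := rfl
    rw [Prod.ext_iff]
    constructor
    · show (d * k + (1 - (d:ℤ)) * p.2) * d + ((d + 1) * k - d * p.2) * ((d:ℤ) + 1) = p.1
      linear_combination -hk
    · show (d * k + (1 - (d:ℤ)) * p.2) * ((d:ℤ) + 1) + ((d + 1) * k - d * p.2) * (-(d:ℤ)) = p.2
      ring
  · rw [Ld, AddSubgroup.closure_le]
    rintro p hp
    simp only [Set.mem_insert_iff, Set.mem_singleton_iff] at hp
    rcases hp with rfl | rfl
    · rw [SetLike.mem_coe, AddMonoidHom.mem_ker, phiHom_eq_zero_iff]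
      exact ⟨d, by ring⟩
    · rw [SetLike.mem_coe, AddMonoidHom.mem_ker, phiHom_eq_zero_iff]
      exact ⟨1 - d, by ring⟩

lemma phiHom_surj (d : ℕ) : Function.Surjective (phiHom d) := by
  haveI : NeZero (2 * d ^ 2 + 2 * d + 1) := ⟨by omega⟩
  intro z
  refine ⟨((z.val : ℤ), 0), ?_⟩
  rw [phiHom_apply]
  push_cast
  simp [ZMod.natCast_val, ZMod.cast_id]

/-- The induced additive equivalence ℤ²/Ld ≃ ℤ/q. -/
noncomputable def eEquiv (d : ℕ) : ((ℤ × ℤ) ⧸ Ld d) ≃+ ZMod (2 * d ^ 2 + 2 * d + 1) :=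
  (QuotientAddGroup.quotientAddEquivOfEq (ker_phiHom d).symm).trans
    (QuotientAddGroup.quotientKerEquivOfSurjective (phiHom d) (phiHom_surj d))

lemma eEquiv_mk (d : ℕ) (a : ℤ × ℤ) :
    eEquiv d (QuotientAddGroup.mk a) = phiHom d a := rfl

/-- For d ≥ 1 and q = 2d² + 2d + 1, the quotient graph of the integer lattice graph of ℤ²
by the sublattice ⟨(d,d+1),(d+1,-d)⟩ is isomorphic to the undirected Cayley graph of
ℤ/qℤ with connection set {±1, ±2d²}. -/
theorem quotGraph_iso_cayley (d : ℕ) (hd : 1 ≤ d) :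
    Nonempty (quotGraph d ≃g cayleyGraph d) := by
  classical
  refine ⟨{ toEquiv := (eEquiv d).toEquiv, map_rel_iff' := ?_ }⟩
  intro x y
  show (cayleyGraph d).Adj (eEquiv d x) (eEquiv d y) ↔ (quotGraph d).Adj x y
  constructor
  · rintro ⟨hne, hs⟩
    have hxy : x ≠ y := fun h => hne (by rw [h])
    obtain ⟨a, rfl⟩ := QuotientAddGroup.mk_surjective x
    have key : ∀ v : ℤ × ℤ, v.1.natAbs + v.2.natAbs = 1 →
        eEquiv d (QuotientAddGroup.mk a) - eEquiv d y = phiHom d v →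
        (quotGraph d).Adj (QuotientAddGroup.mk a) y := by
      intro v hv hphi
      refine ⟨hxy, a, a - v, rfl, ?_, ?_⟩
      · apply (eEquiv d).injective
        rw [eEquiv_mk] at hphi
        rw [eEquiv_mk, map_sub]
        linear_combination hphi
      · unfold latAdj
        simp only [Prod.fst_sub, Prod.snd_sub]
        omega
    rcases hs with h | h | h | h
    · refine key (1, 0) (by simp) ?_
      rw [h, phiHom_apply]; push_cast; ring
    · refine key (-1, 0) (by simp) ?_
      rw [h, phiHom_apply]; push_cast; ring
    · refine key (0, 1) (by simp) ?_
      rw [h, phiHom_apply]; push_cast; ring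
    · refine key (0, -1) (by simp) ?_
      rw [h, phiHom_apply]; push_cast; ring
  · rintro ⟨hne, a, b, rfl, rfl, hab⟩
    refine ⟨fun h => hne ((eEquiv d).injective h), ?_⟩
    unfold latAdj at hab
    have hval : eEquiv d (QuotientAddGroup.mk a) - eEquiv d (QuotientAddGroup.mk b)
        = ((a.1 - b.1 + 2 * (d : ℤ) ^ 2 * (a.2 - b.2) : ℤ) : ZMod (2 * d ^ 2 + 2 * d + 1)) := by
      rw [eEquiv_mk, eEquiv_mk, phiHom_apply, phiHom_apply]
      push_cast; ring
    have h4 : (a.1 - b.1 = 1 ∧ a.2 - b.2 = 0) ∨ (a.1 - b.1 = -1 ∧ a.2 - b.2 = 0) ∨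
        (a.1 - b.1 = 0 ∧ a.2 - b.2 = 1) ∨ (a.1 - b.1 = 0 ∧ a.2 - b.2 = -1) := by omega
    rcases h4 with ⟨h1, h2⟩ | ⟨h1, h2⟩ | ⟨h1, h2⟩ | ⟨h1, h2⟩
    · exact Or.inl (by rw [hval, h1, h2]; push_cast; ring)
    · exact Or.inr (Or.inl (by rw [hval, h1, h2]; push_cast; ring))
    · exact Or.inr (Or.inr (Or.inl (by rw [hval, h1, h2]; push_cast; ring)))
    · exact Or.inr (Or.inr (Or.inr (by rw [hval, h1, h2]; push_cast; ring)))
end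

section
/- There exists a total perfect code in the toroidal grid graph C_m × C_n consisting of pairwise parallel edges (a parallel total perfect code) if and only if both m and n are divisible by 4. -/
/-- Adjacency in the toroidal grid graph C_m × C_n on (ℤ/m) × (ℤ/n). -/
def torusAdj {m n : ℕ} (u v : ZMod m × ZMod n) : Prop :=
  (u.1 = v.1 ∧ (u.2 = v.2 + 1 ∨ u.2 = v.2 - 1)) ∨
  (u.2 = v.2 ∧ (u.1 = v.1 + 1 ∨ u.1 = v.1 - 1))

/-- `S` is a total perfect code: every vertex outside `S` has exactly one neighbor in `S`,
and the subgraph induced by `S` is a perfect matching (every vertex of `S` has exactly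
one neighbor in `S`). -/
def IsTPC {m n : ℕ} (S : Set (ZMod m × ZMod n)) : Prop :=
  (∀ v ∉ S, ∃! u, u ∈ S ∧ torusAdj u v) ∧
  (∀ v ∈ S, ∃! u, u ∈ S ∧ torusAdj u v)

/-- A parallel total perfect code: a total perfect code all of whose induced edges lie in
the same coordinate direction. -/
def IsParallelTPC {m n : ℕ} (S : Set (ZMod m × ZMod n)) : Prop :=
  IsTPC S ∧
    ((∀ u ∈ S, ∀ v ∈ S, torusAdj u v → u.1 = v.1) ∨
     (∀ u ∈ S, ∀ v ∈ S, torusAdj u v → u.2 = v.2))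

namespace TPCAux

/-- The mod-4 pattern of the code. -/
def Qd (a b : ZMod 4) : Prop := (b = 0 ∨ b = 2) ∧ (a = b ∨ a = b + 1)

instance (a b : ZMod 4) : Decidable (Qd a b) := by unfold Qd; infer_instance

lemma K1 : ∀ a b : ZMod 4,
    (Qd (a+1) b ∨ Qd (a-1) b ∨ Qd a (b+1) ∨ Qd a (b-1)) := by decide

lemma K1u : ∀ a b : ZMod 4,
    (¬ (Qd (a+1) b ∧ Qd (a-1) b)) ∧ (¬ (Qd (a+1) b ∧ Qd a (b+1))) ∧
    (¬ (Qd (a+1) b ∧ Qd a (b-1))) ∧ (¬ (Qd (a-1) b ∧ Qd a (b+1))) ∧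
    (¬ (Qd (a-1) b ∧ Qd a (b-1))) ∧ (¬ (Qd a (b+1) ∧ Qd a (b-1))) := by decide

lemma K2 : ∀ a b : ZMod 4, ¬ (Qd a b ∧ Qd a (b+1)) := by decide

lemma adj_cases {m n : ℕ} {u v : ZMod m × ZMod n} (h : torusAdj u v) :
    u = (v.1 + 1, v.2) ∨ u = (v.1 - 1, v.2) ∨ u = (v.1, v.2 + 1) ∨ u = (v.1, v.2 - 1) := by
  obtain ⟨h1, h2 | h2⟩ | ⟨h1, h2 | h2⟩ := h
  · exact Or.inr (Or.inr (Or.inl (Prod.ext h1 h2)))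
  · exact Or.inr (Or.inr (Or.inr (Prod.ext h1 h2)))
  · exact Or.inl (Prod.ext h2 h1)
  · exact Or.inr (Or.inl (Prod.ext h2 h1))

lemma adjx {m n : ℕ} {x x' : ZMod m} {y y' : ZMod n} (hy : y = y') (h : x = x' + 1 ∨ x = x' - 1) :
    torusAdj (x, y) (x', y') := Or.inr ⟨hy, h⟩

lemma adjy {m n : ℕ} {x x' : ZMod m} {y y' : ZMod n} (hx : x = x') (h : y = y' + 1 ∨ y = y' - 1) :
    torusAdj (x, y) (x', y') := Or.inl ⟨hx, h⟩

theorem suff {m n : ℕ} (hm4 : 4 ∣ m) (hn4 : 4 ∣ n) :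
    ∃ S : Set (ZMod m × ZMod n), IsParallelTPC S := by
  have f : ZMod m →+* ZMod 4 := ZMod.castHom hm4 (ZMod 4)
  have g : ZMod n →+* ZMod 4 := ZMod.castHom hn4 (ZMod 4)
  refine ⟨{p | Qd (f p.1) (g p.2)}, ?_, ?_⟩
  · -- IsTPC
    have key : ∀ v : ZMod m × ZMod n, ∃! u, u ∈ {p : ZMod m × ZMod n | Qd (f p.1) (g p.2)} ∧ torusAdj u v := by
      intro v
      set a := f v.1 with ha
      set b := g v.2 with hb
      have m1 : ∀ x : ZMod m, f (x + 1) = f x + 1 := by intro x; rw [map_add, map_one]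
      have m2 : ∀ x : ZMod m, f (x - 1) = f x - 1 := by intro x; rw [map_sub, map_one]
      have m3 : ∀ y : ZMod n, g (y + 1) = g y + 1 := by intro y; rw [map_add, map_one]
      have m4 : ∀ y : ZMod n, g (y - 1) = g y - 1 := by intro y; rw [map_sub, map_one]
      have mem1 : ((v.1 + 1, v.2) ∈ {p : ZMod m × ZMod n | Qd (f p.1) (g p.2)}) ↔ Qd (a+1) b := by
        simp only [Set.mem_setOf_eq, m1]; rfl
      have mem2 : ((v.1 - 1, v.2) ∈ {p : ZMod m × ZMod n | Qd (f p.1) (g p.2)}) ↔ Qd (a-1) b := by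
        simp only [Set.mem_setOf_eq, m2]; rfl
      have mem3 : ((v.1, v.2 + 1) ∈ {p : ZMod m × ZMod n | Qd (f p.1) (g p.2)}) ↔ Qd a (b+1) := by
        simp only [Set.mem_setOf_eq, m3]; rfl
      have mem4 : ((v.1, v.2 - 1) ∈ {p : ZMod m × ZMod n | Qd (f p.1) (g p.2)}) ↔ Qd a (b-1) := by
        simp only [Set.mem_setOf_eq, m4]; rfl
      obtain ⟨e1, e2, e3, e4, e5, e6⟩ := K1u a b
      have uniq : ∀ u', (u' ∈ {p : ZMod m × ZMod n | Qd (f p.1) (g p.2)} ∧ torusAdj u' v) →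
          (Qd (a+1) b → u' = (v.1+1, v.2)) ∧ (Qd (a-1) b → u' = (v.1-1, v.2)) ∧
          (Qd a (b+1) → u' = (v.1, v.2+1)) ∧ (Qd a (b-1) → u' = (v.1, v.2-1)) := by
        intro u' ⟨hmem, hadj⟩
        rcases adj_cases hadj with h | h | h | h <;> subst h
        · rw [mem1] at hmem
          exact ⟨fun _ => rfl, fun hq => absurd ⟨hmem, hq⟩ e1,
            fun hq => absurd ⟨hmem, hq⟩ e2, fun hq => absurd ⟨hmem, hq⟩ e3⟩
        · rw [mem2] at hmem
          exact ⟨fun hq => absurd ⟨hq, hmem⟩ e1, fun _ => rfl,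
            fun hq => absurd ⟨hmem, hq⟩ e4, fun hq => absurd ⟨hmem, hq⟩ e5⟩
        · rw [mem3] at hmem
          exact ⟨fun hq => absurd ⟨hq, hmem⟩ e2, fun hq => absurd ⟨hq, hmem⟩ e4,
            fun _ => rfl, fun hq => absurd ⟨hmem, hq⟩ e6⟩
        · rw [mem4] at hmem
          exact ⟨fun hq => absurd ⟨hq, hmem⟩ e3, fun hq => absurd ⟨hq, hmem⟩ e5,
            fun hq => absurd ⟨hq, hmem⟩ e6, fun _ => rfl⟩
      rcases K1 a b with hq | hq | hq | hq
      · exact ⟨(v.1+1, v.2), ⟨mem1.2 hq, adjx rfl (Or.inl rfl)⟩, fun u' h => (uniq u' h).1 hq⟩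
      · exact ⟨(v.1-1, v.2), ⟨mem2.2 hq, adjx rfl (Or.inr rfl)⟩, fun u' h => (uniq u' h).2.1 hq⟩
      · exact ⟨(v.1, v.2+1), ⟨mem3.2 hq, adjy rfl (Or.inl rfl)⟩, fun u' h => (uniq u' h).2.2.1 hq⟩
      · exact ⟨(v.1, v.2-1), ⟨mem4.2 hq, adjy rfl (Or.inr rfl)⟩, fun u' h => (uniq u' h).2.2.2 hq⟩
    exact ⟨fun v _ => key v, fun v _ => key v⟩
  · -- parallel: all edges horizontal (equal second coordinates)
    right
    intro u hu v hv hadj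
    rcases hadj with ⟨h1, h2 | h2⟩ | ⟨h1, _⟩
    · exfalso
      refine K2 (f v.1) (g v.2) ⟨hv, ?_⟩
      have : g u.2 = g v.2 + 1 := by rw [h2, map_add, map_one]
      rw [← this, ← h1]; exact hu
    · exfalso
      refine K2 (f v.1) (g v.2 - 1) ⟨?_, ?_⟩
      · have : g u.2 = g v.2 - 1 := by rw [h2, map_sub, map_one]
        rw [← this, ← h1]; exact hu
      · rw [sub_add_cancel]; exact hv
    · exact h1

end TPCAux


namespace Engine

lemma adjx {m n : ℕ} {x x' : ZMod m} {y y' : ZMod n} (hy : y = y') (h : x = x' + 1 ∨ x = x' - 1) :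
    torusAdj (x, y) (x', y') := Or.inr ⟨hy, h⟩

lemma adjy {m n : ℕ} {x x' : ZMod m} {y y' : ZMod n} (hx : x = x') (h : y = y' + 1 ∨ y = y' - 1) :
    torusAdj (x, y) (x', y') := Or.inl ⟨hx, h⟩

lemma adj_cases' {m n : ℕ} {u v : ZMod m × ZMod n} (h : torusAdj u v) :
    u = (v.1 + 1, v.2) ∨ u = (v.1 - 1, v.2) ∨ u = (v.1, v.2 + 1) ∨ u = (v.1, v.2 - 1) := by
  obtain ⟨h1, h2 | h2⟩ | ⟨h1, h2 | h2⟩ := h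
  · exact Or.inr (Or.inr (Or.inl (Prod.ext h1 h2)))
  · exact Or.inr (Or.inr (Or.inr (Prod.ext h1 h2)))
  · exact Or.inl (Prod.ext h2 h1)
  · exact Or.inr (Or.inl (Prod.ext h2 h1))

structure Ctx (m n : ℕ) where
  s : ZMod m × ZMod n → Prop
  hm : 3 ≤ m
  hn : 3 ≤ n
  h1 : ∀ v, ∃! u, s u ∧ torusAdj u v
  hpar : ∀ u v, s u → s v → torusAdj u v → u.2 = v.2

namespace Ctx

variable {m n : ℕ}

lemma nzm (C : Ctx m n) : NeZero m := ⟨by have := C.hm; omega⟩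
lemma nzn (C : Ctx m n) : NeZero n := ⟨by have := C.hn; omega⟩

lemma two_ne_m (C : Ctx m n) : (2 : ZMod m) ≠ 0 := by
  haveI := C.nzm
  intro h
  have h2 : ((2:ℕ) : ZMod m) = 0 := by exact_mod_cast h
  rw [ZMod.natCast_eq_zero_iff] at h2
  have := Nat.le_of_dvd (by norm_num) h2
  have := C.hm; omega

lemma one_ne_m (C : Ctx m n) : (1 : ZMod m) ≠ 0 := by
  haveI := C.nzm
  intro h
  have h2 : ((1:ℕ) : ZMod m) = 0 := by exact_mod_cast h
  rw [ZMod.natCast_eq_zero_iff] at h2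
  have := Nat.le_of_dvd (by norm_num) h2
  have := C.hm; omega

lemma two_ne_n (C : Ctx m n) : (2 : ZMod n) ≠ 0 := by
  haveI := C.nzn
  intro h
  have h2 : ((2:ℕ) : ZMod n) = 0 := by exact_mod_cast h
  rw [ZMod.natCast_eq_zero_iff] at h2
  have := Nat.le_of_dvd (by norm_num) h2
  have := C.hn; omega

lemma one_ne_n (C : Ctx m n) : (1 : ZMod n) ≠ 0 := by
  haveI := C.nzn
  intro h
  have h2 : ((1:ℕ) : ZMod n) = 0 := by exact_mod_cast h
  rw [ZMod.natCast_eq_zero_iff] at h2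
  have := Nat.le_of_dvd (by norm_num) h2
  have := C.hn; omega

lemma uq (C : Ctx m n) {u w : ZMod m × ZMod n} (v : ZMod m × ZMod n) (hu : C.s u) (hw : C.s w)
    (au : torusAdj u v) (aw : torusAdj w v) : u = w := by
  obtain ⟨u₀, _, hu₀⟩ := C.h1 v
  exact (hu₀ u ⟨hu, au⟩).trans (hu₀ w ⟨hw, aw⟩).symm

lemma ex4 (C : Ctx m n) (x : ZMod m) (y : ZMod n) :
    C.s (x+1, y) ∨ C.s (x-1, y) ∨ C.s (x, y+1) ∨ C.s (x, y-1) := by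
  obtain ⟨u, ⟨hu, hadj⟩, -⟩ := C.h1 (x, y)
  rcases adj_cases' hadj with h | h | h | h <;> subst h
  · exact Or.inl hu
  · exact Or.inr (Or.inl hu)
  · exact Or.inr (Or.inr (Or.inl hu))
  · exact Or.inr (Or.inr (Or.inr hu))

-- exclusion lemmas, center (x,y)
lemma er_el (C : Ctx m n) {x : ZMod m} {y : ZMod n} (h : C.s (x+1, y)) : ¬ C.s (x-1, y) := fun h' => by
  have he := C.uq (x, y) h h' (adjx rfl (Or.inl rfl)) (adjx rfl (Or.inr rfl))
  have hx : x + 1 = x - 1 := congrArg Prod.fst he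
  exact C.two_ne_m (by linear_combination hx)

lemma el_er (C : Ctx m n) {x : ZMod m} {y : ZMod n} (h : C.s (x-1, y)) : ¬ C.s (x+1, y) :=
  fun h' => C.er_el h' h

lemma er_eu (C : Ctx m n) {x : ZMod m} {y : ZMod n} (h : C.s (x+1, y)) : ¬ C.s (x, y+1) := fun h' => by
  have he := C.uq (x, y) h h' (adjx rfl (Or.inl rfl)) (adjy rfl (Or.inl rfl))
  have hx : x + 1 = x := congrArg Prod.fst he
  exact C.one_ne_m (by linear_combination hx)

lemma er_ed (C : Ctx m n) {x : ZMod m} {y : ZMod n} (h : C.s (x+1, y)) : ¬ C.s (x, y-1) := fun h' => by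
  have he := C.uq (x, y) h h' (adjx rfl (Or.inl rfl)) (adjy rfl (Or.inr rfl))
  have hx : x + 1 = x := congrArg Prod.fst he
  exact C.one_ne_m (by linear_combination hx)

lemma el_eu (C : Ctx m n) {x : ZMod m} {y : ZMod n} (h : C.s (x-1, y)) : ¬ C.s (x, y+1) := fun h' => by
  have he := C.uq (x, y) h h' (adjx rfl (Or.inr rfl)) (adjy rfl (Or.inl rfl))
  have hx : x - 1 = x := congrArg Prod.fst he
  exact C.one_ne_m (by linear_combination -hx)

lemma el_ed (C : Ctx m n) {x : ZMod m} {y : ZMod n} (h : C.s (x-1, y)) : ¬ C.s (x, y-1) := fun h' => by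
  have he := C.uq (x, y) h h' (adjx rfl (Or.inr rfl)) (adjy rfl (Or.inr rfl))
  have hx : x - 1 = x := congrArg Prod.fst he
  exact C.one_ne_m (by linear_combination -hx)

lemma eu_er (C : Ctx m n) {x : ZMod m} {y : ZMod n} (h : C.s (x, y+1)) : ¬ C.s (x+1, y) :=
  fun h' => C.er_eu h' h

lemma eu_el (C : Ctx m n) {x : ZMod m} {y : ZMod n} (h : C.s (x, y+1)) : ¬ C.s (x-1, y) :=
  fun h' => C.el_eu h' h

lemma ed_er (C : Ctx m n) {x : ZMod m} {y : ZMod n} (h : C.s (x, y-1)) : ¬ C.s (x+1, y) :=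
  fun h' => C.er_ed h' h

lemma ed_el (C : Ctx m n) {x : ZMod m} {y : ZMod n} (h : C.s (x, y-1)) : ¬ C.s (x-1, y) :=
  fun h' => C.el_ed h' h

lemma eu_ed (C : Ctx m n) {x : ZMod m} {y : ZMod n} (h : C.s (x, y+1)) : ¬ C.s (x, y-1) := fun h' => by
  have he := C.uq (x, y) h h' (adjy rfl (Or.inl rfl)) (adjy rfl (Or.inr rfl))
  have hy : y + 1 = y - 1 := congrArg Prod.snd he
  exact C.two_ne_n (by linear_combination hy)

lemma ed_eu (C : Ctx m n) {x : ZMod m} {y : ZMod n} (h : C.s (x, y-1)) : ¬ C.s (x, y+1) :=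
  fun h' => C.eu_ed h' h

-- vertical exclusions from parallelism
lemma hV (C : Ctx m n) {x : ZMod m} {y : ZMod n} (h : C.s (x, y)) : ¬ C.s (x, y+1) := fun h' => by
  have := C.hpar (x, y+1) (x, y) h' h (adjy rfl (Or.inl rfl))
  exact C.one_ne_n (by linear_combination this)

lemma hVd (C : Ctx m n) {x : ZMod m} {y : ZMod n} (h : C.s (x, y)) : ¬ C.s (x, y-1) := fun h' => by
  have := C.hpar (x, y-1) (x, y) h' h (adjy rfl (Or.inr rfl))
  exact C.one_ne_n (by linear_combination -this)

lemma partner (C : Ctx m n) {x : ZMod m} {y : ZMod n} (h : C.s (x, y)) :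
    C.s (x+1, y) ∨ C.s (x-1, y) := by
  rcases C.ex4 x y with h' | h' | h' | h'
  · exact Or.inl h'
  · exact Or.inr h'
  · exact absurd h' (C.hV h)
  · exact absurd h' (C.hVd h)

-- halo lemmas: given a domino s(a,y), s(a+1,y)
section Halo
variable (C : Ctx m n) {a : ZMod m} {y : ZMod n}

lemma nL1 (h0 : C.s (a, y)) (h1 : C.s (a+1, y)) : ¬ C.s (a-1, y) := C.er_el h1

lemma nR2 (h0 : C.s (a, y)) (h1 : C.s (a+1, y)) : ¬ C.s (a+2, y) := by
  have h' : C.s ((a+1) - 1, y) := by rw [show (a+1)-1 = a from by ring]; exact h0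
  have := C.el_er h'
  rw [show (a+1)+1 = a+2 from by ring] at this
  exact this

lemma nR3 (h0 : C.s (a, y)) (h1 : C.s (a+1, y)) : ¬ C.s (a+3, y) := by
  have h' : C.s ((a+2) - 1, y) := by rw [show (a+2)-1 = a+1 from by ring]; exact h1
  have := C.el_er h'
  rw [show (a+2)+1 = a+3 from by ring] at this
  exact this

lemma nL2 (h0 : C.s (a, y)) (h1 : C.s (a+1, y)) : ¬ C.s (a-2, y) := by
  have h' : C.s ((a-1) + 1, y) := by rw [show (a-1)+1 = a from by ring]; exact h0
  have := C.er_el h'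
  rw [show (a-1)-1 = a-2 from by ring] at this
  exact this

lemma nU0 (h0 : C.s (a, y)) (h1 : C.s (a+1, y)) : ¬ C.s (a, y+1) := C.hV h0
lemma nU1 (h0 : C.s (a, y)) (h1 : C.s (a+1, y)) : ¬ C.s (a+1, y+1) := C.hV h1
lemma nD0 (h0 : C.s (a, y)) (h1 : C.s (a+1, y)) : ¬ C.s (a, y-1) := C.hVd h0
lemma nD1 (h0 : C.s (a, y)) (h1 : C.s (a+1, y)) : ¬ C.s (a+1, y-1) := C.hVd h1

lemma nUL (h0 : C.s (a, y)) (h1 : C.s (a+1, y)) : ¬ C.s (a-1, y+1) := by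
  have h' : C.s (a, (y+1) - 1) := by rw [show (y+1)-1 = y from by ring]; exact h0
  exact C.ed_el h'

lemma nUR (h0 : C.s (a, y)) (h1 : C.s (a+1, y)) : ¬ C.s (a+2, y+1) := by
  have h' : C.s (a+1, (y+1) - 1) := by rw [show (y+1)-1 = y from by ring]; exact h1
  have := C.ed_er h'
  rw [show (a+1)+1 = a+2 from by ring] at this
  exact this

lemma nDL (h0 : C.s (a, y)) (h1 : C.s (a+1, y)) : ¬ C.s (a-1, y-1) := by
  have h' : C.s (a, (y-1) + 1) := by rw [show (y-1)+1 = y from by ring]; exact h0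
  exact C.eu_el h'

lemma nDR (h0 : C.s (a, y)) (h1 : C.s (a+1, y)) : ¬ C.s (a+2, y-1) := by
  have h' : C.s (a+1, (y-1) + 1) := by rw [show (y-1)+1 = y from by ring]; exact h1
  have := C.eu_er h'
  rw [show (a+1)+1 = a+2 from by ring] at this
  exact this

lemma nUU0 (h0 : C.s (a, y)) (h1 : C.s (a+1, y)) : ¬ C.s (a, y+2) := by
  have h' : C.s (a, (y+1) - 1) := by rw [show (y+1)-1 = y from by ring]; exact h0
  have := C.ed_eu h'
  rw [show (y+1)+1 = y+2 from by ring] at this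
  exact this

lemma nUU1 (h0 : C.s (a, y)) (h1 : C.s (a+1, y)) : ¬ C.s (a+1, y+2) := by
  have h' : C.s (a+1, (y+1) - 1) := by rw [show (y+1)-1 = y from by ring]; exact h1
  have := C.ed_eu h'
  rw [show (y+1)+1 = y+2 from by ring] at this
  exact this

lemma nDD0 (h0 : C.s (a, y)) (h1 : C.s (a+1, y)) : ¬ C.s (a, y-2) := by
  have h' : C.s (a, (y-1) + 1) := by rw [show (y-1)+1 = y from by ring]; exact h0
  have := C.eu_ed h'
  rw [show (y-1)-1 = y-2 from by ring] at this
  exact this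

lemma nDD1 (h0 : C.s (a, y)) (h1 : C.s (a+1, y)) : ¬ C.s (a+1, y-2) := by
  have h' : C.s (a+1, (y-1) + 1) := by rw [show (y-1)+1 = y from by ring]; exact h1
  have := C.eu_ed h'
  rw [show (y-1)-1 = y-2 from by ring] at this
  exact this

end Halo

section Counting
attribute [local instance] Classical.propDecidable
variable (C : Ctx m n)

noncomputable def rset (C : Ctx m n) [NeZero m] (y : ZMod n) : Finset (ZMod m) :=
  Finset.univ.filter (fun x => C.s (x, y))

noncomputable def cset (C : Ctx m n) [NeZero n] (x : ZMod m) : Finset (ZMod n) :=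
  Finset.univ.filter (fun y => C.s (x, y))

lemma exactly_one (x : ZMod m) (y : ZMod n) :
    ((if C.s (x+1, y) then 1 else 0) + (if C.s (x-1, y) then 1 else 0))
    + ((if C.s (x, y+1) then 1 else 0) + (if C.s (x, y-1) then 1 else 0)) = 1 := by
  rcases C.ex4 x y with h | h | h | h
  · have e1 := C.er_el h; have e2 := C.er_eu h; have e3 := C.er_ed h
    simp [h, e1, e2, e3]
  · have e1 := C.el_er h; have e2 := C.el_eu h; have e3 := C.el_ed h
    simp [h, e1, e2, e3]
  · have e1 := C.eu_er h; have e2 := C.eu_el h; have e3 := C.eu_ed h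
    simp [h, e1, e2, e3]
  · have e1 := C.ed_er h; have e2 := C.ed_el h; have e3 := C.ed_eu h
    simp [h, e1, e2, e3]

lemma sum_shift [NeZero m] (c : ZMod m) (y : ZMod n) :
    (Finset.univ.filter (fun x : ZMod m => C.s (x + c, y))).card = (rset C y).card := by
  refine Finset.card_bij' (fun x _ => x + c) (fun x _ => x - c) ?_ ?_ ?_ ?_
  · intro x hx
    simp only [Finset.mem_filter, Finset.mem_univ, true_and, rset] at hx ⊢
    exact hx
  · intro x hx
    simp only [rset, Finset.mem_filter, Finset.mem_univ, true_and] at hx ⊢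
    rw [show x - c + c = x from by ring]
    exact hx
  · intro x _; ring
  · intro x _; ring

lemma rrel [NeZero m] (y : ZMod n) :
    (rset C (y+1)).card + (rset C (y-1)).card + 2 * (rset C y).card = m := by
  have hsum : ∑ x : ZMod m, (((if C.s (x+1, y) then 1 else 0) + (if C.s (x-1, y) then 1 else 0))
      + ((if C.s (x, y+1) then 1 else 0) + (if C.s (x, y-1) then 1 else 0))) = m := by
    rw [Finset.sum_congr rfl (fun x _ => C.exactly_one x y)]
    simp [ZMod.card m]
  rw [Finset.sum_add_distrib, Finset.sum_add_distrib, Finset.sum_add_distrib] at hsum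
  have c1 : ∑ x : ZMod m, (if C.s (x+1, y) then 1 else 0) = (rset C y).card := by
    rw [← Finset.card_filter]; exact C.sum_shift 1 y
  have c2 : ∑ x : ZMod m, (if C.s (x-1, y) then 1 else 0) = (rset C y).card := by
    rw [← Finset.card_filter]
    have : (Finset.univ.filter (fun x : ZMod m => C.s (x - 1, y))).card
        = (Finset.univ.filter (fun x : ZMod m => C.s (x + (-1), y))).card := by
      congr 1; apply Finset.filter_congr; intro x _; rw [sub_eq_add_neg]
    rw [this]; exact C.sum_shift (-1) y
  have c3 : ∑ x : ZMod m, (if C.s (x, y+1) then 1 else 0) = (rset C (y+1)).card := by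
    rw [← Finset.card_filter]; rfl
  have c4 : ∑ x : ZMod m, (if C.s (x, y-1) then 1 else 0) = (rset C (y-1)).card := by
    rw [← Finset.card_filter]; rfl
  rw [c1, c2, c3, c4] at hsum
  omega

lemma exactly_one' (x : ZMod m) (y : ZMod n) :
    ((if C.s (x, y+1) then 1 else 0) + (if C.s (x, y-1) then 1 else 0))
    + ((if C.s (x+1, y) then 1 else 0) + (if C.s (x-1, y) then 1 else 0)) = 1 := by
  rw [add_comm]; exact C.exactly_one x y

lemma sum_shift' [NeZero n] (c : ZMod n) (x : ZMod m) :
    (Finset.univ.filter (fun y : ZMod n => C.s (x, y + c))).card = (cset C x).card := by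
  refine Finset.card_bij' (fun y _ => y + c) (fun y _ => y - c) ?_ ?_ ?_ ?_
  · intro y hy
    simp only [Finset.mem_filter, Finset.mem_univ, true_and, cset] at hy ⊢
    exact hy
  · intro y hy
    simp only [cset, Finset.mem_filter, Finset.mem_univ, true_and] at hy ⊢
    rw [show y - c + c = y from by ring]
    exact hy
  · intro y _; ring
  · intro y _; ring

lemma crel [NeZero n] (x : ZMod m) :
    (cset C (x+1)).card + (cset C (x-1)).card + 2 * (cset C x).card = n := by
  have hsum : ∑ y : ZMod n, (((if C.s (x, y+1) then 1 else 0) + (if C.s (x, y-1) then 1 else 0))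
      + ((if C.s (x+1, y) then 1 else 0) + (if C.s (x-1, y) then 1 else 0))) = n := by
    rw [Finset.sum_congr rfl (fun y _ => C.exactly_one' x y)]
    simp [ZMod.card n]
  rw [Finset.sum_add_distrib, Finset.sum_add_distrib, Finset.sum_add_distrib] at hsum
  have c1 : ∑ y : ZMod n, (if C.s (x, y+1) then 1 else 0) = (cset C x).card := by
    rw [← Finset.card_filter]; exact C.sum_shift' 1 x
  have c2 : ∑ y : ZMod n, (if C.s (x, y-1) then 1 else 0) = (cset C x).card := by
    rw [← Finset.card_filter]
    have : (Finset.univ.filter (fun y : ZMod n => C.s (x, y - 1))).card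
        = (Finset.univ.filter (fun y : ZMod n => C.s (x, y + (-1)))).card := by
      congr 1; apply Finset.filter_congr; intro y _; rw [sub_eq_add_neg]
    rw [this]; exact C.sum_shift' (-1) x
  have c3 : ∑ y : ZMod n, (if C.s (x+1, y) then 1 else 0) = (cset C (x+1)).card := by
    rw [← Finset.card_filter]; rfl
  have c4 : ∑ y : ZMod n, (if C.s (x-1, y) then 1 else 0) = (cset C (x-1)).card := by
    rw [← Finset.card_filter]; rfl
  rw [c1, c2, c3, c4] at hsum
  omega

lemma r_even [NeZero m] (y : ZMod n) : 2 ∣ (rset C y).card := by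
  classical
  set L : Finset (ZMod m) := Finset.univ.filter (fun a => C.s (a, y) ∧ C.s (a+1, y)) with hL
  have himg : ∀ z ∈ L.image (· + 1), C.s (z, y) ∧ C.s (z - 1, y) := by
    intro z hz
    obtain ⟨w, hw, rfl⟩ := Finset.mem_image.1 hz
    simp only [hL, Finset.mem_filter] at hw
    constructor
    · exact hw.2.2
    · rw [show w + 1 - 1 = w from by ring]; exact hw.2.1
  have hunion : rset C y = L ∪ L.image (· + 1) := by
    ext x
    simp only [rset, Finset.mem_filter, Finset.mem_union, Finset.mem_univ, true_and]
    constructor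
    · intro hx
      rcases C.partner hx with h | h
      · left; simp only [hL, Finset.mem_filter, Finset.mem_univ, true_and]; exact ⟨hx, h⟩
      · right
        refine Finset.mem_image.2 ⟨x - 1, ?_, by ring⟩
        simp only [hL, Finset.mem_filter, Finset.mem_univ, true_and]
        constructor
        · exact h
        · rw [show x - 1 + 1 = x from by ring]; exact hx
    · intro hx
      rcases hx with h | h
      · simp only [hL, Finset.mem_filter] at h; exact h.2.1
      · exact (himg x h).1
  have hdisj : Disjoint L (L.image (· + 1)) := by
    rw [Finset.disjoint_left]
    intro z hzL hzI
    simp only [hL, Finset.mem_filter] at hzL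
    have h2 := (himg z hzI).2
    exact C.er_el hzL.2.2 h2
  have hinj : (L.image (· + 1)).card = L.card :=
    Finset.card_image_of_injective _ (add_left_injective 1)
  rw [hunion, Finset.card_union_of_disjoint hdisj, hinj]
  exact ⟨L.card, by ring⟩

end Counting

section Telescope

lemma tele {k : ℕ} (hk : 1 ≤ k) (f : ZMod k → ℕ) (M : ℕ)
    (hrel : ∀ z, f (z+1) + f (z-1) + 2 * f z = M) : 2 * (f 0 + f 1) = M := by
  haveI : NeZero k := ⟨by omega⟩
  set g : ℕ → ℤ := fun t => (f ((t : ℕ) : ZMod k) : ℤ) with hg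
  have grel : ∀ t : ℕ, g (t+2) + g t + 2 * g (t+1) = M := by
    intro t
    have h := hrel (((t+1 : ℕ) : ZMod k))
    have e1 : ((t+1 : ℕ) : ZMod k) + 1 = ((t+2 : ℕ) : ZMod k) := by push_cast; ring
    have e2 : ((t+1 : ℕ) : ZMod k) - 1 = ((t : ℕ) : ZMod k) := by push_cast; ring
    rw [e1, e2] at h
    simp only [hg]
    exact_mod_cast h
  set K : ℕ → ℤ := fun t => g t + g (t+1) with hK
  have hsum : ∀ t, K t + K (t+1) = M := by
    intro t
    have := grel t
    simp only [hK]
    linarith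
  have hstep : ∀ t, g (t+2) - g t = K (t+1) - K t := by
    intro t; simp only [hK]; ring
  have hK2 : ∀ t, K (t+2) = K t := by
    intro t
    have h1 := hsum t; have h2 := hsum (t+1)
    linarith
  have hKeven : ∀ u, K (2*u) = K 0 := by
    intro u
    induction u with
    | zero => rfl
    | succ v ih => rw [show 2*(v+1) = 2*v+2 from by ring, hK2]; exact ih
  have hKodd : ∀ u, K (2*u+1) = K 1 := by
    intro u
    induction u with
    | zero => rfl
    | succ v ih => rw [show 2*(v+1)+1 = (2*v+1)+2 from by ring, hK2]; exact ih
  have hincr : ∀ u, g (2*u) = g 0 + u * (K 1 - K 0) := by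
    intro u
    induction u with
    | zero => simp
    | succ v ih =>
      have h := hstep (2*v)
      rw [hKodd v, hKeven v] at h
      have : g (2*(v+1)) = g (2*v) + (K 1 - K 0) := by
        rw [show 2*(v+1) = 2*v+2 from by ring]; linarith
      rw [this, ih]; push_cast; ring
  have hper : g (2*k) = g 0 := by
    simp only [hg]
    congr 1
    push_cast
    simp [ZMod.natCast_self]
  have hko : (k : ℤ) * (K 1 - K 0) = 0 := by
    have := hincr k
    rw [hper] at this
    linarith
  have hKeq : K 1 = K 0 := by
    have hk0 : (k : ℤ) ≠ 0 := by exact_mod_cast (by omega : k ≠ 0)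
    rcases mul_eq_zero.1 hko with h | h
    · exact absurd h hk0
    · linarith
  have hM : (M : ℤ) = 2 * K 0 := by
    have := hsum 0
    rw [hKeq] at this
    linarith
  have hg0 : g 0 = f 0 := by simp [hg]
  have hg1 : g 1 = f 1 := by simp [hg]
  have : (M : ℤ) = 2 * ((f 0 : ℤ) + f 1) := by
    rw [hM]; simp only [hK]; rw [hg0, hg1]
  exact_mod_cast this.symm

end Telescope

section Divis

lemma four_dvd_m (C : Ctx m n) : 4 ∣ m := by
  haveI := C.nzm
  haveI := C.nzn
  have h := tele (k := n) (by have := C.hn; omega) (fun y => (rset C y).card) m ?_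
  · obtain ⟨k0, hk0⟩ := C.r_even 0
    obtain ⟨k1, hk1⟩ := C.r_even 1
    exact ⟨k0 + k1, by omega⟩
  · intro z
    exact C.rrel z

lemma two_dvd_n (C : Ctx m n) : 2 ∣ n := by
  haveI := C.nzm
  haveI := C.nzn
  have h := tele (k := m) (by have := C.hm; omega) (fun x => (cset C x).card) n ?_
  · exact ⟨(cset C 0).card + (cset C 1).card, by omega⟩
  · intro z
    exact C.crel z

end Divis

section Strip
variable (C : Ctx m n) (a : ZMod m) (y : ZMod n) (d : ℕ)

lemma cst1 (t : ℕ) : a + ((t+1 : ℕ) : ZMod m) = a + (t : ℕ) + 1 := by push_cast; ring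

lemma cstp (t : ℕ) (ht : 1 ≤ t) : a + ((t-1 : ℕ) : ZMod m) = a + (t : ℕ) - 1 := by
  push_cast [Nat.cast_sub ht]; ring

/-- dichotomy for strip cells: exactly one of up/down. -/
lemma UD1 (hd0 : C.s (a, y)) (hd1 : C.s (a+1, y))
    (hempty : ∀ e : ℕ, 2 ≤ e → e < d → ¬ C.s (a + (e : ℕ), y))
    (t : ℕ) (ht3 : 3 ≤ t) (htd : t + 2 ≤ d) :
    (C.s (a + (t:ℕ), y+1) ∨ C.s (a + (t:ℕ), y-1)) ∧
      (C.s (a + (t:ℕ), y+1) → ¬ C.s (a + (t:ℕ), y-1)) := by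
  constructor
  · rcases C.ex4 (a + (t:ℕ)) y with h | h | h | h
    · exfalso
      rw [← cst1 a t] at h
      exact hempty (t+1) (by omega) (by omega) h
    · exfalso
      rw [← cstp a t (by omega)] at h
      exact hempty (t-1) (by omega) (by omega) h
    · exact Or.inl h
    · exact Or.inr h
  · exact fun h => C.eu_ed h

/-- alternating block structure in the strip. -/
lemma MAIN (hd0 : C.s (a, y)) (hd1 : C.s (a+1, y))
    (hempty : ∀ e : ℕ, 2 ≤ e → e < d → ¬ C.s (a + (e : ℕ), y)) :
    ∀ i : ℕ, 2*i+6 ≤ d →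
    ((C.s (a + (2*i+3 : ℕ), y+1) ∧ C.s (a + (2*i+4 : ℕ), y+1)) ∨
     (C.s (a + (2*i+3 : ℕ), y-1) ∧ C.s (a + (2*i+4 : ℕ), y-1))) ∧
    (C.s (a + (2*i+3 : ℕ), y+1) ↔ (Even i ↔ C.s (a + (3 : ℕ), y+1))) := by
  intro i
  induction i with
  | zero =>
    intro hd6
    have hU := C.UD1 a y d hd0 hd1 hempty 3 (by omega) (by omega)
    have key : (C.s (a + (3:ℕ), y+1) ∧ C.s (a + (4:ℕ), y+1)) ∨
        (C.s (a + (3:ℕ), y-1) ∧ C.s (a + (4:ℕ), y-1)) := by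
      rcases hU.1 with h | h
      · left
        refine ⟨h, ?_⟩
        rcases C.partner h with h' | h'
        · rwa [← cst1 a 3] at h'
        · exfalso
          have e2 : a + (3:ℕ) - 1 = a + 2 := by push_cast; ring
          rw [e2] at h'
          exact C.nUR hd0 hd1 h'
      · right
        refine ⟨h, ?_⟩
        rcases C.partner h with h' | h'
        · rwa [← cst1 a 3] at h'
        · exfalso
          have e2 : a + (3:ℕ) - 1 = a + 2 := by push_cast; ring
          rw [e2] at h'
          exact C.nDR hd0 hd1 h'
    constructor
    · simpa using key
    · simp
  | succ i ih =>
    intro hd6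
    obtain ⟨hpair, hiff⟩ := ih (by omega)
    have hUD5 := C.UD1 a y d hd0 hd1 hempty (2*i+5) (by omega) (by omega)
    have hUD4 := C.UD1 a y d hd0 hd1 hempty (2*i+4) (by omega) (by omega)
    have hUD3 := C.UD1 a y d hd0 hd1 hempty (2*i+3) (by omega) (by omega)
    have e34 : a + (2*i+4 : ℕ) = a + (2*i+3 : ℕ) + 1 := by push_cast; ring
    have e56 : a + (2*i+6 : ℕ) = a + (2*i+5 : ℕ) + 1 := by push_cast; ring
    have heio : Even (i+1) ↔ ¬ Even i := Nat.even_add_one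
    have enew3 : 2*(i+1)+3 = 2*i+5 := by ring
    have enew4 : 2*(i+1)+4 = 2*i+6 := by ring
    rw [enew3, enew4]
    rcases hpair with ⟨h3, h4⟩ | ⟨h3, h4⟩
    · -- previous block is an up-domino
      have hnU5 : ¬ C.s (a + (2*i+5 : ℕ), y+1) := by
        have hh := C.nR2 (a := a + (2*i+3 : ℕ)) (y := y+1) h3 (by rwa [← e34])
        intro hc
        apply hh
        rw [show a + (2*i+3:ℕ) + 2 = a + (2*i+5 : ℕ) from by push_cast; ring]
        exact hc
      have hD5 : C.s (a + (2*i+5 : ℕ), y-1) := (hUD5.1).resolve_left hnU5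
      have hD6 : C.s (a + (2*i+6 : ℕ), y-1) := by
        rcases C.partner hD5 with h' | h'
        · rw [e56]; exact h'
        · exfalso
          have e : a + (2*i+5:ℕ) - 1 = a + (2*i+4:ℕ) := by push_cast; ring
          rw [e] at h'
          exact (hUD4.2 h4) h'
      refine ⟨Or.inr ⟨hD5, hD6⟩, ?_⟩
      have hprev : Even i ↔ C.s (a + (3:ℕ), y+1) := hiff.1 h3
      constructor
      · intro hc; exact absurd hc hnU5
      · intro hc
        exfalso
        by_cases hev : Even i
        · exact (heio.mp (hc.mpr (hprev.mp hev))) hev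
        · exact hev (hprev.mpr (hc.mp (heio.mpr hev)))
    · -- previous block is a down-domino
      have hnD5 : ¬ C.s (a + (2*i+5 : ℕ), y-1) := by
        have hh := C.nR2 (a := a + (2*i+3 : ℕ)) (y := y-1) h3 (by rwa [← e34])
        intro hc
        apply hh
        rw [show a + (2*i+3:ℕ) + 2 = a + (2*i+5 : ℕ) from by push_cast; ring]
        exact hc
      have hU5 : C.s (a + (2*i+5 : ℕ), y+1) := (hUD5.1).resolve_right hnD5
      have hU6 : C.s (a + (2*i+6 : ℕ), y+1) := by
        rcases C.partner hU5 with h' | h'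
        · rw [e56]; exact h'
        · exfalso
          have e : a + (2*i+5:ℕ) - 1 = a + (2*i+4:ℕ) := by push_cast; ring
          rw [e] at h'
          exact (hUD4.2 h') h4
      refine ⟨Or.inl ⟨hU5, hU6⟩, ?_⟩
      have hnU3 : ¬ C.s (a + (2*i+3:ℕ), y+1) := fun h => (hUD3.2 h) h3
      have hprev : ¬ (Even i ↔ C.s (a + (3:ℕ), y+1)) := fun hc => hnU3 (hiff.2 hc)
      constructor
      · intro _
        constructor
        · intro h
          by_contra hs
          exact hprev ⟨fun he => absurd he (heio.mp h), fun hs' => absurd hs' hs⟩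
        · intro hs
          apply heio.mpr
          intro hev
          exact hprev ⟨fun _ => hs, fun _ => hev⟩
      · intro _; exact hU5

end Strip

section StripMain
variable (C : Ctx m n) {a : ZMod m} {y : ZMod n} {d : ℕ}

lemma strip_main (hd0 : C.s (a, y)) (hd1 : C.s (a+1, y)) (hd2 : 2 ≤ d)
    (hempty : ∀ e : ℕ, 2 ≤ e → e < d → ¬ C.s (a + (e : ℕ), y))
    (hsd : C.s (a + (d:ℕ), y)) :
    d % 2 = 0 ∧ (d % 4 = 2 → ∃ y' : ZMod n,
      C.s (a + (2:ℕ), y') ∧ C.s (a + (3:ℕ), y') ∧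
      C.s (a + (d-2:ℕ), y') ∧ C.s (a + (d-1:ℕ), y')) := by
  have h2n : ¬ C.s (a + (2:ℕ), y) := by
    have := C.nR2 hd0 hd1
    rwa [show a + 2 = a + ((2:ℕ):ZMod m) from by push_cast; ring] at this
  have h3n : ¬ C.s (a + (3:ℕ), y) := by
    have := C.nR3 hd0 hd1
    rwa [show a + 3 = a + ((3:ℕ):ZMod m) from by push_cast; ring] at this
  have hd4 : 4 ≤ d := by
    rcases (by omega : d = 2 ∨ d = 3 ∨ 4 ≤ d) with h | h | h
    · exact absurd (h ▸ hsd) h2n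
    · exact absurd (h ▸ hsd) h3n
    · exact h
  -- the right domino
  have hr1 : C.s (a + (d:ℕ) + 1, y) := by
    rcases C.partner hsd with h' | h'
    · exact h'
    · exfalso
      rw [← cstp a d (by omega)] at h'
      exact hempty (d-1) (by omega) (by omega) h'
  -- abbreviations for right-domino halo facts we need
  have hnUL : ¬ C.s (a + (d-1:ℕ), y+1) := by
    have := C.nUL hsd hr1
    rwa [← cstp a d (by omega)] at this
  have hnDL : ¬ C.s (a + (d-1:ℕ), y-1) := by
    have := C.nDL hsd hr1
    rwa [← cstp a d (by omega)] at this
  have hnD0 : ¬ C.s (a + (d:ℕ), y-1) := C.nD0 hsd hr1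
  have hnU0 : ¬ C.s (a + (d:ℕ), y+1) := C.nU0 hsd hr1
  have hnDD0 : ¬ C.s (a + (d:ℕ), y-2) := C.nDD0 hsd hr1
  have hnUU0 : ¬ C.s (a + (d:ℕ), y+2) := C.nUU0 hsd hr1
  -- first block helper: from SU 3 get SU 4, from SD 3 get SD 4 (when 6 ≤ d we use MAIN;
  -- here only need the d=5 contradiction and descent-case base)
  -- Step 1: d is even
  have heven : d % 2 = 0 := by
    by_contra hodd
    have hodd' : d % 2 = 1 := by omega
    rcases (by omega : d = 5 ∨ 7 ≤ d) with h5 | h7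
    · -- d = 5
      subst h5
      have hUD3 := C.UD1 a y 5 hd0 hd1 hempty 3 (by omega) (by omega)
      rcases hUD3.1 with h | h
      · have h4 : C.s (a + (4:ℕ), y+1) := by
          rcases C.partner h with h' | h'
          · rwa [← cst1 a 3] at h'
          · exfalso
            rw [show a + (3:ℕ) - 1 = a + 2 from by push_cast; ring] at h'
            exact C.nUR hd0 hd1 h'
        exact hnUL (by rwa [show (5-1 : ℕ) = 4 from rfl])
      · have h4 : C.s (a + (4:ℕ), y-1) := by
          rcases C.partner h with h' | h'
          · rwa [← cst1 a 3] at h'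
          · exfalso
            rw [show a + (3:ℕ) - 1 = a + 2 from by push_cast; ring] at h'
            exact C.nDR hd0 hd1 h'
        exact hnDL (by rwa [show (5-1 : ℕ) = 4 from rfl])
    · -- d ≥ 7 odd
      set i := (d-7)/2 with hi
      have hieq : 2*i+3 = d-4 ∧ 2*i+4 = d-3 ∧ 2*i+6 ≤ d := by omega
      obtain ⟨hpair, -⟩ := C.MAIN a y d hd0 hd1 hempty i hieq.2.2
      rw [hieq.1, hieq.2.1] at hpair
      have hUDd2 := C.UD1 a y d hd0 hd1 hempty (d-2) (by omega) (by omega)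
      have hUDd3 := C.UD1 a y d hd0 hd1 hempty (d-3) (by omega) (by omega)
      have ed32 : a + (d-3:ℕ) + 1 = a + (d-2:ℕ) := by
        rw [show (d-3:ℕ) = (d-2)-1 from by omega, cstp a (d-2) (by omega)]; ring
      have ed21 : a + (d-2:ℕ) + 1 = a + (d-1:ℕ) := by
        rw [show (d-2:ℕ) = (d-1)-1 from by omega, cstp a (d-1) (by omega)]; ring
      have ed43 : a + (d-4:ℕ) + 1 = a + (d-3:ℕ) := by
        rw [show (d-4:ℕ) = (d-3)-1 from by omega, cstp a (d-3) (by omega)]; ring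
      have ed42 : a + (d-4:ℕ) + 2 = a + (d-2:ℕ) := by
        rw [show a + (d-4:ℕ) + 2 = a + (d-4:ℕ) + 1 + 1 from by ring, ed43, ed32]
      rcases hpair with ⟨h3, h4⟩ | ⟨h3, h4⟩
      · -- up-domino at d-4, d-3
        have hnU : ¬ C.s (a + (d-2:ℕ), y+1) := by
          have := C.nR2 (a := a + (d-4:ℕ)) (y := y+1) h3 (by rwa [ed43])
          rwa [ed42] at this
        have hD2 : C.s (a + (d-2:ℕ), y-1) := (hUDd2.1).resolve_left hnU
        rcases C.partner hD2 with h' | h'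
        · rw [ed21] at h'; exact hnDL h'
        · rw [show a + (d-2:ℕ) - 1 = a + (d-3:ℕ) from by rw [← ed32]; ring] at h'
          exact (hUDd3.2 h4) h'
      · -- down-domino at d-4, d-3
        have hnD : ¬ C.s (a + (d-2:ℕ), y-1) := by
          have := C.nR2 (a := a + (d-4:ℕ)) (y := y-1) h3 (by rwa [ed43])
          rwa [ed42] at this
        have hU2 : C.s (a + (d-2:ℕ), y+1) := (hUDd2.1).resolve_right hnD
        rcases C.partner hU2 with h' | h'
        · rw [ed21] at h'; exact hnUL h'
        · rw [show a + (d-2:ℕ) - 1 = a + (d-3:ℕ) from by rw [← ed32]; ring] at h'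
          exact (hUDd3.2 h') h4
  refine ⟨heven, ?_⟩
  -- Step 2: descent when d ≡ 2 (mod 4)
  intro hmod
  have hd6 : 6 ≤ d := by omega
  set i := (d-6)/2 with hi
  have hieq : 2*i+3 = d-3 ∧ 2*i+4 = d-2 ∧ 2*i+6 ≤ d := by omega
  have hievn : Even i := by rw [Nat.even_iff]; omega
  obtain ⟨hpair, hiff⟩ := C.MAIN a y d hd0 hd1 hempty i hieq.2.2
  rw [hieq.1, hieq.2.1] at hpair
  rw [hieq.1] at hiff
  have hUD3 := C.UD1 a y d hd0 hd1 hempty 3 (by omega) (by omega)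
  have hUDd2 := C.UD1 a y d hd0 hd1 hempty (d-2) (by omega) (by omega)
  have e23 : a + (2:ℕ) + 1 = a + (3:ℕ) := (cst1 a 2).symm
  have e12 : a + (2:ℕ) - 1 = a + 1 := by push_cast; ring
  have ed21 : a + (d-2:ℕ) + 1 = a + (d-1:ℕ) := by
    rw [show (d-2:ℕ) = (d-1)-1 from by omega, cstp a (d-1) (by omega)]; ring
  have ed1d : a + (d-1:ℕ) + 1 = a + (d:ℕ) := by
    rw [cstp a d (by omega)]; ring
  have ym : (y - 1) + 1 = y := by ring
  have ym2 : (y - 1) - 1 = y - 2 := by ring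
  have yp : (y + 1) - 1 = y := by ring
  have yp2 : (y + 1) + 1 = y + 2 := by ring
  rcases hpair with ⟨h3, h4⟩ | ⟨h3, h4⟩
  · -- last block up ⇒ first block up ⇒ descend into row y-2
    have hSU3 : C.s (a + (3:ℕ), y+1) := (hiff.1 h3).mp hievn
    refine ⟨y - 2, ?_, ?_, ?_, ?_⟩
    all_goals skip
    case _ =>
      -- C.s (a+2, y-2)
      rcases C.ex4 (a + (2:ℕ)) (y-1) with h | h | h | h
      · rw [e23] at h; exact absurd h (fun hc => (hUD3.2 hSU3) hc)
      · rw [e12] at h; exact absurd h (C.nD1 hd0 hd1)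
      · rw [ym] at h; exact absurd h (hempty 2 (by omega) (by omega))
      · rwa [ym2] at h
    case _ =>
      -- C.s (a+3, y-2)
      have hA : C.s (a + (2:ℕ), y-2) := by
        rcases C.ex4 (a + (2:ℕ)) (y-1) with h | h | h | h
        · rw [e23] at h; exact absurd h (fun hc => (hUD3.2 hSU3) hc)
        · rw [e12] at h; exact absurd h (C.nD1 hd0 hd1)
        · rw [ym] at h; exact absurd h (hempty 2 (by omega) (by omega))
        · rwa [ym2] at h
      rcases C.partner hA with h' | h'
      · rwa [e23] at h'
      · exfalso
        rw [e12] at h'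
        exact C.nDD1 hd0 hd1 h'
    case _ =>
      -- C.s (a+(d-2), y-2)
      have hB : C.s (a + (d-1:ℕ), y-2) := by
        rcases C.ex4 (a + (d-1:ℕ)) (y-1) with h | h | h | h
        · rw [ed1d] at h; exact absurd h hnD0
        · rw [show a + (d-1:ℕ) - 1 = a + (d-2:ℕ) from by rw [← ed21]; ring] at h
          exact absurd h (fun hc => (hUDd2.2 h4) hc)
        · rw [ym] at h; exact absurd h (hempty (d-1) (by omega) (by omega))
        · rwa [ym2] at h
      rcases C.partner hB with h' | h'
      · exfalso; rw [ed1d] at h'; exact hnDD0 h'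
      · rwa [show a + (d-1:ℕ) - 1 = a + (d-2:ℕ) from by rw [← ed21]; ring] at h'
    case _ =>
      -- C.s (a+(d-1), y-2)
      rcases C.ex4 (a + (d-1:ℕ)) (y-1) with h | h | h | h
      · rw [ed1d] at h; exact absurd h hnD0
      · rw [show a + (d-1:ℕ) - 1 = a + (d-2:ℕ) from by rw [← ed21]; ring] at h
        exact absurd h (fun hc => (hUDd2.2 h4) hc)
      · rw [ym] at h; exact absurd h (hempty (d-1) (by omega) (by omega))
      · rwa [ym2] at h
  · -- last block down ⇒ first block down ⇒ descend into row y+2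
    have hnSU3 : ¬ C.s (a + (3:ℕ), y+1) := by
      intro hc
      have : C.s (a + (d-3:ℕ), y+1) := hiff.2 (iff_of_true hievn hc)
      exact (hUD3.2 hc) (by exact (fun h => absurd this (fun _ => (C.eu_ed this) h3)) h3)
    refine ⟨y + 2, ?_, ?_, ?_, ?_⟩
    all_goals skip
    case _ =>
      rcases C.ex4 (a + (2:ℕ)) (y+1) with h | h | h | h
      · rw [e23] at h; exact absurd h hnSU3
      · rw [e12] at h; exact absurd h (C.nU1 hd0 hd1)
      · rwa [yp2] at h
      · rw [yp] at h; exact absurd h (hempty 2 (by omega) (by omega))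
    case _ =>
      have hA : C.s (a + (2:ℕ), y+2) := by
        rcases C.ex4 (a + (2:ℕ)) (y+1) with h | h | h | h
        · rw [e23] at h; exact absurd h hnSU3
        · rw [e12] at h; exact absurd h (C.nU1 hd0 hd1)
        · rwa [yp2] at h
        · rw [yp] at h; exact absurd h (hempty 2 (by omega) (by omega))
      rcases C.partner hA with h' | h'
      · rwa [e23] at h'
      · exfalso
        rw [e12] at h'
        exact C.nUU1 hd0 hd1 h'
    case _ =>
      have hB : C.s (a + (d-1:ℕ), y+2) := by
        rcases C.ex4 (a + (d-1:ℕ)) (y+1) with h | h | h | h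
        · rw [ed1d] at h; exact absurd h hnU0
        · rw [show a + (d-1:ℕ) - 1 = a + (d-2:ℕ) from by rw [← ed21]; ring] at h
          exact absurd h (fun hc => (hUDd2.2 hc) h4)
        · rwa [yp2] at h
        · rw [yp] at h; exact absurd h (hempty (d-1) (by omega) (by omega))
      rcases C.partner hB with h' | h'
      · exfalso; rw [ed1d] at h'; exact hnUU0 h'
      · rwa [show a + (d-1:ℕ) - 1 = a + (d-2:ℕ) from by rw [← ed21]; ring] at h'
    case _ =>
      rcases C.ex4 (a + (d-1:ℕ)) (y+1) with h | h | h | h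
      · rw [ed1d] at h; exact absurd h hnU0
      · rw [show a + (d-1:ℕ) - 1 = a + (d-2:ℕ) from by rw [← ed21]; ring] at h
        exact absurd h (fun hc => (hUDd2.2 hc) h4)
      · rwa [yp2] at h
      · rw [yp] at h; exact absurd h (hempty (d-1) (by omega) (by omega))

end StripMain

section Gaps
variable (C : Ctx m n)

/-- every "gap" between horizontally consecutive dominoes is divisible by 4. -/
lemma allgood : ∀ d : ℕ, 2 ≤ d → ∀ (a : ZMod m) (y : ZMod n), C.s (a,y) → C.s (a+1,y) →
    (∀ e, 2 ≤ e → e < d → ¬ C.s (a + (e:ℕ), y)) → C.s (a + (d:ℕ), y) → d % 4 = 0 := by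
  intro d
  induction d using Nat.strong_induction_on with
  | _ d IH =>
    classical
    intro hd2 a y h0 h1 hempty hsd
    obtain ⟨heven, hdesc⟩ := C.strip_main h0 h1 hd2 hempty hsd
    rcases (by omega : d % 4 = 0 ∨ d % 4 = 2) with h4 | h4
    · exact h4
    · exfalso
      -- inner walk
      have W : ∀ D : ℕ, D < d → ∀ (p : ZMod m) (y' : ZMod n), C.s (p, y') → C.s (p+1, y') →
          C.s (p + (D:ℕ), y') → C.s (p + (D:ℕ) + 1, y') → D % 4 = 0 := by
        intro D
        induction D using Nat.strong_induction_on with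
        | _ D WIH =>
          intro hDd p y' hp0 hp1 hq0 hq1
          rcases (by omega : D = 0 ∨ D = 1 ∨ D = 2 ∨ D = 3 ∨ 4 ≤ D) with h|h|h|h|h
          · omega
          · exfalso
            subst h
            have h2 : C.s (p + 1 + 1, y') := by
              rwa [show p + ((1:ℕ):ZMod m) + 1 = p + 1 + 1 from by push_cast; ring] at hq1
            exact C.er_el (x := p+1) h2 (by rwa [show p + 1 - 1 = p from by ring])
          · exfalso
            subst h
            exact C.nR2 hp0 hp1 (by rwa [show p + ((2:ℕ):ZMod m) = p + 2 from by push_cast; ring] at hq0)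
          · exfalso
            subst h
            exact C.nR3 hp0 hp1 (by rwa [show p + ((3:ℕ):ZMod m) = p + 3 from by push_cast; ring] at hq0)
          · -- D ≥ 4 : take the least gap g
            have hex : ∃ e, 2 ≤ e ∧ C.s (p + (e:ℕ), y') := ⟨D, by omega, hq0⟩
            have hspec := Nat.find_spec hex
            have hmin := fun e => Nat.find_min hex (m := e)
            have hgle' := Nat.find_min' hex (m := D) ⟨by omega, hq0⟩
            set g := Nat.find hex with hg
            obtain ⟨hg2, hgs⟩ := hspec
            have hgle : g ≤ D := hgle'
            have hgmin : ∀ e, 2 ≤ e → e < g → ¬ C.s (p + (e:ℕ), y') := by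
              intro e he2 heg hc
              exact hmin e heg ⟨he2, hc⟩
            have hg4 : 4 ≤ g := by
              rcases (by omega : g = 2 ∨ g = 3 ∨ 4 ≤ g) with h'|h'|h'
              · exfalso
                exact C.nR2 hp0 hp1 (by rw [← show p + ((2:ℕ):ZMod m) = p + 2 from by push_cast; ring, ← h']; exact hgs)
              · exfalso
                exact C.nR3 hp0 hp1 (by rw [← show p + ((3:ℕ):ZMod m) = p + 3 from by push_cast; ring, ← h']; exact hgs)
              · exact h'
            have hgs1 : C.s (p + (g:ℕ) + 1, y') := by
              rcases C.partner hgs with h' | h'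
              · exact h'
              · exfalso
                rw [← cstp p g (by omega)] at h'
                exact hgmin (g-1) (by omega) (by omega) h'
            have hGmod : g % 4 = 0 := IH g (by omega) (by omega) p y' hp0 hp1 hgmin hgs
            have hrest : (D - g) % 4 = 0 := by
              rcases (by omega : g = D ∨ g < D) with h' | h'
              · simp [h']
              · refine WIH (D - g) (by omega) (by omega) (p + (g:ℕ)) y' hgs hgs1 ?_ ?_
                · rwa [show p + (g:ℕ) + ((D-g:ℕ):ZMod m) = p + (D:ℕ) from by
                    push_cast [Nat.cast_sub (le_of_lt h')]; ring]
                · rwa [show p + (g:ℕ) + ((D-g:ℕ):ZMod m) + 1 = p + (D:ℕ) + 1 from by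
                    push_cast [Nat.cast_sub (le_of_lt h')]; ring]
            omega
      obtain ⟨y', hA, hB, hC', hD'⟩ := hdesc h4
      have hdne2 : d ≠ 2 := by
        intro h
        exact C.nR2 h0 h1 (by
          rw [show a + 2 = a + ((2:ℕ):ZMod m) from by push_cast; ring]
          exact h ▸ hsd)
      have hd6 : 6 ≤ d := by omega
      have hW := W (d-4) (by omega) (a + ((2:ℕ):ZMod m)) y' hA (by
          rwa [show a + ((2:ℕ):ZMod m) + 1 = a + ((3:ℕ):ZMod m) from by push_cast; ring]) (by
          rwa [show a + ((2:ℕ):ZMod m) + ((d-4:ℕ):ZMod m) = a + ((d-2:ℕ):ZMod m) from by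
            push_cast [Nat.cast_sub (by omega : 4 ≤ d), Nat.cast_sub (by omega : 2 ≤ d)]; ring]) (by
          rwa [show a + ((2:ℕ):ZMod m) + ((d-4:ℕ):ZMod m) + 1 = a + ((d-1:ℕ):ZMod m) from by
            push_cast [Nat.cast_sub (by omega : 4 ≤ d), Nat.cast_sub (by omega : 1 ≤ d)]; ring])
      omega

/-- two dominoes in the same row are 0 mod 4 apart (as a natural-number offset). -/
lemma walkG : ∀ D : ℕ, ∀ (p : ZMod m) (y' : ZMod n), C.s (p, y') → C.s (p+1, y') →
    C.s (p + (D:ℕ), y') → C.s (p + (D:ℕ) + 1, y') → D % 4 = 0 := by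
  intro D
  induction D using Nat.strong_induction_on with
  | _ D WIH =>
    classical
    intro p y' hp0 hp1 hq0 hq1
    rcases (by omega : D = 0 ∨ D = 1 ∨ D = 2 ∨ D = 3 ∨ 4 ≤ D) with h|h|h|h|h
    · omega
    · exfalso
      subst h
      have h2 : C.s (p + 1 + 1, y') := by
        rwa [show p + ((1:ℕ):ZMod m) + 1 = p + 1 + 1 from by push_cast; ring] at hq1
      exact C.er_el (x := p+1) h2 (by rwa [show p + 1 - 1 = p from by ring])
    · exfalso
      subst h
      exact C.nR2 hp0 hp1 (by rwa [show p + ((2:ℕ):ZMod m) = p + 2 from by push_cast; ring] at hq0)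
    · exfalso
      subst h
      exact C.nR3 hp0 hp1 (by rwa [show p + ((3:ℕ):ZMod m) = p + 3 from by push_cast; ring] at hq0)
    · have hex : ∃ e, 2 ≤ e ∧ C.s (p + (e:ℕ), y') := ⟨D, by omega, hq0⟩
      have hspec := Nat.find_spec hex
      have hmin := fun e => Nat.find_min hex (m := e)
      have hgle' := Nat.find_min' hex (m := D) ⟨by omega, hq0⟩
      set g := Nat.find hex with hg
      obtain ⟨hg2, hgs⟩ := hspec
      have hgle : g ≤ D := hgle'
      have hgmin : ∀ e, 2 ≤ e → e < g → ¬ C.s (p + (e:ℕ), y') := by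
        intro e he2 heg hc
        exact hmin e heg ⟨he2, hc⟩
      have hg4 : 4 ≤ g := by
        rcases (by omega : g = 2 ∨ g = 3 ∨ 4 ≤ g) with h'|h'|h'
        · exfalso
          exact C.nR2 hp0 hp1 (by rw [← show p + ((2:ℕ):ZMod m) = p + 2 from by push_cast; ring, ← h']; exact hgs)
        · exfalso
          exact C.nR3 hp0 hp1 (by rw [← show p + ((3:ℕ):ZMod m) = p + 3 from by push_cast; ring, ← h']; exact hgs)
        · exact h'
      have hgs1 : C.s (p + (g:ℕ) + 1, y') := by
        rcases C.partner hgs with h' | h'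
        · exact h'
        · exfalso
          rw [← cstp p g (by omega)] at h'
          exact hgmin (g-1) (by omega) (by omega) h'
      have hGmod : g % 4 = 0 := C.allgood g (by omega) p y' hp0 hp1 hgmin hgs
      have hrest : (D - g) % 4 = 0 := by
        rcases (by omega : g = D ∨ g < D) with h' | h'
        · simp [h']
        · refine WIH (D - g) (by omega) (p + (g:ℕ)) y' hgs hgs1 ?_ ?_
          · rwa [show p + (g:ℕ) + ((D-g:ℕ):ZMod m) = p + (D:ℕ) from by
              push_cast [Nat.cast_sub (le_of_lt h')]; ring]
          · rwa [show p + (g:ℕ) + ((D-g:ℕ):ZMod m) + 1 = p + (D:ℕ) + 1 from by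
              push_cast [Nat.cast_sub (le_of_lt h')]; ring]
      omega

end Gaps

section Vertical
variable (C : Ctx m n)

/-- a domino propagates two rows up, shifted horizontally by ±2. -/
lemma stepL {a : ZMod m} {y : ZMod n} (h0 : C.s (a, y)) (h1 : C.s (a+1, y)) :
    (C.s (a+2, y+2) ∧ C.s (a+3, y+2)) ∨ (C.s (a-2, y+2) ∧ C.s (a-1, y+2)) := by
  have z1 : ¬ C.s (a, y+1) := C.nU0 h0 h1
  have z2 : ¬ C.s (a+1, y+1) := C.nU1 h0 h1
  have z3 : ¬ C.s (a-1, y+1) := C.nUL h0 h1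
  have z5 : ¬ C.s (a+2, y+1) := C.nUR h0 h1
  have z4 : ¬ C.s (a, y+2) := C.nUU0 h0 h1
  have z6 : ¬ C.s (a+1, y+2) := C.nUU1 h0 h1
  have z7 : ¬ C.s (a-1, y) := C.nL1 h0 h1
  have ey : (y+2) - 1 = y + 1 := by ring
  have ey2 : (y+2) + 1 = y + 3 := by ring
  rcases C.ex4 a (y+2) with h | h | h | h
  · exact absurd h z6
  · -- β : s(a-1, y+2)
    rcases C.partner h with h' | h'
    · rw [show a - 1 + 1 = a from by ring] at h'
      exact absurd h' z4
    · right
      exact ⟨by rwa [show a - 1 - 1 = a - 2 from by ring] at h', h⟩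
  · -- α : s(a, y+3)
    rw [ey2] at h
    rcases C.ex4 (a+1) (y+2) with h' | h' | h' | h'
    · -- δ : s(a+2, y+2)
      rw [show a + 1 + 1 = a + 2 from by ring] at h'
      rcases C.partner h' with h'' | h''
      · left
        exact ⟨h', by rwa [show a + 2 + 1 = a + 3 from by ring] at h''⟩
      · rw [show a + 2 - 1 = a + 1 from by ring] at h''
        exact absurd h'' z6
    · rw [show a + 1 - 1 = a from by ring] at h'
      exact absurd h' z4
    · -- γ : s(a+1, y+3)
      exfalso
      rw [ey2] at h'
      have hnb : ¬ C.s (a-1, y+2) := by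
        have := C.eu_el (x := a) (y := y+2) (by rwa [← ey2] at h)
        exact this
      have z8 : ¬ C.s (a-1, y+3) := C.er_el (x := a) (y := y+3) h'
      have hε : C.s (a-2, y+1) := by
        rcases C.ex4 (a-1) (y+1) with hh | hh | hh | hh
        · rw [show a - 1 + 1 = a from by ring] at hh; exact absurd hh z1
        · rwa [show a - 1 - 1 = a - 2 from by ring] at hh
        · rw [show (y+1) + 1 = y + 2 from by ring] at hh; exact absurd hh hnb
        · rw [show (y+1) - 1 = y from by ring] at hh; exact absurd hh z7
      have hζ : C.s (a-2, y+2) := by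
        rcases C.ex4 (a-1) (y+2) with hh | hh | hh | hh
        · rw [show a - 1 + 1 = a from by ring] at hh; exact absurd hh z4
        · rwa [show a - 1 - 1 = a - 2 from by ring] at hh
        · rw [ey2] at hh; exact absurd hh z8
        · rw [ey] at hh; exact absurd hh z3
      exact (C.hV hε) (by rwa [show (y+1)+1 = y+2 from by ring])
    · rw [ey] at h'
      exact absurd h' z2
  · rw [ey] at h
    exact absurd h z1

/-- iterate the propagation upwards. -/
lemma chain {a₀ : ZMod m} {y₀ : ZMod n} (h0 : C.s (a₀, y₀)) (h1 : C.s (a₀+1, y₀)) :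
    ∀ j : ℕ, ∃ p w : ZMod m,
      (C.s (p, y₀ + ((2*j : ℕ) : ZMod n)) ∧ C.s (p+1, y₀ + ((2*j : ℕ) : ZMod n))) ∧
      p = a₀ + ((2*j : ℕ) : ZMod m) + 4*w := by
  intro j
  induction j with
  | zero =>
    exact ⟨a₀, 0, by simpa using ⟨h0, h1⟩, by simp⟩
  | succ j ih =>
    obtain ⟨p, w, ⟨hp0, hp1⟩, hpw⟩ := ih
    have erow : (y₀ + ((2*j : ℕ) : ZMod n)) + 2 = y₀ + ((2*(j+1) : ℕ) : ZMod n) := by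
      push_cast; ring
    rcases C.stepL hp0 hp1 with ⟨hq0, hq1⟩ | ⟨hq0, hq1⟩
    · refine ⟨p + 2, w, ⟨by rwa [erow] at hq0, ?_⟩, ?_⟩
      · rw [show p + 2 + 1 = p + 3 from by ring]
        rwa [erow] at hq1
      · rw [hpw]; push_cast; ring
    · refine ⟨p - 2, w - 1, ⟨by rwa [erow] at hq0, ?_⟩, ?_⟩
      · rw [show p - 2 + 1 = p - 1 from by ring]
        rwa [erow] at hq1
      · rw [hpw]; push_cast; ring

/-- the main engine: a horizontal parallel TPC forces 4 ∣ m and 4 ∣ n. -/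
theorem engine_main (C : Ctx m n) : 4 ∣ m ∧ 4 ∣ n := by
  haveI := C.nzm
  haveI := C.nzn
  have h4m : 4 ∣ m := C.four_dvd_m
  have h2n : 2 ∣ n := C.two_dvd_n
  refine ⟨h4m, ?_⟩
  -- find an initial domino
  obtain ⟨b, c, hb0, hb1⟩ : ∃ (b : ZMod m) (c : ZMod n), C.s (b, c) ∧ C.s (b+1, c) := by
    have mk : ∀ (x : ZMod m) (y' : ZMod n), C.s (x, y') →
        ∃ (b : ZMod m) (c : ZMod n), C.s (b, c) ∧ C.s (b+1, c) := by
      intro x y' h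
      rcases C.partner h with h' | h'
      · exact ⟨x, y', h, h'⟩
      · exact ⟨x - 1, y', h', by rw [show x - 1 + 1 = x from by ring]; exact h⟩
    rcases C.ex4 0 0 with h | h | h | h
    · exact mk _ _ h
    · exact mk _ _ h
    · exact mk _ _ h
    · exact mk _ _ h
  obtain ⟨p, w, ⟨hp0, hp1⟩, hpw⟩ := C.chain hb0 hb1 (n / 2)
  have hrow : ((2 * (n/2) : ℕ) : ZMod n) = 0 := by
    rw [Nat.mul_div_cancel' h2n]
    exact ZMod.natCast_self n
  rw [hrow, add_zero] at hp0 hp1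
  -- natural-number distance from b to p
  set D := (p - b).val with hD
  have hcast : ((D : ℕ) : ZMod m) = p - b := ZMod.natCast_rightInverse (p - b)
  have hq0 : C.s (b + (D : ℕ), c) := by rw [hcast, show b + (p - b) = p from by ring]; exact hp0
  have hq1 : C.s (b + (D : ℕ) + 1, c) := by rw [hcast, show b + (p - b) + 1 = p + 1 from by ring]; exact hp1
  have hD4 : D % 4 = 0 := C.walkG D b c hb0 hb1 hq0 hq1
  -- push through the cast to ZMod 4
  have φeq : ((n : ℕ) : ZMod 4) = 0 := by
    let φ : ZMod m →+* ZMod 4 := ZMod.castHom h4m (ZMod 4)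
    have key : p - b = ((n : ℕ) : ZMod m) + 4 * w := by
      rw [hpw, Nat.mul_div_cancel' h2n]; ring
    have e1 : φ (p - b) = ((D : ℕ) : ZMod 4) := by rw [← hcast, map_natCast]
    have e2 : φ (((n : ℕ) : ZMod m) + 4 * w) = ((n : ℕ) : ZMod 4) + 4 * φ w := by
      rw [map_add, map_natCast, map_mul, map_ofNat]
    have e3 : ((D : ℕ) : ZMod 4) = 0 := by
      rw [ZMod.natCast_eq_zero_iff]
      omega
    have := congrArg φ key
    rw [e1, e2, e3] at this
    have h40 : (4 : ZMod 4) = 0 := by decide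
    rw [h40] at this
    simpa using this.symm
  rwa [ZMod.natCast_eq_zero_iff] at φeq

end Vertical

end Ctx

lemma torusAdj_swap {m n : ℕ} {u v : ZMod m × ZMod n} (h : torusAdj u v) :
    torusAdj (u.2, u.1) (v.2, v.1) := by
  rcases h with ⟨h1, h2⟩ | ⟨h1, h2⟩
  · exact Or.inr ⟨h1, h2⟩
  · exact Or.inl ⟨h1, h2⟩

theorem nec {m n : ℕ} (hm : 3 ≤ m) (hn : 3 ≤ n) {S : Set (ZMod m × ZMod n)}
    (hS : IsParallelTPC S) : 4 ∣ m ∧ 4 ∣ n := by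
  classical
  obtain ⟨⟨tpc1, tpc2⟩, hpar⟩ := hS
  have h1 : ∀ v, ∃! u, (u ∈ S) ∧ torusAdj u v := by
    intro v
    by_cases hv : v ∈ S
    · exact tpc2 v hv
    · exact tpc1 v hv
  rcases hpar with hp | hp
  · -- all edges vertical : transpose the torus
    have C : Ctx n m := {
      s := fun q => (q.2, q.1) ∈ S
      hm := hn
      hn := hm
      h1 := by
        intro v'
        obtain ⟨u, ⟨hu, hadj⟩, huniq⟩ := h1 (v'.2, v'.1)
        refine ⟨(u.2, u.1), ⟨hu, ?_⟩, ?_⟩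
        · exact torusAdj_swap hadj
        · intro w' ⟨hw', hadj'⟩
          have := huniq (w'.2, w'.1) ⟨hw', torusAdj_swap hadj'⟩
          have e1 : w'.2 = u.1 := congrArg Prod.fst this
          have e2 : w'.1 = u.2 := congrArg Prod.snd this
          exact Prod.ext e2 e1
      hpar := by
        intro u' v' hu' hv' hadj'
        exact hp (u'.2, u'.1) hu' (v'.2, v'.1) hv' (torusAdj_swap hadj')
    }
    obtain ⟨d1, d2⟩ := C.engine_main
    exact ⟨d2, d1⟩
  · -- all edges horizontal
    have C : Ctx m n := {
      s := fun q => q ∈ S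
      hm := hm
      hn := hn
      h1 := h1
      hpar := fun u v hu hv hadj => hp u hu v hv hadj
    }
    exact C.engine_main

end Engine



/-- C_m × C_n contains a parallel total perfect code iff 4 ∣ m and 4 ∣ n. -/
theorem parallelTPC_iff_four_dvd (m n : ℕ) (hm : 3 ≤ m) (hn : 3 ≤ n) :
    (∃ S : Set (ZMod m × ZMod n), IsParallelTPC S) ↔ (4 ∣ m ∧ 4 ∣ n) := by
  constructor
  · rintro ⟨S, hS⟩
    exact Engine.nec hm hn hS
  · rintro ⟨h4m, h4n⟩
    exact TPCAux.suff h4m h4n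
end

section
/- The toroidal graph C_m × C_n admits a 1-perfect code if and only if both m and n are divisible by 5; in particular C_5 × C_5 has a 1-perfect code of cardinality 5, namely the image of the sublattice ⟨(1,2),(2,-1)⟩ under reduction mod 5. -/
/-- 1-perfect code: the closed radius-1 balls around the points of `S` partition the
vertex set, i.e. every vertex is in the closed neighborhood of exactly one point of `S`. -/
def IsOnePC {m n : ℕ} (S : Set (ZMod m × ZMod n)) : Prop :=
  ∀ v : ZMod m × ZMod n, ∃! u, u ∈ S ∧ (u = v ∨ torusAdj u v)

/-- The image in C_5 × C_5 of the sublattice ⟨(1,2),(2,-1)⟩ of ℤ² under reduction mod 5. -/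
def S5 : Set (ZMod 5 × ZMod 5) :=
  {p | ∃ a b : ℤ, p = (((a * 1 + b * 2 : ℤ) : ZMod 5), ((a * 2 + b * (-1) : ℤ) : ZMod 5))}

lemma covers_iff {m n : ℕ} (u v : ZMod m × ZMod n) :
    (u = v ∨ torusAdj u v) ↔
      (u = v + (0, 0) ∨ u = v + (0, 1) ∨ u = v + (0, -1) ∨ u = v + (1, 0) ∨ u = v + (-1, 0)) := by
  obtain ⟨u1, u2⟩ := u
  obtain ⟨v1, v2⟩ := v
  simp [torusAdj, Prod.ext_iff, sub_eq_add_neg]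
  tauto

def linf {m n : ℕ} (hm : 5 ∣ m) (hn : 5 ∣ n) (p : ZMod m × ZMod n) : ZMod 5 :=
  ZMod.castHom hm (ZMod 5) p.1 + 2 * ZMod.castHom hn (ZMod 5) p.2

lemma linf_add {m n : ℕ} (hm : 5 ∣ m) (hn : 5 ∣ n) (p q : ZMod m × ZMod n) :
    linf hm hn (p + q) = linf hm hn p + linf hm hn q := by
  simp only [linf, Prod.fst_add, Prod.snd_add, map_add]; ring

lemma linf00 {m n : ℕ} (hm : 5 ∣ m) (hn : 5 ∣ n) : linf hm hn (0, 0) = 0 := by simp [linf]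
lemma linf01 {m n : ℕ} (hm : 5 ∣ m) (hn : 5 ∣ n) : linf hm hn (0, 1) = 2 := by simp only [linf, map_zero, map_one]; norm_num
lemma linf0m1 {m n : ℕ} (hm : 5 ∣ m) (hn : 5 ∣ n) : linf hm hn (0, -1) = -2 := by simp only [linf, map_zero, map_neg, map_one]; norm_num
lemma linf10 {m n : ℕ} (hm : 5 ∣ m) (hn : 5 ∣ n) : linf hm hn (1, 0) = 1 := by simp only [linf, map_zero, map_one]; norm_num
lemma linfm10 {m n : ℕ} (hm : 5 ∣ m) (hn : 5 ∣ n) : linf hm hn (-1, 0) = -1 := by simp only [linf, map_zero, map_neg, map_one]; norm_num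

lemma isOnePC_linear {m n : ℕ} (hm : 5 ∣ m) (hn : 5 ∣ n) :
    IsOnePC {p : ZMod m × ZMod n | linf hm hn p = 0} := by
  intro v
  have huniq : ∀ u₁ u₂ : ZMod m × ZMod n,
      (linf hm hn u₁ = 0 ∧ (u₁ = v ∨ torusAdj u₁ v)) →
      (linf hm hn u₂ = 0 ∧ (u₂ = v ∨ torusAdj u₂ v)) → u₁ = u₂ := by
    intro u₁ u₂ ⟨h1, hc1⟩ ⟨h2, hc2⟩
    rw [covers_iff] at hc1 hc2
    rcases hc1 with rfl | rfl | rfl | rfl | rfl <;>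
      rcases hc2 with rfl | rfl | rfl | rfl | rfl <;>
      simp only [linf_add, linf00, linf01, linf0m1, linf10, linfm10] at h1 h2 <;>
      first
        | rfl
        | (exfalso; exact absurd (add_left_cancel (h1.trans h2.symm)) (by decide))
  have h5 : ∀ r : ZMod 5, r = 0 ∨ r = 1 ∨ r = 2 ∨ r = 3 ∨ r = 4 := by decide
  have hw : ∃ u : ZMod m × ZMod n, linf hm hn u = 0 ∧ (u = v ∨ torusAdj u v) := by
    rcases h5 (linf hm hn v) with h | h | h | h | h
    · exact ⟨v + (0, 0), by rw [linf_add, linf00, h]; decide, (covers_iff _ _).mpr (.inl rfl)⟩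
    · exact ⟨v + (-1, 0), by rw [linf_add, linfm10, h]; decide,
        (covers_iff _ _).mpr (.inr (.inr (.inr (.inr rfl))))⟩
    · exact ⟨v + (0, -1), by rw [linf_add, linf0m1, h]; decide,
        (covers_iff _ _).mpr (.inr (.inr (.inl rfl)))⟩
    · exact ⟨v + (0, 1), by rw [linf_add, linf01, h]; decide,
        (covers_iff _ _).mpr (.inr (.inl rfl))⟩
    · exact ⟨v + (1, 0), by rw [linf_add, linf10, h]; decide,
        (covers_iff _ _).mpr (.inr (.inr (.inr (.inl rfl))))⟩
  obtain ⟨u, hu⟩ := hw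
  exact ⟨u, hu, fun y hy => huniq y u hy hu⟩

open scoped Classical

noncomputable def rowc {m n : ℕ} [NeZero n] (S : Set (ZMod m × ZMod n)) (a : ZMod m) : ℕ :=
  (Finset.univ.filter (fun b : ZMod n => (a, b) ∈ S)).card

lemma five_dvd_of_onePC {m n : ℕ} (hm : 3 ≤ m) (hn : 3 ≤ n)
    {S : Set (ZMod m × ZMod n)} (h : IsOnePC S) : 5 ∣ n := by
  haveI : NeZero m := ⟨by omega⟩
  haveI : NeZero n := ⟨by omega⟩
  have q1n : (1 : ZMod n) ≠ 0 := by
    intro hh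
    have h2 := (CharP.cast_eq_zero_iff (ZMod n) n 1).mp (by exact_mod_cast hh)
    have := Nat.le_of_dvd one_pos h2
    omega
  have q2n : (2 : ZMod n) ≠ 0 := by
    intro hh
    have h2 := (CharP.cast_eq_zero_iff (ZMod n) n 2).mp (by exact_mod_cast hh)
    have := Nat.le_of_dvd two_pos h2
    omega
  have q1m : (1 : ZMod m) ≠ 0 := by
    intro hh
    have h2 := (CharP.cast_eq_zero_iff (ZMod m) m 1).mp (by exact_mod_cast hh)
    have := Nat.le_of_dvd one_pos h2
    omega
  have q2m : (2 : ZMod m) ≠ 0 := by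
    intro hh
    have h2 := (CharP.cast_eq_zero_iff (ZMod m) m 2).mp (by exact_mod_cast hh)
    have := Nat.le_of_dvd two_pos h2
    omega
  have r1n : (0 : ZMod n) ≠ 1 := q1n.symm
  have r2n : (-1 : ZMod n) ≠ 0 := fun hh => q1n (by linear_combination -hh)
  have r3n : (0 : ZMod n) ≠ -1 := r2n.symm
  have r4n : (1 : ZMod n) ≠ -1 := fun hh => q2n (by linear_combination hh)
  have r5n : (-1 : ZMod n) ≠ 1 := r4n.symm
  have r1m : (0 : ZMod m) ≠ 1 := q1m.symm
  have r2m : (-1 : ZMod m) ≠ 0 := fun hh => q1m (by linear_combination -hh)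
  have r3m : (0 : ZMod m) ≠ -1 := r2m.symm
  have r4m : (1 : ZMod m) ≠ -1 := fun hh => q2m (by linear_combination hh)
  have r5m : (-1 : ZMod m) ≠ 1 := r4m.symm
  have cov : ∀ δ : ZMod m × ZMod n,
      (δ = (0,0) ∨ δ = (0,1) ∨ δ = (0,-1) ∨ δ = (1,0) ∨ δ = (-1,0)) →
      ∀ v, ((v + δ = v ∨ torusAdj (v + δ) v)) := by
    intro δ hd v
    rw [covers_iff]
    rcases hd with rfl | rfl | rfl | rfl | rfl
    exacts [Or.inl rfl, Or.inr (Or.inl rfl), Or.inr (Or.inr (Or.inl rfl)),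
      Or.inr (Or.inr (Or.inr (Or.inl rfl))), Or.inr (Or.inr (Or.inr (Or.inr rfl)))]
  have hexcl : ∀ (v δ₁ δ₂ : ZMod m × ZMod n),
      (δ₁ = (0,0) ∨ δ₁ = (0,1) ∨ δ₁ = (0,-1) ∨ δ₁ = (1,0) ∨ δ₁ = (-1,0)) →
      (δ₂ = (0,0) ∨ δ₂ = (0,1) ∨ δ₂ = (0,-1) ∨ δ₂ = (1,0) ∨ δ₂ = (-1,0)) →
      v + δ₁ ∈ S → v + δ₂ ∈ S → δ₁ = δ₂ := by
    intro v δ₁ δ₂ hd1 hd2 h1 h2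
    obtain ⟨u, -, huniq⟩ := h v
    have e1 : v + δ₁ = u := huniq _ ⟨h1, cov δ₁ hd1 v⟩
    have e2 : v + δ₂ = u := huniq _ ⟨h2, cov δ₂ hd2 v⟩
    exact add_left_cancel (e1.trans e2.symm)
  have hex : ∀ v : ZMod m × ZMod n, ∃ δ : ZMod m × ZMod n,
      (δ = (0,0) ∨ δ = (0,1) ∨ δ = (0,-1) ∨ δ = (1,0) ∨ δ = (-1,0)) ∧ v + δ ∈ S := by
    intro v
    obtain ⟨u, ⟨huS, hcov⟩, -⟩ := h v
    rw [covers_iff] at hcov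
    rcases hcov with rfl | rfl | rfl | rfl | rfl
    · exact ⟨(0,0), Or.inl rfl, huS⟩
    · exact ⟨(0,1), Or.inr (Or.inl rfl), huS⟩
    · exact ⟨(0,-1), Or.inr (Or.inr (Or.inl rfl)), huS⟩
    · exact ⟨(1,0), Or.inr (Or.inr (Or.inr (Or.inl rfl))), huS⟩
    · exact ⟨(-1,0), Or.inr (Or.inr (Or.inr (Or.inr rfl))), huS⟩
  have hone : ∀ (a : ZMod m) (b : ZMod n),
      ((if ((a, b) + ((0:ZMod m), (0:ZMod n))) ∈ S then 1 else 0) +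
       (if ((a, b) + ((0:ZMod m), (1:ZMod n))) ∈ S then 1 else 0) +
       (if ((a, b) + ((0:ZMod m), (-1:ZMod n))) ∈ S then 1 else 0) +
       (if ((a, b) + ((1:ZMod m), (0:ZMod n))) ∈ S then 1 else 0) +
       (if ((a, b) + ((-1:ZMod m), (0:ZMod n))) ∈ S then 1 else 0) : ℕ) = 1 := by
    intro a b
    obtain ⟨δ0, hd0, hmem⟩ := hex (a, b)
    have hno : ∀ δ : ZMod m × ZMod n,
        (δ = (0,0) ∨ δ = (0,1) ∨ δ = (0,-1) ∨ δ = (1,0) ∨ δ = (-1,0)) →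
        δ ≠ δ0 → ((a, b) + δ) ∉ S :=
      fun δ hd hne hm' => hne (hexcl (a, b) δ δ0 hd hd0 hm' hmem)
    rcases hd0 with rfl | rfl | rfl | rfl | rfl
    ·
      have i1 : ((a, b) + ((0:ZMod m), (1:ZMod n))) ∉ S :=
        hno _ (Or.inr (Or.inl rfl)) (fun hh => q1n (congrArg Prod.snd hh))
      have i2 : ((a, b) + ((0:ZMod m), (-1:ZMod n))) ∉ S :=
        hno _ (Or.inr (Or.inr (Or.inl rfl))) (fun hh => r2n (congrArg Prod.snd hh))
      have i3 : ((a, b) + ((1:ZMod m), (0:ZMod n))) ∉ S :=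
        hno _ (Or.inr (Or.inr (Or.inr (Or.inl rfl)))) (fun hh => q1m (congrArg Prod.fst hh))
      have i4 : ((a, b) + ((-1:ZMod m), (0:ZMod n))) ∉ S :=
        hno _ (Or.inr (Or.inr (Or.inr (Or.inr rfl)))) (fun hh => r2m (congrArg Prod.fst hh))
      simp only [Prod.mk_add_mk, add_zero, zero_add] at hmem i1 i2 i3 i4
      simp [Prod.mk_add_mk, add_zero, zero_add, hmem, i1, i2, i3, i4]
    ·
      have i0 : ((a, b) + ((0:ZMod m), (0:ZMod n))) ∉ S :=
        hno _ (Or.inl rfl) (fun hh => r1n (congrArg Prod.snd hh))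
      have i2 : ((a, b) + ((0:ZMod m), (-1:ZMod n))) ∉ S :=
        hno _ (Or.inr (Or.inr (Or.inl rfl))) (fun hh => r5n (congrArg Prod.snd hh))
      have i3 : ((a, b) + ((1:ZMod m), (0:ZMod n))) ∉ S :=
        hno _ (Or.inr (Or.inr (Or.inr (Or.inl rfl)))) (fun hh => q1m (congrArg Prod.fst hh))
      have i4 : ((a, b) + ((-1:ZMod m), (0:ZMod n))) ∉ S :=
        hno _ (Or.inr (Or.inr (Or.inr (Or.inr rfl)))) (fun hh => r2m (congrArg Prod.fst hh))
      simp only [Prod.mk_add_mk, add_zero, zero_add] at hmem i0 i2 i3 i4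
      simp [Prod.mk_add_mk, add_zero, zero_add, hmem, i0, i2, i3, i4]
    ·
      have i0 : ((a, b) + ((0:ZMod m), (0:ZMod n))) ∉ S :=
        hno _ (Or.inl rfl) (fun hh => r3n (congrArg Prod.snd hh))
      have i1 : ((a, b) + ((0:ZMod m), (1:ZMod n))) ∉ S :=
        hno _ (Or.inr (Or.inl rfl)) (fun hh => r4n (congrArg Prod.snd hh))
      have i3 : ((a, b) + ((1:ZMod m), (0:ZMod n))) ∉ S :=
        hno _ (Or.inr (Or.inr (Or.inr (Or.inl rfl)))) (fun hh => q1m (congrArg Prod.fst hh))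
      have i4 : ((a, b) + ((-1:ZMod m), (0:ZMod n))) ∉ S :=
        hno _ (Or.inr (Or.inr (Or.inr (Or.inr rfl)))) (fun hh => r2m (congrArg Prod.fst hh))
      simp only [Prod.mk_add_mk, add_zero, zero_add] at hmem i0 i1 i3 i4
      simp [Prod.mk_add_mk, add_zero, zero_add, hmem, i0, i1, i3, i4]
    ·
      have i0 : ((a, b) + ((0:ZMod m), (0:ZMod n))) ∉ S :=
        hno _ (Or.inl rfl) (fun hh => r1m (congrArg Prod.fst hh))
      have i1 : ((a, b) + ((0:ZMod m), (1:ZMod n))) ∉ S :=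
        hno _ (Or.inr (Or.inl rfl)) (fun hh => r1m (congrArg Prod.fst hh))
      have i2 : ((a, b) + ((0:ZMod m), (-1:ZMod n))) ∉ S :=
        hno _ (Or.inr (Or.inr (Or.inl rfl))) (fun hh => r1m (congrArg Prod.fst hh))
      have i4 : ((a, b) + ((-1:ZMod m), (0:ZMod n))) ∉ S :=
        hno _ (Or.inr (Or.inr (Or.inr (Or.inr rfl)))) (fun hh => r5m (congrArg Prod.fst hh))
      simp only [Prod.mk_add_mk, add_zero, zero_add] at hmem i0 i1 i2 i4
      simp [Prod.mk_add_mk, add_zero, zero_add, hmem, i0, i1, i2, i4]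
    ·
      have i0 : ((a, b) + ((0:ZMod m), (0:ZMod n))) ∉ S :=
        hno _ (Or.inl rfl) (fun hh => r3m (congrArg Prod.fst hh))
      have i1 : ((a, b) + ((0:ZMod m), (1:ZMod n))) ∉ S :=
        hno _ (Or.inr (Or.inl rfl)) (fun hh => r3m (congrArg Prod.fst hh))
      have i2 : ((a, b) + ((0:ZMod m), (-1:ZMod n))) ∉ S :=
        hno _ (Or.inr (Or.inr (Or.inl rfl))) (fun hh => r3m (congrArg Prod.fst hh))
      have i3 : ((a, b) + ((1:ZMod m), (0:ZMod n))) ∉ S :=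
        hno _ (Or.inr (Or.inr (Or.inr (Or.inl rfl)))) (fun hh => r4m (congrArg Prod.fst hh))
      simp only [Prod.mk_add_mk, add_zero, zero_add] at hmem i0 i1 i2 i3
      simp [Prod.mk_add_mk, add_zero, zero_add, hmem, i0, i1, i2, i3]
  have hrow : ∀ a : ZMod m, (n : ℕ) = 3 * rowc S a + rowc S (a - 1) + rowc S (a + 1) := by
    intro a
    have base : (n : ℕ) = ∑ _b : ZMod n, 1 := by
      simp [Finset.card_univ, ZMod.card]
    have expand : (∑ _b : ZMod n, (1 : ℕ)) =
        (∑ b : ZMod n, (if ((a, b) + ((0:ZMod m), (0:ZMod n))) ∈ S then 1 else 0)) +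
        (∑ b : ZMod n, (if ((a, b) + ((0:ZMod m), (1:ZMod n))) ∈ S then 1 else 0)) +
        (∑ b : ZMod n, (if ((a, b) + ((0:ZMod m), (-1:ZMod n))) ∈ S then 1 else 0)) +
        (∑ b : ZMod n, (if ((a, b) + ((1:ZMod m), (0:ZMod n))) ∈ S then 1 else 0)) +
        (∑ b : ZMod n, (if ((a, b) + ((-1:ZMod m), (0:ZMod n))) ∈ S then 1 else 0)) := by
      rw [← Finset.sum_add_distrib, ← Finset.sum_add_distrib, ← Finset.sum_add_distrib,
        ← Finset.sum_add_distrib]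
      exact Finset.sum_congr rfl fun b _ => (hone a b).symm
    have s0 : (∑ b : ZMod n, (if ((a, b) + ((0:ZMod m), (0:ZMod n))) ∈ S then 1 else 0)) =
        rowc S a := by
      simp only [Prod.mk_add_mk, add_zero]
      exact (Finset.card_filter _ _).symm
    have s1 : (∑ b : ZMod n, (if ((a, b) + ((0:ZMod m), (1:ZMod n))) ∈ S then 1 else 0)) =
        rowc S a := by
      simp only [Prod.mk_add_mk, add_zero]
      rw [Fintype.sum_equiv (Equiv.addRight (1 : ZMod n))
        (fun b => if ((a, b + 1) ∈ S) then 1 else 0) (fun b => if ((a, b) ∈ S) then 1 else 0)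
        (fun x => rfl)]
      exact (Finset.card_filter _ _).symm
    have s2 : (∑ b : ZMod n, (if ((a, b) + ((0:ZMod m), (-1:ZMod n))) ∈ S then 1 else 0)) =
        rowc S a := by
      simp only [Prod.mk_add_mk, add_zero]
      rw [Fintype.sum_equiv (Equiv.addRight (-1 : ZMod n))
        (fun b => if ((a, b + -1) ∈ S) then 1 else 0) (fun b => if ((a, b) ∈ S) then 1 else 0)
        (fun x => rfl)]
      exact (Finset.card_filter _ _).symm
    have s3 : (∑ b : ZMod n, (if ((a, b) + ((1:ZMod m), (0:ZMod n))) ∈ S then 1 else 0)) =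
        rowc S (a + 1) := by
      simp only [Prod.mk_add_mk, add_zero]
      exact (Finset.card_filter _ _).symm
    have s4 : (∑ b : ZMod n, (if ((a, b) + ((-1:ZMod m), (0:ZMod n))) ∈ S then 1 else 0)) =
        rowc S (a - 1) := by
      simp only [Prod.mk_add_mk, add_zero, sub_eq_add_neg]
      exact (Finset.card_filter _ _).symm
    rw [expand, s0, s1, s2, s3, s4] at base
    omega
  set e : ZMod m → ℤ := fun a => 5 * (rowc S a : ℤ) - n with hedef
  have hrec : ∀ a : ZMod m, e (a + 1) = -3 * e a - e (a - 1) := by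
    intro a
    have hz : (n : ℤ) = 3 * rowc S a + rowc S (a - 1) + rowc S (a + 1) := by
      exact_mod_cast hrow a
    simp only [hedef]
    linarith
  obtain ⟨a0, -, hmin⟩ := Finset.exists_min_image Finset.univ (fun a => |e a|)
    ⟨0, Finset.mem_univ 0⟩
  have hmin' : ∀ a : ZMod m, |e a0| ≤ |e a| := fun a => hmin a (Finset.mem_univ a)
  set g : ℕ → ℤ := fun k => e (a0 + (k : ZMod m)) with hgdef
  have hg0 : g 0 = e a0 := by simp [hgdef]
  have hgrec : ∀ k : ℕ, g (k + 2) = -3 * g (k + 1) - g k := by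
    intro k
    have hr := hrec (a0 + ((k + 1 : ℕ) : ZMod m))
    have e1 : a0 + ((k + 1 : ℕ) : ZMod m) + 1 = a0 + ((k + 2 : ℕ) : ZMod m) := by
      push_cast; ring
    have e2 : a0 + ((k + 1 : ℕ) : ZMod m) - 1 = a0 + ((k : ℕ) : ZMod m) := by
      push_cast; ring
    rw [e1, e2] at hr
    simpa [hgdef] using hr
  have hper1 : g (m + 1) = g 1 := by
    have : ((m + 1 : ℕ) : ZMod m) = ((1 : ℕ) : ZMod m) := by
      push_cast [ZMod.natCast_self]; ring
    simp only [hgdef, this]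
  have claim : ∀ k : ℕ, |g k| ≤ |g (k + 1)| ∧ 2 ^ k * |g 1| ≤ |g (k + 1)| := by
    intro k
    induction k with
    | zero =>
      have hgx : g 1 = e (a0 + 1) := by norm_num [hgdef]
      refine ⟨?_, by simp⟩
      have hq := hmin' (a0 + 1)
      rw [← hg0] at hq
      rw [← hgx] at hq
      exact hq
    | succ k ih =>
      obtain ⟨ih1, ih2⟩ := ih
      have habs : 3 * |g (k + 1)| - |g k| ≤ |g (k + 2)| := by
        have h1 : |(-3 : ℤ) * g (k + 1)| - |g k| ≤ |(-3) * g (k + 1) - g k| :=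
          abs_sub_abs_le_abs_sub _ _
        have h2 : |(-3 : ℤ) * g (k + 1)| = 3 * |g (k + 1)| := by
          rw [abs_mul]; norm_num
        rw [hgrec k]
        linarith
      constructor
      · linarith [abs_nonneg (g k), abs_nonneg (g (k + 1))]
      · have h3 : (2 : ℤ) ^ (k + 1) * |g 1| = 2 * (2 ^ k * |g 1|) := by ring
        rw [h3]
        linarith
  have hg1 : g 1 = 0 := by
    have h1 := (claim m).2
    rw [hper1] at h1
    have h2m : (2 : ℤ) ^ 1 ≤ 2 ^ m := by
      apply pow_le_pow_right₀ <;> omega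
    have h4 := abs_nonneg (g 1)
    have : |g 1| = 0 := by nlinarith
    exact abs_eq_zero.mp this
  have hg0' : g 0 = 0 := by
    have hx := (claim 0).1
    rw [hg1] at hx
    exact abs_eq_zero.mp (le_antisymm (by simpa using hx) (abs_nonneg _))
  have hzero : ∀ k : ℕ, g k = 0 ∧ g (k + 1) = 0 := by
    intro k
    induction k with
    | zero => exact ⟨hg0', hg1⟩
    | succ k ih =>
      refine ⟨ih.2, ?_⟩
      rw [hgrec k, ih.1, ih.2]
      ring
  have hezero : ∀ a : ZMod m, e a = 0 := by
    intro a
    obtain ⟨k, hk⟩ := ZMod.natCast_zmod_surjective (a - a0)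
    have ha : a = a0 + (k : ZMod m) := by rw [hk]; ring
    rw [ha]
    exact (hzero k).1
  have h0 := hezero 0
  simp only [hedef] at h0
  have hn5 : (n : ℤ) = 5 * rowc S 0 := by linarith
  exact ⟨rowc S 0, by exact_mod_cast hn5⟩

lemma torusAdj_swap {m n : ℕ} (x y : ZMod m × ZMod n) (hxy : torusAdj x y) :
    torusAdj x.swap y.swap := by
  simp only [torusAdj, Prod.fst_swap, Prod.snd_swap] at *
  tauto

lemma isOnePC_swap {m n : ℕ} {S : Set (ZMod m × ZMod n)} (h : IsOnePC S) :
    IsOnePC (Prod.swap ⁻¹' S : Set (ZMod n × ZMod m)) := by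
  intro v
  obtain ⟨u, ⟨huS, hucov⟩, huniq⟩ := h v.swap
  refine ⟨u.swap, ⟨by simpa using huS, ?_⟩, ?_⟩
  · rcases hucov with h' | h'
    · left; simp [h']
    · right; simpa using torusAdj_swap u v.swap h'
  · rintro y ⟨hyS, hycov⟩
    have hy : y.swap = u := by
      refine huniq y.swap ⟨hyS, ?_⟩
      rcases hycov with h' | h'
      · left; simp [h']
      · right; simpa using torusAdj_swap y v h'
    have := congrArg Prod.swap hy
    simpa using this

lemma S5_eq : S5 = {p : ZMod 5 × ZMod 5 | p.1 + 2 * p.2 = 0} := by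
  ext ⟨x, y⟩
  simp only [S5, Set.mem_setOf_eq, Prod.mk.injEq]
  constructor
  · rintro ⟨a, b, hx, hy⟩
    subst hx hy
    push_cast
    have h5 : (5 : ZMod 5) = 0 := by decide
    linear_combination (a : ZMod 5) * h5
  · intro hxy
    have hyv : ((y.val : ℕ) : ZMod 5) = y := ZMod.natCast_rightInverse y
    refine ⟨0, -(y.val : ℤ), ?_, ?_⟩
    · push_cast
      rw [hyv]
      linear_combination hxy
    · push_cast
      rw [hyv]
      ring

/-- C_m × C_n admits a 1-perfect code iff 5 ∣ m and 5 ∣ n; moreover the reduction of the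
sublattice ⟨(1,2),(2,-1)⟩ mod 5 is a 1-perfect code of cardinality 5 in C_5 × C_5. -/
theorem onePC_iff_five_dvd :
    (∀ m n : ℕ, 3 ≤ m → 3 ≤ n →
      ((∃ S : Set (ZMod m × ZMod n), IsOnePC S) ↔ (5 ∣ m ∧ 5 ∣ n))) ∧
    (IsOnePC S5 ∧ S5.ncard = 5) := by
  have hS5lin : S5 = {p : ZMod 5 × ZMod 5 | linf (dvd_refl 5) (dvd_refl 5) p = 0} := by
    rw [S5_eq]
    ext p
    simp [linf, ZMod.castHom_apply, ZMod.cast_id]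
  refine ⟨?_, ?_, ?_⟩
  · intro m n hm hn
    constructor
    · rintro ⟨S, hS⟩
      exact ⟨five_dvd_of_onePC hn hm (isOnePC_swap hS), five_dvd_of_onePC hm hn hS⟩
    · rintro ⟨h5m, h5n⟩
      exact ⟨_, isOnePC_linear h5m h5n⟩
  · rw [hS5lin]
    exact isOnePC_linear _ _
  · rw [S5_eq]
    have hfin : {p : ZMod 5 × ZMod 5 | p.1 + 2 * p.2 = 0} =
        ↑(Finset.univ.filter fun p : ZMod 5 × ZMod 5 => p.1 + 2 * p.2 = 0) := by
      ext p
      simp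
    rw [hfin, Set.ncard_coe_finset]
    decide
end

section
/- The multigraph-torus C_2 × C_n admits a 1-perfect code if and only if n is divisible by 4; when 4 | n, the set { (1, 4i) : 0 ≤ i < n/4 } ∪ { (0, 4i+2) : 0 ≤ i < n/4 } is such a code, and the vertex set partitions into 4 disjoint translates of it, each a 1-perfect code. -/
/-- Closed neighborhood in the multigraph torus C_2 × C_n: a vertex `(a,b)` together with
`(a+1,b)`, `(a,b+1)` and `(a,b-1)`. -/
def inClosedNbhd {n : ℕ} (v u : ZMod 2 × ZMod n) : Prop :=
  u = v ∨ u = (v.1 + 1, v.2) ∨ u = (v.1, v.2 + 1) ∨ u = (v.1, v.2 - 1)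

/-- 1-perfect code in C_2 × C_n: the closed neighborhoods of the code vertices partition
the vertex set. -/
def IsOnePC2 {n : ℕ} (S : Set (ZMod 2 × ZMod n)) : Prop :=
  ∀ v : ZMod 2 × ZMod n, ∃! u, u ∈ S ∧ inClosedNbhd v u

/-- The explicit code { (1,4i) : 0 ≤ i < n/4 } ∪ { (0,4i+2) : 0 ≤ i < n/4 }. -/
def code16 (n : ℕ) : Set (ZMod 2 × ZMod n) :=
  {p | ∃ i : ℕ, i < n / 4 ∧
    (p = (1, ((4 * i : ℕ) : ZMod n)) ∨ p = (0, ((4 * i + 2 : ℕ) : ZMod n)))}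

/-- row value -/
def rowv (a : ZMod 2) : ZMod 4 := 2 * a.val

lemma rowv_add : ∀ a b : ZMod 2, rowv (a + b) = rowv a + rowv b := by decide

lemma rowv_sub : ∀ a b : ZMod 2, rowv (a - b) = rowv a - rowv b := by decide

/-- the coloring -/
def psi {n : ℕ} (h : 4 ∣ n) (p : ZMod 2 × ZMod n) : ZMod 4 :=
  rowv p.1 + ZMod.castHom h (ZMod 4) p.2

lemma psi_add {n : ℕ} (h : 4 ∣ n) (p q : ZMod 2 × ZMod n) :
    psi h (p + q) = psi h p + psi h q := by
  simp only [psi, Prod.fst_add, Prod.snd_add, rowv_add, map_add]; ring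

lemma psi_sub {n : ℕ} (h : 4 ∣ n) (p q : ZMod 2 × ZMod n) :
    psi h (p - q) = psi h p - psi h q := by
  simp only [psi, Prod.fst_sub, Prod.snd_sub, rowv_sub, map_sub]; ring

lemma psi_flip {n : ℕ} (h : 4 ∣ n) (p : ZMod 2 × ZMod n) :
    psi h (p.1 + 1, p.2) = psi h p + 2 := by
  simp only [psi, rowv_add]; have h1 : rowv 1 = 2 := by decide
  rw [h1]; ring

lemma psi_right {n : ℕ} (h : 4 ∣ n) (p : ZMod 2 × ZMod n) :
    psi h (p.1, p.2 + 1) = psi h p + 1 := by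
  simp only [psi, map_add, map_one]; ring

lemma psi_left {n : ℕ} (h : 4 ∣ n) (p : ZMod 2 × ZMod n) :
    psi h (p.1, p.2 - 1) = psi h p - 1 := by
  simp only [psi, map_sub, map_one]; ring

lemma zmod4_cases : ∀ x : ZMod 4, x = 0 ∨ x = 1 ∨ x = 2 ∨ x = 3 := by decide

lemma h40 : (4 : ZMod 4) = 0 := by decide

/-- each level set of psi is a perfect code -/
lemma pc_level {n : ℕ} (hn : 3 ≤ n) (h : 4 ∣ n) (c : ZMod 4) :
    IsOnePC2 {p : ZMod 2 × ZMod n | psi h p = c} := by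
  haveI : NeZero n := ⟨by omega⟩
  intro v
  have hclass : ∀ u : ZMod 2 × ZMod n, psi h u = c → inClosedNbhd v u →
      (c = psi h v ∧ u = v) ∨ (c = psi h v + 2 ∧ u = (v.1 + 1, v.2)) ∨
      (c = psi h v + 1 ∧ u = (v.1, v.2 + 1)) ∨ (c = psi h v - 1 ∧ u = (v.1, v.2 - 1)) := by
    intro u hc hu
    rcases hu with h' | h' | h' | h'
    · exact Or.inl ⟨by rw [← hc, h'], h'⟩
    · exact Or.inr (Or.inl ⟨by rw [← hc, h', psi_flip], h'⟩)
    · exact Or.inr (Or.inr (Or.inl ⟨by rw [← hc, h', psi_right], h'⟩))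
    · exact Or.inr (Or.inr (Or.inr ⟨by rw [← hc, h', psi_left], h'⟩))
  have hdist : ∀ x : ZMod 4, ¬(x = x + 2) ∧ ¬(x = x + 1) ∧ ¬(x = x - 1) ∧
      ¬(x + 2 = x + 1) ∧ ¬(x + 2 = x - 1) ∧ ¬(x + 1 = x - 1) := by decide
  obtain ⟨hd1, hd2, hd3, hd4, hd5, hd6⟩ := hdist (psi h v)
  have huniq : ∀ u u' : ZMod 2 × ZMod n,
      psi h u = c → inClosedNbhd v u → psi h u' = c → inClosedNbhd v u' → u = u' := by
    intro u u' hc hu hc' hu'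
    rcases hclass u hc hu with ⟨e, r⟩ | ⟨e, r⟩ | ⟨e, r⟩ | ⟨e, r⟩ <;>
      rcases hclass u' hc' hu' with ⟨e', r'⟩ | ⟨e', r'⟩ | ⟨e', r'⟩ | ⟨e', r'⟩ <;>
      first
        | exact absurd (e.symm.trans e') hd1
        | exact absurd (e'.symm.trans e) hd1
        | exact absurd (e.symm.trans e') hd2
        | exact absurd (e'.symm.trans e) hd2
        | exact absurd (e.symm.trans e') hd3
        | exact absurd (e'.symm.trans e) hd3
        | exact absurd (e.symm.trans e') hd4
        | exact absurd (e'.symm.trans e) hd4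
        | exact absurd (e.symm.trans e') hd5
        | exact absurd (e'.symm.trans e) hd5
        | exact absurd (e.symm.trans e') hd6
        | exact absurd (e'.symm.trans e) hd6
        | rw [r, r']
  rcases zmod4_cases (c - psi h v) with hd | hd | hd | hd <;>
    have hc : c = _ + psi h v := sub_eq_iff_eq_add.mp hd
  · refine ⟨v, ⟨show psi h v = c by rw [hc]; ring, Or.inl rfl⟩, ?_⟩
    rintro y ⟨hy1, hy2⟩
    exact huniq y v hy1 hy2 (by rw [hc]; ring) (Or.inl rfl)
  · refine ⟨(v.1, v.2 + 1), ⟨show psi h _ = c by rw [psi_right, hc]; ring,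
      Or.inr (Or.inr (Or.inl rfl))⟩, ?_⟩
    rintro y ⟨hy1, hy2⟩
    exact huniq y _ hy1 hy2 (by rw [psi_right, hc]; ring) (Or.inr (Or.inr (Or.inl rfl)))
  · refine ⟨(v.1 + 1, v.2), ⟨show psi h _ = c by rw [psi_flip, hc]; ring,
      Or.inr (Or.inl rfl)⟩, ?_⟩
    rintro y ⟨hy1, hy2⟩
    exact huniq y _ hy1 hy2 (by rw [psi_flip, hc]; ring) (Or.inr (Or.inl rfl))
  · refine ⟨(v.1, v.2 - 1), ⟨show psi h _ = c by rw [psi_left, hc]; linear_combination -h40,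
      Or.inr (Or.inr (Or.inr rfl))⟩, ?_⟩
    rintro y ⟨hy1, hy2⟩
    exact huniq y _ hy1 hy2 (by rw [psi_left, hc]; linear_combination -h40)
      (Or.inr (Or.inr (Or.inr rfl)))

lemma psi_t {n : ℕ} (h : 4 ∣ n) (m : ℕ) :
    psi h ((0 : ZMod 2), ((m : ℕ) : ZMod n)) = (m : ZMod 4) := by
  have h0 : rowv 0 = 0 := by decide
  simp [psi, map_natCast, h0]

lemma code16_eq {n : ℕ} (hn : 3 ≤ n) (h : 4 ∣ n) :
    code16 n = {p : ZMod 2 × ZMod n | psi h p = 2} := by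
  haveI : NeZero n := ⟨by omega⟩
  have hr1 : rowv 1 = 2 := by decide
  have hr0 : rowv 0 = 0 := by decide
  ext p
  constructor
  · rintro ⟨i, hi, hp | hp⟩ <;> subst hp
    · show rowv 1 + ZMod.castHom h (ZMod 4) (((4 * i : ℕ) : ZMod n)) = 2
      have h4i : ((4 * i : ℕ) : ZMod 4) = 0 := by
        push_cast
        rw [h40]; ring
      rw [map_natCast, hr1, h4i, add_zero]
    · show rowv 0 + ZMod.castHom h (ZMod 4) (((4 * i + 2 : ℕ) : ZMod n)) = 2
      have h4i : ((4 * i + 2 : ℕ) : ZMod 4) = 2 := by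
        push_cast
        rw [h40]; ring
      rw [map_natCast, hr0, h4i, zero_add]
  · intro hp
    obtain ⟨a, b⟩ := p
    have hb : ((b.val : ℕ) : ZMod n) = b := ZMod.natCast_zmod_val b
    have hblt : b.val < n := ZMod.val_lt b
    have hcast : ZMod.castHom h (ZMod 4) b = ((b.val : ℕ) : ZMod 4) := by
      rw [← hb, map_natCast, hb]
    rcases (by decide : ∀ x : ZMod 2, x = 0 ∨ x = 1) a with ha | ha <;> subst ha
    · -- row 0 : castHom b = 2
      have h2 : ((b.val : ℕ) : ZMod 4) = 2 := by
        have hthis : psi h ((0 : ZMod 2), b) = ZMod.castHom h (ZMod 4) b := by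
          show rowv 0 + _ = _
          rw [hr0, zero_add]
        have hp' : psi h ((0 : ZMod 2), b) = 2 := hp
        linear_combination hp' - hthis - hcast
      have hmod : b.val % 4 = 2 := by
        have := congrArg ZMod.val h2
        rwa [ZMod.val_natCast, (by decide : ((2 : ZMod 4)).val = 2)] at this
      refine ⟨b.val / 4, by omega, Or.inr ?_⟩
      have : (4 * (b.val / 4) + 2 : ℕ) = b.val := by omega
      rw [this, hb]
    · -- row 1 : castHom b = 0
      have h2 : ((b.val : ℕ) : ZMod 4) = 0 := by
        have hthis : psi h ((1 : ZMod 2), b) = 2 + ZMod.castHom h (ZMod 4) b := by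
          show rowv 1 + _ = _
          rw [hr1]
        have hp' : psi h ((1 : ZMod 2), b) = 2 := hp
        linear_combination hp' - hthis - hcast
      have hmod : b.val % 4 = 0 := by
        have := congrArg ZMod.val h2
        rwa [ZMod.val_natCast, (by decide : ((0 : ZMod 4)).val = 0)] at this
      refine ⟨b.val / 4, by omega, Or.inl ?_⟩
      have : (4 * (b.val / 4) : ℕ) = b.val := by omega
      rw [this, hb]

lemma img_eq {n : ℕ} (hn : 3 ≤ n) (h : 4 ∣ n) (m : ℕ) :
    (fun q => ((0 : ZMod 2), ((m : ℕ) : ZMod n)) + q) '' code16 n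
      = {p : ZMod 2 × ZMod n | psi h p = (m : ZMod 4) + 2} := by
  rw [code16_eq hn h]
  ext p
  constructor
  · rintro ⟨q, hq, rfl⟩
    have hq' : psi h q = 2 := hq
    show psi h _ = _
    rw [psi_add, psi_t h m, hq']
  · intro hp
    have hp' : psi h p = (m : ZMod 4) + 2 := hp
    refine ⟨p - ((0 : ZMod 2), ((m : ℕ) : ZMod n)), ?_, by ring⟩
    show psi h _ = 2
    rw [psi_sub, psi_t h m, hp']
    ring

lemma forward_dvd {n : ℕ} (hn : 3 ≤ n) (S : Set (ZMod 2 × ZMod n)) (hS : IsOnePC2 S) :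
    4 ∣ n := by
  haveI : NeZero n := ⟨by omega⟩
  have h1 : (1 : ZMod n) ≠ 0 := by
    have : ((1 : ℕ) : ZMod n) ≠ 0 := by
      intro hh
      rw [ZMod.natCast_eq_zero_iff] at hh
      have := Nat.le_of_dvd one_pos hh
      omega
    simpa using this
  have hone : ∀ x : ZMod n, x + 1 ≠ x := fun x hx => h1 (by linear_combination hx)
  have hflipne : ∀ a : ZMod 2, a + 1 ≠ a := by decide
  have hadd2 : ∀ a : ZMod 2, a + 1 + 1 = a := by decide
  have huu : ∀ w u u' : ZMod 2 × ZMod n, u ∈ S → inClosedNbhd w u → u' ∈ S →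
      inClosedNbhd w u' → u = u' := fun w u u' a b a' b' => (hS w).unique ⟨a, b⟩ ⟨a', b'⟩
  -- the step lemma
  have hstep : ∀ c : ZMod 2, ∀ b : ZMod n, (c, b) ∈ S → (c + 1, b + 2) ∈ S := by
    intro c b hv
    obtain ⟨u, ⟨huS, hun⟩, -⟩ := hS (c + 1, b + 1)
    rcases hun with h' | h' | h' | h'
    · -- u = (c+1, b+1) : contradiction at vertex (c+1, b)
      exfalso
      have e1 : inClosedNbhd (c + 1, b) u := Or.inr (Or.inr (Or.inl h'))
      have e2 : inClosedNbhd (c + 1, b) ((c, b) : ZMod 2 × ZMod n) :=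
        Or.inr (Or.inl (by rw [Prod.mk.injEq]; exact ⟨(hadd2 c).symm, rfl⟩))
      have := huu _ _ _ huS e1 hv e2
      rw [h'] at this
      have := congrArg Prod.snd this
      exact hone b this
    · -- u = (c+1+1, b+1) = (c, b+1) : contradiction at vertex (c, b)
      exfalso
      rw [show ((c + 1 : ZMod 2) + 1, (b + 1 : ZMod n)) = (c, b + 1) by
        rw [Prod.mk.injEq]; exact ⟨hadd2 c, rfl⟩] at h'
      have e1 : inClosedNbhd (c, b) u := Or.inr (Or.inr (Or.inl h'))
      have e2 : inClosedNbhd (c, b) ((c, b) : ZMod 2 × ZMod n) := Or.inl rfl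
      have := huu _ _ _ huS e1 hv e2
      rw [h'] at this
      have := congrArg Prod.snd this
      exact hone b this
    · -- u = (c+1, b+2) : done
      rw [show ((c + 1 : ZMod 2), (b + 1 + 1 : ZMod n)) = (c + 1, b + 2) by
        rw [Prod.mk.injEq]; exact ⟨rfl, by ring⟩] at h'
      rw [← h']; exact huS
    · -- u = (c+1, b+1-1) = (c+1, b) : contradiction at vertex (c, b)
      exfalso
      rw [show ((c + 1 : ZMod 2), (b + 1 - 1 : ZMod n)) = (c + 1, b) by
        rw [Prod.mk.injEq]; exact ⟨rfl, by ring⟩] at h'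
      have e1 : inClosedNbhd (c, b) u := Or.inr (Or.inl h')
      have e2 : inClosedNbhd (c, b) ((c, b) : ZMod 2 × ZMod n) := Or.inl rfl
      have := huu _ _ _ huS e1 hv e2
      rw [h'] at this
      have := congrArg Prod.fst this
      exact hflipne c this
  -- iterate
  have hiter : ∀ k : ℕ, ∀ c : ZMod 2, ∀ b : ZMod n, (c, b) ∈ S →
      (c + (k : ZMod 2), b + 2 * (k : ZMod n)) ∈ S := by
    intro k
    induction k with
    | zero => intro c b hv; simpa using hv
    | succ k ih =>
      intro c b hv
      have h2 := hstep _ _ (ih c b hv)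
      convert h2 using 2 <;> push_cast <;> ring
  -- get a codeword
  obtain ⟨u, ⟨huS, -⟩, -⟩ := hS ((0 : ZMod 2), (0 : ZMod n))
  obtain ⟨u1, u2⟩ := u
  by_contra hnd
  rcases Nat.even_or_odd n with he | ho
  · -- n even, n % 4 = 2
    obtain ⟨m, hm⟩ := he
    set k := n / 2 with hk
    have hk2 : 2 * k = n := by omega
    have hkodd : k % 2 = 1 := by omega
    have hcastn : (2 * (k : ZMod n) : ZMod n) = 0 := by
      have : ((2 * k : ℕ) : ZMod n) = 0 := by rw [hk2]; exact ZMod.natCast_self n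
      push_cast at this
      exact this
    have hcast2 : ((k : ℕ) : ZMod 2) = 1 := by
      have : k = 2 * (k / 2) + 1 := by omega
      rw [this]
      push_cast
      rw [(by decide : (2 : ZMod 2) = 0)]
      ring
    have hw := hiter k u1 u2 huS
    rw [hcastn, hcast2, add_zero] at hw
    have e1 : inClosedNbhd (u1, u2) ((u1 + 1, u2) : ZMod 2 × ZMod n) := Or.inr (Or.inl rfl)
    have e2 : inClosedNbhd (u1, u2) ((u1, u2) : ZMod 2 × ZMod n) := Or.inl rfl
    have := huu _ _ _ hw e1 huS e2
    have := congrArg Prod.fst this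
    exact hflipne u1 this
  · -- n odd
    obtain ⟨m, hm⟩ := ho
    set k := (n + 1) / 2 with hk
    have hk2 : 2 * k = n + 1 := by omega
    have hcastn : (2 * (k : ZMod n) : ZMod n) = 1 := by
      have : ((2 * k : ℕ) : ZMod n) = ((n : ℕ) : ZMod n) + 1 := by rw [hk2]; push_cast; ring
      rw [ZMod.natCast_self n, zero_add] at this
      push_cast at this
      exact this
    have hw := hiter k u1 u2 huS
    rw [hcastn] at hw
    set κ := ((k : ℕ) : ZMod 2) with hκ
    have e1 : inClosedNbhd (u1 + κ, u2) ((u1 + κ, u2 + 1) : ZMod 2 × ZMod n) :=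
      Or.inr (Or.inr (Or.inl rfl))
    have e2 : inClosedNbhd (u1 + κ, u2) ((u1, u2) : ZMod 2 × ZMod n) := by
      rcases (by decide : ∀ a x : ZMod 2, a = a + x ∨ a = a + x + 1) u1 κ with hc | hc
      · exact Or.inl (by rw [Prod.mk.injEq]; exact ⟨hc, rfl⟩)
      · exact Or.inr (Or.inl (by rw [Prod.mk.injEq]; exact ⟨hc, rfl⟩))
    have := huu _ _ _ hw e1 huS e2
    have := congrArg Prod.snd this
    exact hone u2 this

lemma fin4_unique : ∀ x : ZMod 4, ∃! i : Fin 4, x = ((i.val : ℕ) : ZMod 4) + 2 := by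
  intro x
  rcases zmod4_cases x with h | h | h | h <;> subst h
  · exact ⟨2, by decide, by decide⟩
  · exact ⟨3, by decide, by decide⟩
  · exact ⟨0, by decide, by decide⟩
  · exact ⟨1, by decide, by decide⟩

/-- C_2 × C_n admits a 1-perfect code iff 4 ∣ n; when 4 ∣ n the explicit set `code16 n`
is such a code, and the vertex set partitions into 4 disjoint translates of it, each a
1-perfect code. -/
theorem onePC_C2Cn (n : ℕ) (hn : 3 ≤ n) :
    ((∃ S : Set (ZMod 2 × ZMod n), IsOnePC2 S) ↔ 4 ∣ n) ∧
    (4 ∣ n → IsOnePC2 (code16 n) ∧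
      ∃ t : Fin 4 → ZMod 2 × ZMod n,
        (∀ p : ZMod 2 × ZMod n, ∃! i : Fin 4, p ∈ (fun q => t i + q) '' code16 n) ∧
        ∀ i : Fin 4, IsOnePC2 ((fun q => t i + q) '' code16 n)) := by
  have hpart2 : 4 ∣ n → IsOnePC2 (code16 n) ∧
      ∃ t : Fin 4 → ZMod 2 × ZMod n,
        (∀ p : ZMod 2 × ZMod n, ∃! i : Fin 4, p ∈ (fun q => t i + q) '' code16 n) ∧
        ∀ i : Fin 4, IsOnePC2 ((fun q => t i + q) '' code16 n) := by
    intro h4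
    constructor
    · rw [code16_eq hn h4]
      exact pc_level hn h4 2
    · refine ⟨fun i => ((0 : ZMod 2), ((i.val : ℕ) : ZMod n)), ?_, ?_⟩
      · intro p
        obtain ⟨i0, hi0, hi0u⟩ := fin4_unique (psi h4 p)
        refine ⟨i0, ?_, ?_⟩
        · show p ∈ (fun q => ((0 : ZMod 2), ((i0.val : ℕ) : ZMod n)) + q) '' code16 n
          rw [img_eq hn h4 i0.val]
          exact hi0
        · intro j hj
          have hj' : p ∈ (fun q => ((0 : ZMod 2), ((j.val : ℕ) : ZMod n)) + q) '' code16 n := hj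
          rw [img_eq hn h4 j.val] at hj'
          exact hi0u j hj'
      · intro i
        show IsOnePC2 ((fun q => ((0 : ZMod 2), ((i.val : ℕ) : ZMod n)) + q) '' code16 n)
        rw [img_eq hn h4 i.val]
        exact pc_level hn h4 _
  refine ⟨⟨fun ⟨S, hS⟩ => forward_dvd hn S hS, fun h4 => ⟨code16 n, (hpart2 h4).1⟩⟩, hpart2⟩
end

section
/- C_2 × C_n admits a parallel total perfect code if and only if n is divisible by 6; when 6 | n, the projection of the vertices (0,1+6i),(0,2+6i),(1,4+6i),(1,5+6i) for 0 ≤ i < n/6 gives such a code. -/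
/-- Adjacency in C_2 × C_n: `(a,b)` is adjacent to `(a+1,b)` and to `(a,b±1)`. -/
def adj2 {n : ℕ} (u v : ZMod 2 × ZMod n) : Prop :=
  (u.2 = v.2 ∧ u.1 = v.1 + 1) ∨ (u.1 = v.1 ∧ (u.2 = v.2 + 1 ∨ u.2 = v.2 - 1))

/-- A parallel total perfect code in C_2 × C_n: every vertex outside `S` has exactly one
neighbor in `S`, every vertex of `S` has exactly one neighbor in `S`, and all induced
edges lie along the second-coordinate (C_n) direction. -/
def IsParallelTPC2 {n : ℕ} (S : Set (ZMod 2 × ZMod n)) : Prop :=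
  (∀ v ∉ S, ∃! u, u ∈ S ∧ adj2 u v) ∧
  (∀ v ∈ S, ∃! u, u ∈ S ∧ adj2 u v) ∧
  (∀ u ∈ S, ∀ v ∈ S, adj2 u v → u.1 = v.1)

/-- The explicit code: vertices `(0,6i+1), (0,6i+2), (1,6i+4), (1,6i+5)` for
`0 ≤ i < n/6`. -/
def code17 (n : ℕ) : Set (ZMod 2 × ZMod n) :=
  {p | ∃ i : ℕ, i < n / 6 ∧
    (p = (0, ((6 * i + 1 : ℕ) : ZMod n)) ∨ p = (0, ((6 * i + 2 : ℕ) : ZMod n)) ∨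
     p = (1, ((6 * i + 4 : ℕ) : ZMod n)) ∨ p = (1, ((6 * i + 5 : ℕ) : ZMod n)))}

/-! ### Auxiliary machinery -/

/-- "Exactly one of three" as a proposition. -/
def ExOne (x y z : Prop) : Prop := (x ∧ ¬y ∧ ¬z) ∨ (¬x ∧ y ∧ ¬z) ∨ (¬x ∧ ¬y ∧ z)

instance (x y z : Prop) [Decidable x] [Decidable y] [Decidable z] : Decidable (ExOne x y z) := by
  unfold ExOne; infer_instance

/-- "Exactly one of three" as a boolean. -/
def exoneB (x y z : Bool) : Bool := (x && !y && !z) || (!x && y && !z) || (!x && !y && z)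

/-- Local validity of three consecutive column-states of a parallel TPC in `C_2 × C_n`. -/
def validB (a b c : Bool × Bool) : Bool :=
  (bif b.1 then !b.2 && (a.1 != c.1) else exoneB b.2 a.1 c.1) &&
  (bif b.2 then !b.1 && (a.2 != c.2) else exoneB b.1 a.2 c.2)

set_option synthInstance.maxSize 2000 in
set_option synthInstance.maxHeartbeats 1000000 in
set_option maxHeartbeats 2000000 in
lemma bridgeB : ∀ x0 x1 y0 y1 z0 z1 : Bool,
    (y0 = true → y1 = false ∧ x0 ≠ z0) →
    (y0 = false → ExOne (y1 = true) (x0 = true) (z0 = true)) →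
    (y1 = true → y0 = false ∧ x1 ≠ z1) →
    (y1 = false → ExOne (y0 = true) (x1 = true) (z1 = true)) →
    validB (x0, x1) (y0, y1) (z0, z1) = true := by decide

set_option synthInstance.maxSize 2000 in
set_option synthInstance.maxHeartbeats 1000000 in
set_option maxHeartbeats 4000000 in
lemma L6 : ∀ s0 s1 s2 s3 s4 s5 s6 : Bool × Bool,
    validB s0 s1 s2 = true → validB s1 s2 s3 = true → validB s2 s3 s4 = true →
    validB s3 s4 s5 = true → validB s4 s5 s6 = true →
    s6 = s0 ∧ (s1, s2) ≠ (s0, s1) ∧ (s2, s3) ≠ (s0, s1) ∧ (s3, s4) ≠ (s0, s1) ∧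
      (s4, s5) ≠ (s0, s1) ∧ (s5, s6) ≠ (s0, s1) := by decide

/-- The mod-6 membership pattern of the explicit code. -/
def Mcode (r : ZMod 2) (t : ZMod 6) : Prop :=
  (r = 0 ∧ (t = 1 ∨ t = 2)) ∨ (r = 1 ∧ (t = 4 ∨ t = 5))

instance (r : ZMod 2) (t : ZMod 6) : Decidable (Mcode r t) := by unfold Mcode; infer_instance

lemma exone_M : ∀ (r : ZMod 2) (t : ZMod 6),
    ExOne (Mcode (r+1) t) (Mcode r (t+1)) (Mcode r (t-1)) := by decide

lemma no_vert : ∀ (r : ZMod 2) (t : ZMod 6), ¬(Mcode r t ∧ Mcode (r+1) t) := by decide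

lemma adj2_iff {n : ℕ} (u v : ZMod 2 × ZMod n) :
    adj2 u v ↔ u = (v.1 + 1, v.2) ∨ u = (v.1, v.2 + 1) ∨ u = (v.1, v.2 - 1) := by
  simp only [adj2, Prod.ext_iff]
  tauto

/-! ### The explicit code is a parallel TPC when `6 ∣ n` -/

lemma mem_code17 {n : ℕ} (hn : 3 ≤ n) (h6 : 6 ∣ n) (p : ZMod 2 × ZMod n) :
    p ∈ code17 n ↔ Mcode p.1 (ZMod.castHom h6 (ZMod 6) p.2) := by
  haveI : NeZero n := ⟨by omega⟩
  have h6z : (6 : ZMod 6) = 0 := by decide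
  constructor
  · rintro ⟨i, hi, (rfl | rfl | rfl | rfl)⟩ <;>
      simp only [map_natCast] <;>
      [left; left; right; right] <;>
      refine ⟨rfl, ?_⟩ <;> [left; right; left; right] <;>
      · push_cast
        rw [h6z]
        ring
  · intro hM
    have hval : p.2 = ((p.2.val : ℕ) : ZMod n) := (ZMod.natCast_rightInverse p.2).symm
    have hφ : ZMod.castHom h6 (ZMod 6) p.2 = ((p.2.val : ℕ) : ZMod 6) := by
      conv_lhs => rw [hval]
      rw [map_natCast]
    have hklt : p.2.val < n := ZMod.val_lt p.2
    obtain ⟨m, hm⟩ := id h6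
    have hmod : ∀ j : ℕ, j < 6 → (ZMod.castHom h6 (ZMod 6) p.2 = (j : ZMod 6) ↔ p.2.val % 6 = j) := by
      intro j hj
      rw [hφ]
      constructor
      · intro h
        have := congrArg ZMod.val h
        rwa [ZMod.val_natCast, ZMod.val_natCast, Nat.mod_eq_of_lt hj] at this
      · intro h
        rw [← Nat.mod_add_div p.2.val 6, h]
        push_cast
        rw [h6z]
        ring
    rcases hM with ⟨hr, ht | ht⟩ | ⟨hr, ht | ht⟩
    · have hk : p.2.val % 6 = 1 := (hmod 1 (by norm_num)).1 (by exact_mod_cast ht)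
      refine ⟨p.2.val / 6, by omega, Or.inl ?_⟩
      rw [Prod.ext_iff]
      exact ⟨hr, by rw [show 6 * (p.2.val / 6) + 1 = p.2.val by omega]; exact hval⟩
    · have hk : p.2.val % 6 = 2 := (hmod 2 (by norm_num)).1 (by exact_mod_cast ht)
      refine ⟨p.2.val / 6, by omega, Or.inr (Or.inl ?_)⟩
      rw [Prod.ext_iff]
      exact ⟨hr, by rw [show 6 * (p.2.val / 6) + 2 = p.2.val by omega]; exact hval⟩
    · have hk : p.2.val % 6 = 4 := (hmod 4 (by norm_num)).1 (by exact_mod_cast ht)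
      refine ⟨p.2.val / 6, by omega, Or.inr (Or.inr (Or.inl ?_))⟩
      rw [Prod.ext_iff]
      exact ⟨hr, by rw [show 6 * (p.2.val / 6) + 4 = p.2.val by omega]; exact hval⟩
    · have hk : p.2.val % 6 = 5 := (hmod 5 (by norm_num)).1 (by exact_mod_cast ht)
      refine ⟨p.2.val / 6, by omega, Or.inr (Or.inr (Or.inr ?_))⟩
      rw [Prod.ext_iff]
      exact ⟨hr, by rw [show 6 * (p.2.val / 6) + 5 = p.2.val by omega]; exact hval⟩

lemma code_tpc {n : ℕ} (hn : 3 ≤ n) (h6 : 6 ∣ n) : IsParallelTPC2 (code17 n) := by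
  haveI : NeZero n := ⟨by omega⟩
  set φ := ZMod.castHom h6 (ZMod 6) with hφdef
  have hmem : ∀ p : ZMod 2 × ZMod n, p ∈ code17 n ↔ Mcode p.1 (φ p.2) :=
    fun p => mem_code17 hn h6 p
  have key : ∀ v : ZMod 2 × ZMod n, ∃! u, u ∈ code17 n ∧ adj2 u v := by
    intro v
    have hφ1 : φ (v.2 + 1) = φ v.2 + 1 := by rw [map_add, map_one]
    have hφ2 : φ (v.2 - 1) = φ v.2 - 1 := by rw [map_sub, map_one]
    have a1 : adj2 ((v.1 + 1, v.2) : ZMod 2 × ZMod n) v := Or.inl ⟨rfl, rfl⟩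
    have a2 : adj2 ((v.1, v.2 + 1) : ZMod 2 × ZMod n) v := Or.inr ⟨rfl, Or.inl rfl⟩
    have a3 : adj2 ((v.1, v.2 - 1) : ZMod 2 × ZMod n) v := Or.inr ⟨rfl, Or.inr rfl⟩
    rcases exone_M v.1 (φ v.2) with ⟨h1, h2, h3⟩ | ⟨h1, h2, h3⟩ | ⟨h1, h2, h3⟩
    · refine ⟨(v.1 + 1, v.2), ⟨(hmem _).2 h1, a1⟩, ?_⟩
      rintro u ⟨huS, hua⟩
      rcases (adj2_iff u v).1 hua with rfl | rfl | rfl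
      · rfl
      · exact absurd ((hmem _).1 huS) (by simpa [hφ1] using h2)
      · exact absurd ((hmem _).1 huS) (by simpa [hφ2] using h3)
    · refine ⟨(v.1, v.2 + 1), ⟨(hmem _).2 (by simpa [hφ1] using h2), a2⟩, ?_⟩
      rintro u ⟨huS, hua⟩
      rcases (adj2_iff u v).1 hua with rfl | rfl | rfl
      · exact absurd ((hmem _).1 huS) h1
      · rfl
      · exact absurd ((hmem _).1 huS) (by simpa [hφ2] using h3)
    · refine ⟨(v.1, v.2 - 1), ⟨(hmem _).2 (by simpa [hφ2] using h3), a3⟩, ?_⟩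
      rintro u ⟨huS, hua⟩
      rcases (adj2_iff u v).1 hua with rfl | rfl | rfl
      · exact absurd ((hmem _).1 huS) h1
      · exact absurd ((hmem _).1 huS) (by simpa [hφ1] using h2)
      · rfl
  refine ⟨fun v _ => key v, fun v _ => key v, ?_⟩
  intro u hu v hv huv
  rcases (adj2_iff u v).1 huv with rfl | rfl | rfl
  · exact absurd ⟨(hmem v).1 hv, (hmem _).1 hu⟩ (no_vert v.1 (φ v.2))
  · rfl
  · rfl

/-! ### Existence forces `6 ∣ n` -/

lemma tpc_dvd {n : ℕ} (hn : 3 ≤ n) (S : Set (ZMod 2 × ZMod n))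
    (hS : IsParallelTPC2 S) : 6 ∣ n := by
  classical
  haveI : NeZero n := ⟨by omega⟩
  obtain ⟨hout, hin, hpar⟩ := hS
  have hrow : ∀ r : ZMod 2, r + 1 ≠ r := by decide
  have hbb : ∀ b : ZMod n, b + 1 ≠ b - 1 := by
    intro b he
    have h2 : ((2 : ℕ) : ZMod n) = 0 := by push_cast; linear_combination he
    have := (ZMod.natCast_eq_zero_iff 2 n).1 h2
    have := Nat.le_of_dvd (by norm_num) this
    omega
  have keyuniq : ∀ v : ZMod 2 × ZMod n, (∃! u, u ∈ S ∧ adj2 u v) →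
      ∀ w1 ∈ S, ∀ w2 ∈ S, adj2 w1 v → adj2 w2 v → w1 = w2 := by
    rintro v ⟨u, _, hu⟩ w1 h1 w2 h2 ha1 ha2
    rw [hu w1 ⟨h1, ha1⟩, hu w2 ⟨h2, ha2⟩]
  have hnotS : ∀ v ∉ S, ExOne ((v.1 + 1, v.2) ∈ S) ((v.1, v.2 + 1) ∈ S) ((v.1, v.2 - 1) ∈ S) := by
    intro v hv
    have hu := hout v hv
    have uq := keyuniq v hu
    obtain ⟨u, ⟨huS, hua⟩, _⟩ := hu
    have a1 : adj2 ((v.1 + 1, v.2) : ZMod 2 × ZMod n) v := Or.inl ⟨rfl, rfl⟩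
    have a2 : adj2 ((v.1, v.2 + 1) : ZMod 2 × ZMod n) v := Or.inr ⟨rfl, Or.inl rfl⟩
    have a3 : adj2 ((v.1, v.2 - 1) : ZMod 2 × ZMod n) v := Or.inr ⟨rfl, Or.inr rfl⟩
    have ne12 : ((v.1 + 1, v.2) : ZMod 2 × ZMod n) ≠ (v.1, v.2 + 1) :=
      fun he => hrow v.1 (congrArg Prod.fst he)
    have ne13 : ((v.1 + 1, v.2) : ZMod 2 × ZMod n) ≠ (v.1, v.2 - 1) :=
      fun he => hrow v.1 (congrArg Prod.fst he)
    have ne23 : ((v.1, v.2 + 1) : ZMod 2 × ZMod n) ≠ (v.1, v.2 - 1) :=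
      fun he => hbb v.2 (congrArg Prod.snd he)
    rcases (adj2_iff u v).1 hua with rfl | rfl | rfl
    · exact Or.inl ⟨huS, fun hc => ne12 (uq _ huS _ hc a1 a2),
        fun hc => ne13 (uq _ huS _ hc a1 a3)⟩
    · exact Or.inr (Or.inl ⟨fun hc => ne12 (uq _ hc _ huS a1 a2), huS,
        fun hc => ne23 (uq _ huS _ hc a2 a3)⟩)
    · exact Or.inr (Or.inr ⟨fun hc => ne13 (uq _ hc _ huS a1 a3),
        fun hc => ne23 (uq _ hc _ huS a2 a3), huS⟩)
  have hmemS : ∀ v ∈ S, (v.1 + 1, v.2) ∉ S ∧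
      ¬(((v.1, v.2 + 1) ∈ S) ↔ ((v.1, v.2 - 1) ∈ S)) := by
    intro v hv
    have a1 : adj2 ((v.1 + 1, v.2) : ZMod 2 × ZMod n) v := Or.inl ⟨rfl, rfl⟩
    have a2 : adj2 ((v.1, v.2 + 1) : ZMod 2 × ZMod n) v := Or.inr ⟨rfl, Or.inl rfl⟩
    have a3 : adj2 ((v.1, v.2 - 1) : ZMod 2 × ZMod n) v := Or.inr ⟨rfl, Or.inr rfl⟩
    have hvert : (v.1 + 1, v.2) ∉ S := fun hc => hrow v.1 (hpar _ hc _ hv a1)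
    refine ⟨hvert, ?_⟩
    have hu := hin v hv
    have uq := keyuniq v hu
    obtain ⟨u, ⟨huS, hua⟩, _⟩ := hu
    have ne23 : ((v.1, v.2 + 1) : ZMod 2 × ZMod n) ≠ (v.1, v.2 - 1) :=
      fun he => hbb v.2 (congrArg Prod.snd he)
    rcases (adj2_iff u v).1 hua with rfl | rfl | rfl
    · exact absurd huS hvert
    · exact fun hiff => ne23 (uq _ huS _ (hiff.1 huS) a2 a3)
    · exact fun hiff => ne23 (uq _ (hiff.2 huS) _ huS a2 a3)
  -- the column sequence
  have hval : ∀ b : ZMod n,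
      validB (decide ((0, b - 1) ∈ S), decide ((1, b - 1) ∈ S))
             (decide ((0, b) ∈ S), decide ((1, b) ∈ S))
             (decide ((0, b + 1) ∈ S), decide ((1, b + 1) ∈ S)) = true := by
    intro b
    apply bridgeB
    · intro hy
      rw [decide_eq_true_iff] at hy
      obtain ⟨h1, h2⟩ := hmemS (0, b) hy
      have h1' : ((1 : ZMod 2), b) ∉ S := by simpa using h1
      refine ⟨decide_eq_false h1', fun he => h2 ?_⟩
      rw [decide_eq_decide] at he
      exact he.symm
    · intro hy
      rw [decide_eq_false_iff_not] at hy
      have h := hnotS (0, b) hy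
      have e1 : (((0 : ZMod 2), b).1 + 1, ((0 : ZMod 2), b).2) = ((1 : ZMod 2), b) := by simp
      rw [e1] at h
      simp only [decide_eq_true_eq]
      unfold ExOne at h ⊢
      tauto
    · intro hy
      rw [decide_eq_true_iff] at hy
      obtain ⟨h1, h2⟩ := hmemS (1, b) hy
      have h1' : ((0 : ZMod 2), b) ∉ S := by
        have : ((1 : ZMod 2) + 1, b) = ((0 : ZMod 2), b) := by
          rw [show (1 : ZMod 2) + 1 = 0 from by decide]
        rwa [this] at h1
      refine ⟨decide_eq_false h1', fun he => h2 ?_⟩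
      rw [decide_eq_decide] at he
      exact he.symm
    · intro hy
      rw [decide_eq_false_iff_not] at hy
      have h := hnotS (1, b) hy
      have e1 : (((1 : ZMod 2), b).1 + 1, ((1 : ZMod 2), b).2) = ((0 : ZMod 2), b) := by
        simp [Prod.ext_iff, show (1 : ZMod 2) + 1 = 0 from by decide]
      rw [e1] at h
      simp only [decide_eq_true_eq]
      unfold ExOne at h ⊢
      tauto
  set f : ℕ → Bool × Bool :=
    fun k => (decide ((0, (k : ZMod n)) ∈ S), decide ((1, (k : ZMod n)) ∈ S)) with hf
  have hchain : ∀ k : ℕ, validB (f k) (f (k + 1)) (f (k + 2)) = true := by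
    intro k
    have e1 : ((k + 1 : ℕ) : ZMod n) - 1 = ((k : ℕ) : ZMod n) := by push_cast; ring
    have e2 : ((k + 1 : ℕ) : ZMod n) + 1 = ((k + 2 : ℕ) : ZMod n) := by push_cast; ring
    have h := hval ((k + 1 : ℕ) : ZMod n)
    rw [e1, e2] at h
    exact h
  have hper : ∀ k : ℕ, f (k + 6) = f k := by
    intro k
    exact (L6 (f k) (f (k + 1)) (f (k + 2)) (f (k + 3)) (f (k + 4)) (f (k + 5)) (f (k + 6))
      (hchain k) (hchain (k + 1)) (hchain (k + 2)) (hchain (k + 3)) (hchain (k + 4))).1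
  have hmod : ∀ m : ℕ, f m = f (m % 6) := by
    intro m
    induction m using Nat.strong_induction_on with
    | _ m ih =>
      rcases lt_or_ge m 6 with hm | hm
      · rw [Nat.mod_eq_of_lt hm]
      · have e : m - 6 + 6 = m := by omega
        calc f m = f (m - 6 + 6) := by rw [e]
          _ = f (m - 6) := hper _
          _ = f ((m - 6) % 6) := ih _ (by omega)
          _ = f (m % 6) := by rw [show (m - 6) % 6 = m % 6 by omega]
  have hfn : f n = f 0 := by
    have : ((n : ℕ) : ZMod n) = ((0 : ℕ) : ZMod n) := by simp [ZMod.natCast_self]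
    simp only [hf, this]
  have hfn1 : f (n + 1) = f 1 := by
    have : ((n + 1 : ℕ) : ZMod n) = ((1 : ℕ) : ZMod n) := by
      push_cast
      simp [ZMod.natCast_self]
    simp only [hf, this]
  have h0 : f (n % 6) = f 0 := by rw [← hmod n, hfn]
  have h1 : f (n % 6 + 1) = f 1 := by
    calc f (n % 6 + 1) = f ((n % 6 + 1) % 6) := hmod _
      _ = f ((n + 1) % 6) := by rw [show (n + 1) % 6 = (n % 6 + 1) % 6 by omega]
      _ = f (n + 1) := (hmod _).symm
      _ = f 1 := hfn1
  obtain ⟨-, d1, d2, d3, d4, d5⟩ :=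
    L6 (f 0) (f 1) (f 2) (f 3) (f 4) (f 5) (f 6)
      (hchain 0) (hchain 1) (hchain 2) (hchain 3) (hchain 4)
  rcases (show n % 6 = 0 ∨ n % 6 = 1 ∨ n % 6 = 2 ∨ n % 6 = 3 ∨ n % 6 = 4 ∨ n % 6 = 5 by omega)
      with h | h | h | h | h | h
  · exact Nat.dvd_of_mod_eq_zero h
  · rw [h] at h0 h1; exact absurd (Prod.ext_iff.2 ⟨h0, h1⟩) d1
  · rw [h] at h0 h1; exact absurd (Prod.ext_iff.2 ⟨h0, h1⟩) d2
  · rw [h] at h0 h1; exact absurd (Prod.ext_iff.2 ⟨h0, h1⟩) d3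
  · rw [h] at h0 h1; exact absurd (Prod.ext_iff.2 ⟨h0, h1⟩) d4
  · rw [h] at h0 h1; exact absurd (Prod.ext_iff.2 ⟨h0, h1⟩) d5

/-- C_2 × C_n admits a parallel total perfect code iff 6 ∣ n; when 6 ∣ n the explicit
set `code17 n` is such a code. -/
theorem parallelTPC_C2Cn (n : ℕ) (hn : 3 ≤ n) :
    ((∃ S : Set (ZMod 2 × ZMod n), IsParallelTPC2 S) ↔ 6 ∣ n) ∧
    (6 ∣ n → IsParallelTPC2 (code17 n)) := by
  refine ⟨⟨?_, fun h6 => ⟨code17 n, code_tpc hn h6⟩⟩, fun h6 => code_tpc hn h6⟩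
  rintro ⟨S, hS⟩
  exact tpc_dvd hn S hS
end

section
/- For every integer r ≥ 2, the sublattice S_0 of Z^r generated by (1,r,0,…,0), (2,−1,0,…,0), (3,0,−1,0,…,0), …, (r,0,…,0,−1) is a 1-perfect code in the integer lattice graph of Z^r: the closed L^1 balls of radius 1 (each containing 2r+1 points) centered at the points of S_0 partition Z^r. -/
/-- The generating vectors of the sublattice of ℤ^r: `v 0 = (1, r, 0, …, 0)` and, for
`1 ≤ i ≤ r-1`, `v i = (i+1, 0, …, 0, -1, 0, …, 0)` with the `-1` in coordinate `i`. -/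
def genVec (r : ℕ) (i : Fin r) : Fin r → ℤ :=
  fun j =>
    if (i : ℕ) = 0 then
      (if (j : ℕ) = 0 then 1 else if (j : ℕ) = 1 then (r : ℤ) else 0)
    else
      (if (j : ℕ) = 0 then ((i : ℕ) : ℤ) + 1
       else if (j : ℕ) = (i : ℕ) then -1 else 0)

/-- The sublattice of ℤ^r generated by the vectors `genVec r i`. -/
def latticeS (r : ℕ) : Set (Fin r → ℤ) :=
  {p | ∃ c : Fin r → ℤ, p = ∑ i : Fin r, c i • genVec r i}

open Finset

/-- The weight of a vector: `∑ (j+1) * p j`. -/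
def lwt (r : ℕ) (p : Fin r → ℤ) : ℤ := ∑ j : Fin r, (((j : ℕ) : ℤ) + 1) * p j

lemma sum_two_ite {r : ℕ} (a b : Fin r) (x y : ℤ) :
    (∑ j : Fin r, ((if j = a then x else 0) + (if j = b then y else 0))) = x + y := by
  rw [Finset.sum_add_distrib]
  simp [Finset.sum_ite_eq']

lemma lwt_genVec {r : ℕ} (hr : 2 ≤ r) (i : Fin r) :
    lwt r (genVec r i) = if (i : ℕ) = 0 then 2 * (r : ℤ) + 1 else 0 := by
  have hz : (0 : ℕ) < r := by omega
  have ho : (1 : ℕ) < r := by omega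
  by_cases h : (i : ℕ) = 0
  · have key : ∀ j : Fin r, (((j : ℕ) : ℤ) + 1) * genVec r i j
        = (if j = (⟨0, hz⟩ : Fin r) then 1 else 0)
          + (if j = (⟨1, ho⟩ : Fin r) then 2 * (r : ℤ) else 0) := by
      intro j
      have e0 : (j = (⟨0, hz⟩ : Fin r)) ↔ (j : ℕ) = 0 := by simp [Fin.ext_iff]
      have e1 : (j = (⟨1, ho⟩ : Fin r)) ↔ (j : ℕ) = 1 := by simp [Fin.ext_iff]
      by_cases hj0 : (j : ℕ) = 0
      · simp [genVec, h, hj0, e0, e1]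
      · by_cases hj1 : (j : ℕ) = 1
        · simp [genVec, h, hj0, hj1, e0, e1]
        · simp [genVec, h, hj0, hj1, e0, e1]
    rw [lwt, Finset.sum_congr rfl fun j _ => key j, sum_two_ite]
    simp [h]; ring
  · have hi1 : 1 ≤ (i : ℕ) := by omega
    have key : ∀ j : Fin r, (((j : ℕ) : ℤ) + 1) * genVec r i j
        = (if j = (⟨0, hz⟩ : Fin r) then ((i : ℕ) : ℤ) + 1 else 0)
          + (if j = i then -(((i : ℕ) : ℤ) + 1) else 0) := by
      intro j
      have e0 : (j = (⟨0, hz⟩ : Fin r)) ↔ (j : ℕ) = 0 := by simp [Fin.ext_iff]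
      have e1 : (j = i) ↔ (j : ℕ) = (i : ℕ) := by simp [Fin.ext_iff]
      by_cases hj0 : (j : ℕ) = 0
      · have : ¬ (j = i) := by simp [e1]; omega
        simp [genVec, h, hj0, e0, this]
      · by_cases hji : (j : ℕ) = (i : ℕ)
        · simp [genVec, h, hj0, hji, e0, e1]
        · simp [genVec, h, hj0, hji, e0, e1]
    rw [lwt, Finset.sum_congr rfl fun j _ => key j, sum_two_ite]
    simp [h]

lemma sum_apply_coord {r : ℕ} (hr : 2 ≤ r) (c : Fin r → ℤ) (j : Fin r) :
    (∑ i : Fin r, c i • genVec r i) j =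
      if (j : ℕ) = 0 then ∑ i : Fin r, c i * (if (i : ℕ) = 0 then 1 else ((i : ℕ) : ℤ) + 1)
      else (if (j : ℕ) = 1 then (r : ℤ) else 0) * c ⟨0, by omega⟩ - c j := by
  have hz : (0 : ℕ) < r := by omega
  rw [Finset.sum_apply]
  simp only [Pi.smul_apply, smul_eq_mul]
  by_cases hj : (j : ℕ) = 0
  · rw [if_pos hj]
    refine Finset.sum_congr rfl fun i _ => ?_
    by_cases hi : (i : ℕ) = 0 <;> simp [genVec, hi, hj]
  · rw [if_neg hj]
    have key : ∀ i : Fin r, c i * genVec r i j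
        = (if i = (⟨0, hz⟩ : Fin r) then (if (j : ℕ) = 1 then (r : ℤ) else 0) * c ⟨0, hz⟩ else 0)
          + (if i = j then -(c j) else 0) := by
      intro i
      have e0 : (i = (⟨0, hz⟩ : Fin r)) ↔ (i : ℕ) = 0 := by simp [Fin.ext_iff]
      have e1 : (i = j) ↔ (j : ℕ) = (i : ℕ) := by simp [Fin.ext_iff]; omega
      by_cases hi : (i : ℕ) = 0
      · have hij : ¬ (i = j) := by simp [e1]; omega
        have : i = (⟨0, hz⟩ : Fin r) := e0.mpr hi
        subst this
        simp [genVec, hi, hj, hij]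
        by_cases hj1 : (j : ℕ) = 1 <;> simp [hj1] <;> ring
      · by_cases hij : (j : ℕ) = (i : ℕ)
        · have : i = j := e1.mpr hij
          subst this
          simp [genVec, hi, hj, hij, e0]
        · simp [genVec, hi, hj, hij, e0, e1]
    rw [Finset.sum_congr rfl fun i _ => key i, sum_two_ite]
    ring

lemma mem_latticeS_iff {r : ℕ} (hr : 2 ≤ r) (p : Fin r → ℤ) :
    p ∈ latticeS r ↔ (2 * (r : ℤ) + 1) ∣ lwt r p := by
  have hz : (0 : ℕ) < r := by omega
  have ho : (1 : ℕ) < r := by omega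
  constructor
  · rintro ⟨c, rfl⟩
    have swap : lwt r (∑ i : Fin r, c i • genVec r i)
        = ∑ i : Fin r, c i * lwt r (genVec r i) := by
      simp only [lwt, Finset.sum_apply, Pi.smul_apply, smul_eq_mul, Finset.mul_sum]
      rw [Finset.sum_comm]
      exact Finset.sum_congr rfl fun i _ =>
        Finset.sum_congr rfl fun j _ => by ring
    rw [swap]
    have : ∀ i : Fin r, c i * lwt r (genVec r i)
        = if i = (⟨0, hz⟩ : Fin r) then c ⟨0, hz⟩ * (2 * (r : ℤ) + 1) else 0 := by
      intro i
      rw [lwt_genVec hr]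
      have e0 : (i = (⟨0, hz⟩ : Fin r)) ↔ (i : ℕ) = 0 := by simp [Fin.ext_iff]
      by_cases hi : (i : ℕ) = 0
      · have : i = (⟨0, hz⟩ : Fin r) := e0.mpr hi
        subst this; simp [hi]
      · simp [hi, e0]
    rw [Finset.sum_congr rfl fun i _ => this i]
    simp [Finset.sum_ite_eq']
  · rintro ⟨k, hk⟩
    set z : Fin r := ⟨0, hz⟩ with hzdef
    set o : Fin r := ⟨1, ho⟩ with hodef
    refine ⟨fun i => if (i : ℕ) = 0 then k else if (i : ℕ) = 1 then (r : ℤ) * k - p i else -p i, ?_⟩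
    funext j
    rw [sum_apply_coord hr]
    by_cases hj : (j : ℕ) = 0
    · rw [if_pos hj]
      have hjz : j = z := by simp [Fin.ext_iff, hj, hzdef]
      set c : Fin r → ℤ :=
        fun i => if (i : ℕ) = 0 then k else if (i : ℕ) = 1 then (r : ℤ) * k - p i else -p i with hc
      have key : ∀ i : Fin r,
          c i * (if (i : ℕ) = 0 then 1 else ((i : ℕ) : ℤ) + 1) + (((i : ℕ) : ℤ) + 1) * p i
            = (if i = z then k + p z else 0) + (if i = o then 2 * (r : ℤ) * k else 0) := by
        intro i
        have e0 : (i = z) ↔ (i : ℕ) = 0 := by simp [Fin.ext_iff, hzdef]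
        have e1 : (i = o) ↔ (i : ℕ) = 1 := by simp [Fin.ext_iff, hodef]
        have hzo : ¬ (z = o) := by simp [Fin.ext_iff, hzdef, hodef]
        have hoz : ¬ (o = z) := by simp [Fin.ext_iff, hzdef, hodef]
        by_cases hi0 : (i : ℕ) = 0
        · have : i = z := e0.mpr hi0
          subst this; simp [hc, hi0, hzdef, hodef, hzo]
        · by_cases hi1 : (i : ℕ) = 1
          · have : i = o := e1.mpr hi1
            subst this; simp [hc, hi0, hi1, hodef, hzdef, hoz]; ring
          · simp [hc, hi0, hi1, e0, e1]; ring
      have hsum := Finset.sum_add_distrib.symm.trans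
        ((Finset.sum_congr rfl fun i (_ : i ∈ univ) => key i).trans (sum_two_ite z o _ _))
      have hlwt : (∑ i : Fin r, (((i : ℕ) : ℤ) + 1) * p i) = lwt r p := rfl
      rw [hlwt, hk] at hsum
      have : (∑ i : Fin r, c i * (if (i : ℕ) = 0 then 1 else ((i : ℕ) : ℤ) + 1)) = p z := by
        linarith [hsum]
      rw [this, hjz]
    · rw [if_neg hj]
      by_cases hj1 : (j : ℕ) = 1
      · simp [hj1, hj]
      · simp [hj1, hj]

lemma lwt_update {r : ℕ} (w : Fin r → ℤ) (a : Fin r) (ε : ℤ) :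
    lwt r (Function.update w a (w a + ε)) = lwt r w + (((a : ℕ) : ℤ) + 1) * ε := by
  simp only [lwt]
  have key : ∀ j : Fin r, (((j : ℕ) : ℤ) + 1) * (Function.update w a (w a + ε) j)
      = (((j : ℕ) : ℤ) + 1) * w j + (if j = a then (((a : ℕ) : ℤ) + 1) * ε else 0) := by
    intro j
    rcases eq_or_ne j a with h | h
    · subst h; simp [Function.update_self]; ring
    · simp [Function.update_of_ne h, h]
  rw [Finset.sum_congr rfl fun j _ => key j, Finset.sum_add_distrib]
  simp [Finset.sum_ite_eq']

lemma dist_update {r : ℕ} (w : Fin r → ℤ) (a : Fin r) (ε : ℤ) :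
    (∑ j : Fin r, (w j - Function.update w a (w a + ε) j).natAbs) = ε.natAbs := by
  have key : ∀ j : Fin r, (w j - Function.update w a (w a + ε) j).natAbs
      = if j = a then ε.natAbs else 0 := by
    intro j
    rcases eq_or_ne j a with h | h
    · subst h; simp [Function.update_self]
    · simp [Function.update_of_ne h, h]
  rw [Finset.sum_congr rfl fun j _ => key j]
  simp [Finset.sum_ite_eq']

lemma single_support {r : ℕ} (hr : 2 ≤ r) (w u : Fin r → ℤ)
    (h : (∑ j : Fin r, (w j - u j).natAbs) ≤ 1) :
    ∃ a : Fin r, (∀ j, j ≠ a → u j = w j) ∧ (u a - w a).natAbs ≤ 1 := by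
  by_cases he : u = w
  · exact ⟨⟨0, by omega⟩, fun j _ => by rw [he], by simp [he]⟩
  · obtain ⟨a, ha⟩ : ∃ a, u a ≠ w a := by
      by_contra hc; push_neg at hc; exact he (funext hc)
    refine ⟨a, fun j hj => ?_, ?_⟩
    · have hsub : (w j - u j).natAbs + (w a - u a).natAbs
          ≤ ∑ j : Fin r, (w j - u j).natAbs := by
        calc (w j - u j).natAbs + (w a - u a).natAbs
            = ∑ x ∈ ({j, a} : Finset (Fin r)), (w x - u x).natAbs :=
              (Finset.sum_pair (f := fun x => (w x - u x).natAbs) hj).symm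
          _ ≤ ∑ x : Fin r, (w x - u x).natAbs :=
              Finset.sum_le_sum_of_subset (Finset.subset_univ _)
      have h1 : (w a - u a).natAbs ≠ 0 := by
        intro h0
        exact ha (by omega)
      omega
    · have hsingle : (w a - u a).natAbs ≤ ∑ j : Fin r, (w j - u j).natAbs :=
        Finset.single_le_sum (f := fun x => (w x - u x).natAbs)
          (fun i _ => Nat.zero_le _) (Finset.mem_univ a)
      omega

lemma code_unique_s19 {r : ℕ} (hr : 2 ≤ r) (w u₁ u₂ : Fin r → ℤ)
    (h₁ : u₁ ∈ latticeS r) (d₁ : (∑ j : Fin r, (w j - u₁ j).natAbs) ≤ 1)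
    (h₂ : u₂ ∈ latticeS r) (d₂ : (∑ j : Fin r, (w j - u₂ j).natAbs) ≤ 1) :
    u₁ = u₂ := by
  obtain ⟨a₁, ha₁, hb₁⟩ := single_support hr w u₁ d₁
  obtain ⟨a₂, ha₂, hb₂⟩ := single_support hr w u₂ d₂
  set e₁ : ℤ := u₁ a₁ - w a₁ with he₁
  set e₂ : ℤ := u₂ a₂ - w a₂ with he₂
  have hu₁ : u₁ = Function.update w a₁ (w a₁ + e₁) := by
    funext j
    rcases eq_or_ne j a₁ with h | h
    · subst h; simp [Function.update_self, he₁]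
    · simp [Function.update_of_ne h, ha₁ j h]
  have hu₂ : u₂ = Function.update w a₂ (w a₂ + e₂) := by
    funext j
    rcases eq_or_ne j a₂ with h | h
    · subst h; simp [Function.update_self, he₂]
    · simp [Function.update_of_ne h, ha₂ j h]
  have hl₁ : lwt r u₁ = lwt r w + (((a₁ : ℕ) : ℤ) + 1) * e₁ := by
    rw [hu₁]; exact lwt_update w a₁ e₁
  have hl₂ : lwt r u₂ = lwt r w + (((a₂ : ℕ) : ℤ) + 1) * e₂ := by
    rw [hu₂]; exact lwt_update w a₂ e₂
  have hdvd₁ := (mem_latticeS_iff hr u₁).mp h₁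
  have hdvd₂ := (mem_latticeS_iff hr u₂).mp h₂
  have hdvd : (2 * (r : ℤ) + 1) ∣ ((((a₁ : ℕ) : ℤ) + 1) * e₁ - (((a₂ : ℕ) : ℤ) + 1) * e₂) := by
    have := dvd_sub hdvd₁ hdvd₂
    rw [hl₁, hl₂] at this
    simpa using this
  have hbe₁ : -1 ≤ e₁ ∧ e₁ ≤ 1 := by omega
  have hbe₂ : -1 ≤ e₂ ∧ e₂ ≤ 1 := by omega
  have hA₁ : 1 ≤ ((a₁ : ℕ) : ℤ) + 1 ∧ ((a₁ : ℕ) : ℤ) + 1 ≤ (r : ℤ) := by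
    have := a₁.isLt; constructor <;> [omega; exact_mod_cast by omega]
  have hA₂ : 1 ≤ ((a₂ : ℕ) : ℤ) + 1 ∧ ((a₂ : ℕ) : ℤ) + 1 ≤ (r : ℤ) := by
    have := a₂.isLt; constructor <;> [omega; exact_mod_cast by omega]
  have habs : |(((a₁ : ℕ) : ℤ) + 1) * e₁ - (((a₂ : ℕ) : ℤ) + 1) * e₂| < 2 * (r : ℤ) + 1 := by
    have b1 : |(((a₁ : ℕ) : ℤ) + 1) * e₁| ≤ (r : ℤ) := by
      rw [abs_mul, abs_of_nonneg (by omega : (0:ℤ) ≤ ((a₁ : ℕ) : ℤ) + 1)]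
      calc (((a₁ : ℕ) : ℤ) + 1) * |e₁| ≤ (r : ℤ) * 1 :=
          mul_le_mul hA₁.2 (abs_le.mpr ⟨hbe₁.1, hbe₁.2⟩) (abs_nonneg _) (by positivity)
        _ = (r : ℤ) := by ring
    have b2 : |(((a₂ : ℕ) : ℤ) + 1) * e₂| ≤ (r : ℤ) := by
      rw [abs_mul, abs_of_nonneg (by omega : (0:ℤ) ≤ ((a₂ : ℕ) : ℤ) + 1)]
      calc (((a₂ : ℕ) : ℤ) + 1) * |e₂| ≤ (r : ℤ) * 1 :=
          mul_le_mul hA₂.2 (abs_le.mpr ⟨hbe₂.1, hbe₂.2⟩) (abs_nonneg _) (by positivity)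
        _ = (r : ℤ) := by ring
    calc |(((a₁ : ℕ) : ℤ) + 1) * e₁ - (((a₂ : ℕ) : ℤ) + 1) * e₂|
        ≤ |(((a₁ : ℕ) : ℤ) + 1) * e₁| + |(((a₂ : ℕ) : ℤ) + 1) * e₂| := abs_sub _ _
      _ < 2 * (r : ℤ) + 1 := by omega
  have hzero := Int.eq_zero_of_abs_lt_dvd hdvd habs
  have hkey : (((a₁ : ℕ) : ℤ) + 1) * e₁ = (((a₂ : ℕ) : ℤ) + 1) * e₂ := by omega
  -- now case on e₁, e₂
  rcases eq_or_ne e₁ 0 with h0 | h0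
  · have : e₂ = 0 := by
      rcases mul_eq_zero.mp (by rw [← hkey, h0, mul_zero] : (((a₂ : ℕ) : ℤ) + 1) * e₂ = 0) with h | h
      · omega
      · exact h
    rw [hu₁, hu₂, h0, this]
    simp
  · have h0' : e₂ ≠ 0 := by
      intro h; rw [h, mul_zero] at hkey
      rcases mul_eq_zero.mp hkey with h | h
      · omega
      · exact h0 h
    have he₁' : e₁ = 1 ∨ e₁ = -1 := by omega
    have he₂' : e₂ = 1 ∨ e₂ = -1 := by omega
    have hsame : e₁ = e₂ ∧ ((a₁ : ℕ) : ℤ) = ((a₂ : ℕ) : ℤ) := by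
      rcases he₁' with h1 | h1 <;> rcases he₂' with h2 | h2 <;>
        rw [h1, h2] at hkey <;> constructor <;> omega
    have haa : a₁ = a₂ := by
      apply Fin.ext; exact_mod_cast hsame.2
    rw [hu₁, hu₂, hsame.1, haa]

/-- For every r ≥ 2, the sublattice generated by (1,r,0,…,0), (2,−1,0,…,0), …,
(r,0,…,0,−1) is a 1-perfect code in the integer lattice graph of ℤ^r: every vertex is
within L¹ distance 1 of exactly one point of the sublattice. -/
theorem latticeS_onePerfectCode (r : ℕ) (hr : 2 ≤ r) :
    ∀ w : Fin r → ℤ, ∃! u : Fin r → ℤ,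
      u ∈ latticeS r ∧ (∑ j : Fin r, (w j - u j).natAbs) ≤ 1 := by
  intro w
  set N : ℤ := 2 * (r : ℤ) + 1 with hN
  have hrz : (2 : ℤ) ≤ (r : ℤ) := by exact_mod_cast hr
  have hNpos : 0 < N := by omega
  set s : ℤ := lwt r w with hs
  set m : ℤ := (s + r) % N - r with hm
  have hmod : N ∣ s - m := by
    have : s - m = (s + r) - (s + r) % N := by omega
    rw [this, Int.emod_def]
    exact ⟨(s + r) / N, by ring⟩
  have hm1 : -(r : ℤ) ≤ m ∧ m ≤ (r : ℤ) := by
    have h1 : 0 ≤ (s + r) % N := Int.emod_nonneg _ (by omega)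
    have h2 : (s + r) % N < N := Int.emod_lt_of_pos _ hNpos
    omega
  have hexist : ∃ u : Fin r → ℤ, u ∈ latticeS r ∧ (∑ j : Fin r, (w j - u j).natAbs) ≤ 1 := by
    rcases lt_trichotomy m 0 with hlt | heq | hgt
    · have hlt' : 1 ≤ (-m).toNat ∧ (-m).toNat ≤ r := by omega
      refine ⟨Function.update w ⟨(-m).toNat - 1, by omega⟩ (w ⟨(-m).toNat - 1, by omega⟩ + 1),
        ?_, ?_⟩
      · rw [mem_latticeS_iff hr, lwt_update]
        have hcast : ((((-m).toNat - 1 : ℕ)) : ℤ) + 1 = -m := by omega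
        rw [hcast]
        have : lwt r w + -m * 1 = s - m := by rw [← hs]; ring
        rw [this]
        exact hmod
      · rw [dist_update]; simp
    · refine ⟨w, ?_, ?_⟩
      · rw [mem_latticeS_iff hr]
        have : lwt r w = s - m := by omega
        rw [this]; exact hmod
      · simp
    · have hgt' : 1 ≤ m.toNat ∧ m.toNat ≤ r := by omega
      refine ⟨Function.update w ⟨m.toNat - 1, by omega⟩ (w ⟨m.toNat - 1, by omega⟩ + (-1)),
        ?_, ?_⟩
      · rw [mem_latticeS_iff hr, lwt_update]
        have hcast : (((m.toNat - 1 : ℕ)) : ℤ) + 1 = m := by omega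
        rw [hcast]
        have : lwt r w + m * (-1) = s - m := by rw [← hs]; ring
        rw [this]
        exact hmod
      · rw [dist_update]; simp
  obtain ⟨u, hu1, hu2⟩ := hexist
  exact ⟨u, ⟨hu1, hu2⟩, fun y hy => code_unique_s19 hr w y u hy.1 hy.2 hu1 hu2⟩
end
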